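/- arXiv:2408.08256 — 4 statements merged into one kernel-verified Lean document; each statement's English description precedes it below -/
import Mathlib

section
/- Under the assumptions (A1)–(A8) of the iteration lemma (with parameters γ ∈ (0,1), d sufficiently large, 1 ≤ k ≤ d^{2γ}, 4ηd < ℓ < 100d, 1/log⁵(d) < η < 1/log(d/√k), d^{−γ(1−√γ)/200} ≤ β ≤ 1/10, H k-locally-sparse, Δ(H) ≤ 2d, (1−β)ℓ/2 ≤ |L(v)| ≤ (1+β)ℓ, avg-deg_ℋ(v) ≤ (2 − (1−β)ℓ/|L(v)|)d), run the Wasteful Coloring Procedure randomness and let k(v) := |K(v)| and ℓ(v) := |L(v)|, with keep := (1 − η/ℓ)^{2d}. Then for each vertex v ∈ V(G), Pr[|k(v) − keep·ℓ(v)| ≥ ηβ·keep·ℓ(v)] ≤ exp(−d^{1/10}). -/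
open Finset

attribute [local instance] Classical.propDecidable

noncomputable section
set_option maxHeartbeats 1000000

/-- The number of ordered pairs of adjacent vertices inside `S`; this is exactly twice the
number of edges of the subgraph induced on `S`. -/
def pairsWithin {C : Type} [Fintype C] (H : SimpleGraph C) (S : Finset C) : ℕ :=
  ((S ×ˢ S).filter fun p => H.Adj p.1 p.2).card

/-- `H` is `k`-locally-sparse: each neighborhood induces at most `k` edges. -/
def LocallySparse {C : Type} [Fintype C] (H : SimpleGraph C) (k : ℝ) : Prop :=
  ∀ c : C, (pairsWithin H (H.neighborFinset c) : ℝ) ≤ 2 * k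

/-- `(L, H)` is a correspondence cover of `G`. -/
structure IsCorrespondenceCover {V C : Type} (G : SimpleGraph V) (H : SimpleGraph C)
    (L : V → Finset C) : Prop where
  partition : ∀ c : C, ∃! v : V, c ∈ L v
  indep : ∀ v : V, ∀ c ∈ L v, ∀ c' ∈ L v, ¬H.Adj c c'
  matching : ∀ u v : V, ∀ c ∈ L u, ∀ c₁ ∈ L v, ∀ c₂ ∈ L v,
    H.Adj c c₁ → H.Adj c c₂ → c₁ = c₂
  not_adj : ∀ u v : V, ¬G.Adj u v → ∀ c ∈ L u, ∀ c' ∈ L v, ¬H.Adj c c'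

/-! ### The Wasteful Coloring Procedure randomness

An outcome of the randomness is a function `ω : C → Bool × Bool`, where `(ω c).1` records
whether the color `c` is activated and `(ω c).2` records its equalizing coin flip `eq(c)`.
The colors are activated independently with probability `η/ℓ`, and
`eq(c) ~ Bernoulli(keep/(1-η/ℓ)^{deg_H(c)})` with `keep = (1-η/ℓ)^{2d}`, all mutually
independent; accordingly each outcome `ω` carries the product Bernoulli weight below, and
probabilities (resp. expectations) are weighted sums over outcomes. -/

/-- The weight `p` or `1 - p` of a single Bernoulli(`p`) outcome. -/
def bern (p : ℝ) (b : Bool) : ℝ := if b then p else 1 - p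

/-- The probability of the outcome `ω` of the Wasteful Coloring Procedure randomness. -/
def wcpWeight {C : Type} [Fintype C] (H : SimpleGraph C) (η ℓ d : ℝ)
    (ω : C → Bool × Bool) : ℝ :=
  ∏ c : C, bern (η / ℓ) (ω c).1 *
    bern ((1 - η / ℓ) ^ (2 * d) / (1 - η / ℓ) ^ ((H.degree c : ℝ))) (ω c).2

/-- The set `A` of activated colors. -/
def Aset {C : Type} [Fintype C] (ω : C → Bool × Bool) : Finset C :=
  univ.filter fun c => (ω c).1 = true

/-- The set `K` of kept colors: `eq(c) = 1` and no neighbor of `c` is activated. -/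
def Kset {C : Type} [Fintype C] (H : SimpleGraph C) (ω : C → Bool × Bool) : Finset C :=
  univ.filter fun c => (ω c).2 = true ∧ ∀ c' ∈ H.neighborFinset c, (ω c').1 = false

/-- The set `U` of colors whose underlying vertex is uncolored, i.e. `A(v) ∩ K(v) = ∅`. -/
def Uset {V C : Type} [Fintype V] [Fintype C] (H : SimpleGraph C) (L : V → Finset C)
    (ω : C → Bool × Bool) : Finset C :=
  univ.filter fun c => ∀ v : V, c ∈ L v → L v ∩ Aset ω ∩ Kset H ω = ∅

/-- The probability of an event under the Wasteful Coloring Procedure randomness. -/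
def wcpPr {C : Type} [Fintype C] (H : SimpleGraph C) (η ℓ d : ℝ)
    (E : (C → Bool × Bool) → Prop) : ℝ :=
  ∑ ω ∈ univ.filter E, wcpWeight H η ℓ d ω

/-- The expectation of a random variable under the Wasteful Coloring Procedure randomness. -/
def wcpExp {C : Type} [Fintype C] (H : SimpleGraph C) (η ℓ d : ℝ)
    (f : (C → Bool × Bool) → ℝ) : ℝ :=
  ∑ ω : C → Bool × Bool, wcpWeight H η ℓ d ω * f ω

/-- The set of edges `E_K(v)`, encoded as ordered pairs `(c, c')` with `c ∈ L(v)`,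
`c' ∈ N_H(c)` and `c, c' ∈ K` (each such edge has exactly one endpoint in `L(v)`). -/
def EK {V C : Type} [Fintype C] (H : SimpleGraph C) (L : V → Finset C) (v : V)
    (ω : C → Bool × Bool) : Finset (C × C) :=
  ((L v) ×ˢ (univ : Finset C)).filter fun p =>
    H.Adj p.1 p.2 ∧ p.1 ∈ Kset H ω ∧ p.2 ∈ Kset H ω

/-- The set of edges `E_U(v)`, encoded as ordered pairs `(c, c')` with `c ∈ L(v)`,
`c' ∈ N_H(c)` and `c' ∈ U`. -/
def EU {V C : Type} [Fintype V] [Fintype C] (H : SimpleGraph C) (L : V → Finset C) (v : V)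
    (ω : C → Bool × Bool) : Finset (C × C) :=
  ((L v) ×ˢ (univ : Finset C)).filter fun p =>
    H.Adj p.1 p.2 ∧ p.2 ∈ Uset H L ω


/-! ### Auxiliary lemmas -/

section Aux

/-- Expectation of a product of per-coordinate functions factorizes. -/
lemma sum_prod_pi {C : Type} [Fintype C] (F : C → Bool × Bool → ℝ) :
    ∑ ω : C → Bool × Bool, ∏ c : C, F c (ω c) = ∏ c : C, ∑ x : Bool × Bool, F c x := by
  classical
  rw [Finset.prod_univ_sum (fun _ : C => (univ : Finset (Bool × Bool))) F,
    Fintype.piFinset_univ]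

/-- The kept indicator factors into per-coordinate indicators. -/
lemma kept_indicator {C : Type} [Fintype C] (H : SimpleGraph C) (ω : C → Bool × Bool) (c : C) :
    (if c ∈ Kset H ω then (1 : ℝ) else 0) =
      (if (ω c).2 = true then (1 : ℝ) else 0) *
        ∏ c' ∈ H.neighborFinset c, (if (ω c').1 = true then (0 : ℝ) else 1) := by
  simp only [Kset, Finset.mem_filter, Finset.mem_univ, true_and]
  by_cases h2 : (ω c).2 = true
  · simp only [h2, true_and, if_true, one_mul]
    by_cases hA : ∀ c' ∈ H.neighborFinset c, (ω c').1 = false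
    · rw [if_pos hA, Finset.prod_eq_one]
      intro c' hc'
      rw [if_neg (by simp [hA c' hc'])]
    · rw [if_neg hA]
      push_neg at hA
      obtain ⟨c', hc', h⟩ := hA
      exact (Finset.prod_eq_zero hc' (by rw [if_pos (by simpa using h)])).symm
  · simp [h2]

/-- Per-coordinate factor used in the factorization of `wcpWeight` times kept indicators. -/
def Gfun {C : Type} [Fintype C] (H : SimpleGraph C) (η ℓ d : ℝ) (S NS : Finset C)
    (c : C) (x : Bool × Bool) : ℝ :=
  bern (η / ℓ) x.1 *
      bern ((1 - η / ℓ) ^ (2 * d) / (1 - η / ℓ) ^ ((H.degree c : ℝ))) x.2 *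
    ((if c ∈ S then (if x.2 = true then (1 : ℝ) else 0) else 1) *
      (if c ∈ NS then (if x.1 = true then (0 : ℝ) else 1) else 1))

lemma sum_Gfun {C : Type} [Fintype C] (H : SimpleGraph C) (η ℓ d : ℝ) (S NS : Finset C)
    (c : C) :
    ∑ x : Bool × Bool, Gfun H η ℓ d S NS c x =
      (if c ∈ NS then (1 - η / ℓ) else 1) *
        (if c ∈ S then (1 - η / ℓ) ^ (2 * d) / (1 - η / ℓ) ^ ((H.degree c : ℝ)) else 1) := by
  by_cases hS : c ∈ S <;> by_cases hN : c ∈ NS <;>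
    simp [Gfun, Fintype.sum_prod_type, bern, hS, hN] <;> ring

/-- Expectation of the product of kept indicators over a set with pairwise disjoint
neighborhoods equals `keep ^ |S|`. -/
lemma exp_prod_kept {C : Type} [Fintype C] (H : SimpleGraph C) (η ℓ d : ℝ)
    (h1 : 0 < 1 - η / ℓ) (S : Finset C)
    (hdisj : ∀ c₁ ∈ S, ∀ c₂ ∈ S, c₁ ≠ c₂ →
      Disjoint (H.neighborFinset c₁) (H.neighborFinset c₂)) :
    ∑ ω : C → Bool × Bool, wcpWeight H η ℓ d ω *
        ∏ c ∈ S, (if c ∈ Kset H ω then (1 : ℝ) else 0)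
      = ((1 - η / ℓ) ^ (2 * d)) ^ S.card := by
  classical
  set NS : Finset C := S.biUnion (fun c => H.neighborFinset c) with hNS
  have hpd : Set.PairwiseDisjoint (↑S) (fun c => H.neighborFinset c) := by
    intro c₁ h₁ c₂ h₂ hne
    exact hdisj c₁ (Finset.mem_coe.1 h₁) c₂ (Finset.mem_coe.1 h₂) hne
  have e2 : ∀ (f : C → ℝ) (t : Finset C), ∏ c ∈ t, f c = ∏ c : C, (if c ∈ t then f c else 1) := by
    intro f t
    rw [Finset.prod_ite_mem, Finset.univ_inter]
  have key : ∀ ω : C → Bool × Bool,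
      wcpWeight H η ℓ d ω * ∏ c ∈ S, (if c ∈ Kset H ω then (1 : ℝ) else 0)
        = ∏ c : C, Gfun H η ℓ d S NS c (ω c) := by
    intro ω
    have e1 : ∏ c ∈ S, (if c ∈ Kset H ω then (1 : ℝ) else 0)
        = (∏ c ∈ S, (if (ω c).2 = true then (1 : ℝ) else 0)) *
          ∏ c' ∈ NS, (if (ω c').1 = true then (0 : ℝ) else 1) := by
      rw [Finset.prod_congr rfl fun c _ => kept_indicator H ω c, Finset.prod_mul_distrib,
        hNS, Finset.prod_biUnion hpd]
    rw [e1, e2 (fun c => (if (ω c).2 = true then (1 : ℝ) else 0)) S,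
      e2 (fun c' => (if (ω c').1 = true then (0 : ℝ) else 1)) NS]
    simp only [wcpWeight, Gfun]
    rw [← Finset.prod_mul_distrib, ← Finset.prod_mul_distrib]
  calc ∑ ω : C → Bool × Bool, wcpWeight H η ℓ d ω *
        ∏ c ∈ S, (if c ∈ Kset H ω then (1 : ℝ) else 0)
      = ∑ ω : C → Bool × Bool, ∏ c : C, Gfun H η ℓ d S NS c (ω c) :=
        Finset.sum_congr rfl fun ω _ => key ω
    _ = ∏ c : C, ∑ x : Bool × Bool, Gfun H η ℓ d S NS c x := sum_prod_pi _
    _ = ∏ c : C, ((if c ∈ NS then (1 - η / ℓ) else 1) *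
          (if c ∈ S then (1 - η / ℓ) ^ (2 * d) / (1 - η / ℓ) ^ ((H.degree c : ℝ)) else 1)) :=
        Finset.prod_congr rfl fun c _ => sum_Gfun H η ℓ d S NS c
    _ = (∏ c' ∈ NS, (1 - η / ℓ)) *
          ∏ c ∈ S, ((1 - η / ℓ) ^ (2 * d) / (1 - η / ℓ) ^ ((H.degree c : ℝ))) := by
        rw [Finset.prod_mul_distrib, ← e2 (fun _ => (1 - η / ℓ)) NS,
          ← e2 (fun c => (1 - η / ℓ) ^ (2 * d) / (1 - η / ℓ) ^ ((H.degree c : ℝ))) S]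
    _ = ((1 - η / ℓ) ^ (2 * d)) ^ S.card := by
        rw [Finset.prod_const]
        have hcard : NS.card = ∑ c ∈ S, H.degree c := by
          rw [hNS, Finset.card_biUnion hdisj]
          exact Finset.sum_congr rfl fun c _ => SimpleGraph.card_neighborFinset_eq_degree _ _
        rw [hcard, ← Finset.prod_pow_eq_pow_sum, ← Finset.prod_mul_distrib,
          ← Finset.prod_const (((1 - η / ℓ) ^ (2 * d) : ℝ))]
        refine Finset.prod_congr rfl fun c _ => ?_
        rw [Real.rpow_natCast]
        rw [mul_comm, div_mul_cancel₀]
        exact pow_ne_zero _ (ne_of_gt h1)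

/-- Exact formula for the moment generating function of `|T ∩ K|`. -/
lemma mgf_eq {C : Type} [Fintype C] (H : SimpleGraph C) (η ℓ d : ℝ)
    (h1 : 0 < 1 - η / ℓ) (T : Finset C)
    (hdisj : ∀ c₁ ∈ T, ∀ c₂ ∈ T, c₁ ≠ c₂ →
      Disjoint (H.neighborFinset c₁) (H.neighborFinset c₂)) (s : ℝ) :
    ∑ ω : C → Bool × Bool, wcpWeight H η ℓ d ω * Real.exp (s * ((T ∩ Kset H ω).card : ℝ))
      = (1 + (Real.exp s - 1) * (1 - η / ℓ) ^ (2 * d)) ^ T.card := by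
  classical
  have hexp : ∀ ω : C → Bool × Bool, Real.exp (s * ((T ∩ Kset H ω).card : ℝ))
      = ∑ S ∈ T.powerset, (Real.exp s - 1) ^ S.card *
          ∏ c ∈ S, (if c ∈ Kset H ω then (1 : ℝ) else 0) := by
    intro ω
    have h0 : ((T ∩ Kset H ω).card : ℝ) = ∑ c ∈ T, (if c ∈ Kset H ω then (1 : ℝ) else 0) := by
      rw [← Finset.filter_mem_eq_inter, Finset.card_filter]
      push_cast
      rfl
    rw [h0, Finset.mul_sum, Real.exp_sum]
    have h2 : ∀ c ∈ T, Real.exp (s * (if c ∈ Kset H ω then (1 : ℝ) else 0))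
        = (Real.exp s - 1) * (if c ∈ Kset H ω then (1 : ℝ) else 0) + 1 := by
      intro c _
      by_cases h : c ∈ Kset H ω <;> simp [h]
    rw [Finset.prod_congr rfl h2, Finset.prod_add]
    refine Finset.sum_congr rfl fun S hS => ?_
    rw [Finset.prod_const_one, mul_one, Finset.prod_mul_distrib, Finset.prod_const]
  calc ∑ ω : C → Bool × Bool, wcpWeight H η ℓ d ω * Real.exp (s * ((T ∩ Kset H ω).card : ℝ))
      = ∑ S ∈ T.powerset, (Real.exp s - 1) ^ S.card *
          ∑ ω : C → Bool × Bool, wcpWeight H η ℓ d ω *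
            ∏ c ∈ S, (if c ∈ Kset H ω then (1 : ℝ) else 0) := by
        simp_rw [hexp, Finset.mul_sum]
        rw [Finset.sum_comm]
        exact Finset.sum_congr rfl fun S _ => Finset.sum_congr rfl fun ω _ => by ring
    _ = ∑ S ∈ T.powerset, (Real.exp s - 1) ^ S.card * ((1 - η / ℓ) ^ (2 * d)) ^ S.card := by
        refine Finset.sum_congr rfl fun S hS => ?_
        rw [exp_prod_kept H η ℓ d h1 S fun c₁ hc₁ c₂ hc₂ hne =>
          hdisj c₁ (Finset.mem_powerset.1 hS hc₁) c₂ (Finset.mem_powerset.1 hS hc₂) hne]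
    _ = (1 + (Real.exp s - 1) * (1 - η / ℓ) ^ (2 * d)) ^ T.card := by
        have h3 : ∀ S ∈ T.powerset,
            (Real.exp s - 1) ^ S.card * ((1 - η / ℓ) ^ (2 * d)) ^ S.card
              = (∏ _c ∈ S, ((Real.exp s - 1) * (1 - η / ℓ) ^ (2 * d))) * ∏ _c ∈ T \ S, (1 : ℝ) := by
          intro S _
          rw [Finset.prod_const, Finset.prod_const_one, mul_one, mul_pow]
        rw [Finset.sum_congr rfl h3, ← Finset.prod_add, Finset.prod_const, add_comm]

/-- Nonnegativity of the weights. -/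
lemma wcpWeight_nonneg {C : Type} [Fintype C] (H : SimpleGraph C) (η ℓ d : ℝ)
    (h1 : 0 < 1 - η / ℓ) (hp0 : 0 ≤ η / ℓ)
    (hdeg : ∀ c : C, (H.degree c : ℝ) ≤ 2 * d) (ω : C → Bool × Bool) :
    0 ≤ wcpWeight H η ℓ d ω := by
  refine Finset.prod_nonneg fun c _ => mul_nonneg ?_ ?_
  · cases hb : (ω c).1 <;> simp [bern] <;> linarith
  · have hq0 : 0 ≤ (1 - η / ℓ) ^ (2 * d) / (1 - η / ℓ) ^ (H.degree c) := by
      rw [← Real.rpow_natCast (1 - η / ℓ) (H.degree c)]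
      exact div_nonneg (Real.rpow_nonneg h1.le _) (Real.rpow_nonneg h1.le _)
    have hq1 : (1 - η / ℓ) ^ (2 * d) / (1 - η / ℓ) ^ (H.degree c) ≤ 1 := by
      rw [← Real.rpow_natCast (1 - η / ℓ) (H.degree c), div_le_one (Real.rpow_pos_of_pos h1 _)]
      exact Real.rpow_le_rpow_of_exponent_ge h1 (by linarith) (hdeg c)
    cases hb : (ω c).2 <;> simp [bern] <;> linarith

lemma exp_quadratic_bound {x : ℝ} (hx : |x| ≤ 1) : Real.exp x ≤ 1 + x + (3 / 4) * x ^ 2 := by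
  have h := Real.exp_bound hx (by norm_num : 0 < 2)
  have h2 : ∑ m ∈ Finset.range 2, x ^ m / (Nat.factorial m : ℝ) = 1 + x := by
    simp [Finset.sum_range_succ]
  rw [h2] at h
  have h3 := (abs_sub_le_iff.1 h).1
  have h4 : |x| ^ 2 = x ^ 2 := sq_abs x
  norm_num at h3
  nlinarith [sq_abs x]

/-- Chernoff-type two-sided tail bound for `|T ∩ K|`. -/
lemma chernoff_tails {C : Type} [Fintype C] (H : SimpleGraph C) (η ℓ d : ℝ)
    (h1 : 0 < 1 - η / ℓ) (hp0 : 0 ≤ η / ℓ) (hd0 : 0 ≤ d)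
    (hdeg : ∀ c : C, (H.degree c : ℝ) ≤ 2 * d)
    (T : Finset C)
    (hdisj : ∀ c₁ ∈ T, ∀ c₂ ∈ T, c₁ ≠ c₂ →
      Disjoint (H.neighborFinset c₁) (H.neighborFinset c₂))
    (t : ℝ) (ht0 : 0 < t) (ht1 : t ≤ 1) :
    wcpPr H η ℓ d (fun ω =>
        t * ((1 - η / ℓ) ^ (2 * d)) * ((T.card : ℝ)) ≤
          |((T ∩ Kset H ω).card : ℝ) - (1 - η / ℓ) ^ (2 * d) * ((T.card : ℝ))|)
      ≤ 2 * Real.exp (-(1 / 4) * ((1 - η / ℓ) ^ (2 * d)) * ((T.card : ℝ)) * t ^ 2) := by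
  classical
  set κ : ℝ := (1 - η / ℓ) ^ (2 * d) with hκdef
  have hκ0 : 0 ≤ κ := Real.rpow_nonneg h1.le _
  have hκ1 : κ ≤ 1 := Real.rpow_le_one h1.le (by linarith) (by linarith)
  have hw := wcpWeight_nonneg H η ℓ d h1 hp0 hdeg
  set n : ℕ := T.card with hn
  set X : (C → Bool × Bool) → ℝ := fun ω => ((T ∩ Kset H ω).card : ℝ) with hX
  have hmgf : ∀ s : ℝ, ∑ ω : C → Bool × Bool, wcpWeight H η ℓ d ω * Real.exp (s * X ω)
      = (1 + (Real.exp s - 1) * κ) ^ n := fun s => mgf_eq H η ℓ d h1 T hdisj s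
  have hquad : ∀ s : ℝ, (1 + (Real.exp s - 1) * κ) ^ n
      ≤ Real.exp ((n : ℝ) * κ * (Real.exp s - 1)) := by
    intro s
    have hb0 : 0 ≤ 1 + (Real.exp s - 1) * κ := by nlinarith [Real.exp_pos s]
    calc (1 + (Real.exp s - 1) * κ) ^ n ≤ (Real.exp ((Real.exp s - 1) * κ)) ^ n := by
          refine pow_le_pow_left₀ hb0 ?_ n
          linarith [Real.add_one_le_exp ((Real.exp s - 1) * κ)]
      _ = Real.exp ((n : ℝ) * ((Real.exp s - 1) * κ)) := (Real.exp_nat_mul _ n).symm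
      _ = Real.exp ((n : ℝ) * κ * (Real.exp s - 1)) := by ring_nf
  have tail : ∀ (E : (C → Bool × Bool) → Prop) (s θ : ℝ),
      (∀ ω, E ω → 0 ≤ s * (X ω - θ)) →
      wcpPr H η ℓ d E ≤ Real.exp (-(s * θ)) * Real.exp ((n : ℝ) * κ * (Real.exp s - 1)) := by
    intro E s θ hE
    have step : wcpPr H η ℓ d E
        ≤ Real.exp (-(s * θ)) * (1 + (Real.exp s - 1) * κ) ^ n := by
      unfold wcpPr
      calc ∑ ω ∈ univ.filter E, wcpWeight H η ℓ d ω
          ≤ ∑ ω ∈ univ.filter E, wcpWeight H η ℓ d ω * Real.exp (s * (X ω - θ)) := by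
            refine Finset.sum_le_sum fun ω hω => ?_
            have h01 := hE ω (Finset.mem_filter.1 hω).2
            have h1e : 1 ≤ Real.exp (s * (X ω - θ)) := by
              linarith [Real.add_one_le_exp (s * (X ω - θ))]
            nlinarith [hw ω]
        _ ≤ ∑ ω : C → Bool × Bool, wcpWeight H η ℓ d ω * Real.exp (s * (X ω - θ)) :=
            Finset.sum_le_sum_of_subset_of_nonneg (Finset.filter_subset _ _)
              fun ω _ _ => mul_nonneg (hw ω) (Real.exp_pos _).le
        _ = Real.exp (-(s * θ)) *
              ∑ ω : C → Bool × Bool, wcpWeight H η ℓ d ω * Real.exp (s * X ω) := by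
            rw [Finset.mul_sum]
            refine Finset.sum_congr rfl fun ω _ => ?_
            rw [show s * (X ω - θ) = s * X ω + -(s * θ) by ring, Real.exp_add]
            ring
        _ = Real.exp (-(s * θ)) * (1 + (Real.exp s - 1) * κ) ^ n := by rw [hmgf s]
    exact step.trans (mul_le_mul_of_nonneg_left (hquad s) (Real.exp_pos _).le)
  -- split the two-sided event
  set E1 : (C → Bool × Bool) → Prop := fun ω => κ * (n : ℝ) + t * κ * (n : ℝ) ≤ X ω with hE1
  set E2 : (C → Bool × Bool) → Prop := fun ω => X ω ≤ κ * (n : ℝ) - t * κ * (n : ℝ) with hE2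
  have hsplit : wcpPr H η ℓ d (fun ω =>
        t * κ * ((n : ℝ)) ≤ |X ω - κ * ((n : ℝ))|)
      ≤ wcpPr H η ℓ d E1 + wcpPr H η ℓ d E2 := by
    unfold wcpPr
    have hsub : univ.filter (fun ω => t * κ * ((n : ℝ)) ≤ |X ω - κ * ((n : ℝ))|)
        ⊆ univ.filter E1 ∪ univ.filter E2 := by
      intro ω hω
      have h := (Finset.mem_filter.1 hω).2
      rcases le_abs.1 h with h' | h'
      · exact Finset.mem_union_left _ (Finset.mem_filter.2 ⟨Finset.mem_univ _, by
          simp only [hE1]; linarith⟩)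
      · exact Finset.mem_union_right _ (Finset.mem_filter.2 ⟨Finset.mem_univ _, by
          simp only [hE2]; linarith⟩)
    calc ∑ ω ∈ univ.filter (fun ω => t * κ * ((n : ℝ)) ≤ |X ω - κ * ((n : ℝ))|),
            wcpWeight H η ℓ d ω
        ≤ ∑ ω ∈ univ.filter E1 ∪ univ.filter E2, wcpWeight H η ℓ d ω :=
          Finset.sum_le_sum_of_subset_of_nonneg hsub fun ω _ _ => hw ω
      _ ≤ ∑ ω ∈ univ.filter E1, wcpWeight H η ℓ d ω
            + ∑ ω ∈ univ.filter E2, wcpWeight H η ℓ d ω := by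
          rw [← Finset.union_sdiff_self_eq_union, Finset.sum_union Finset.disjoint_sdiff]
          refine add_le_add_right (Finset.sum_le_sum_of_subset_of_nonneg
            (Finset.sdiff_subset) fun ω _ _ => hw ω) _
  have habs : |t| ≤ 1 := by rw [abs_of_pos ht0]; exact ht1
  have habs' : |(-t)| ≤ 1 := by rw [abs_neg, abs_of_pos ht0]; exact ht1
  have hnn : 0 ≤ (n : ℝ) := Nat.cast_nonneg n
  have hup : wcpPr H η ℓ d E1 ≤ Real.exp (-(1 / 4) * κ * ((n : ℝ)) * t ^ 2) := by
    have h := tail E1 t (κ * (n : ℝ) + t * κ * (n : ℝ)) (fun ω hω => by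
      have : κ * (n : ℝ) + t * κ * (n : ℝ) ≤ X ω := hω
      nlinarith)
    refine h.trans ?_
    rw [← Real.exp_add, Real.exp_le_exp]
    have hq := exp_quadratic_bound habs
    nlinarith [mul_nonneg hκ0 hnn, sq_nonneg t]
  have hlow : wcpPr H η ℓ d E2 ≤ Real.exp (-(1 / 4) * κ * ((n : ℝ)) * t ^ 2) := by
    have h := tail E2 (-t) (κ * (n : ℝ) - t * κ * (n : ℝ)) (fun ω hω => by
      have : X ω ≤ κ * (n : ℝ) - t * κ * (n : ℝ) := hω
      nlinarith)
    refine h.trans ?_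
    rw [← Real.exp_add, Real.exp_le_exp]
    have hq := exp_quadratic_bound habs'
    nlinarith [mul_nonneg hκ0 hnn, sq_nonneg t]
  calc wcpPr H η ℓ d (fun ω =>
        t * κ * ((T.card : ℝ)) ≤ |((T ∩ Kset H ω).card : ℝ) - κ * ((T.card : ℝ))|)
      ≤ wcpPr H η ℓ d E1 + wcpPr H η ℓ d E2 := hsplit
    _ ≤ 2 * Real.exp (-(1 / 4) * κ * ((T.card : ℝ)) * t ^ 2) := by
        have := add_le_add hup hlow
        linarith

/-- The asymptotic facts about `d` needed in the main theorem. -/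
lemma eventual_facts (γ : ℝ) (hγ : γ ∈ Set.Ioo (0 : ℝ) 1) :
    ∀ᶠ d : ℝ in Filter.atTop,
      4 ≤ d ∧ 10 ≤ (1 - γ) * Real.log d ∧
        80 * (Real.log d) ^ 15 * (d ^ ((1 : ℝ) / 10) + Real.log 2) ≤ 9 * d ^ ((99 : ℝ) / 100) := by
  have h4 : ∀ᶠ d : ℝ in Filter.atTop, (4 : ℝ) ≤ d := Filter.eventually_ge_atTop 4
  have hlog : ∀ᶠ d : ℝ in Filter.atTop, 10 ≤ (1 - γ) * Real.log d := by
    have h := (Real.tendsto_log_atTop.const_mul_atTop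
      (show (0 : ℝ) < 1 - γ by linarith [hγ.2]))
    exact h.eventually_ge_atTop 10
  have hl15 : ∀ᶠ d : ℝ in Filter.atTop, (Real.log d) ^ 15 ≤ d ^ ((1 : ℝ) / 10) := by
    have h := isLittleO_log_rpow_rpow_atTop (15 : ℝ)
      (show (0 : ℝ) < 1 / 10 by norm_num)
    have h2 := h.def one_pos
    filter_upwards [h2, Filter.eventually_ge_atTop (1 : ℝ)] with d hd hd1
    have hld : 0 ≤ Real.log d := Real.log_nonneg hd1
    have hrp : 0 ≤ d ^ ((1 : ℝ) / 10) := Real.rpow_nonneg (by linarith) _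
    rw [Real.norm_eq_abs, Real.norm_eq_abs, abs_of_nonneg (Real.rpow_nonneg hld _),
      abs_of_nonneg hrp, one_mul] at hd
    calc (Real.log d) ^ 15 = (Real.log d) ^ ((15 : ℕ) : ℝ) := (Real.rpow_natCast _ 15).symm
      _ ≤ d ^ ((1 : ℝ) / 10) := by exact_mod_cast hd
  have hlog2 : ∀ᶠ d : ℝ in Filter.atTop, Real.log 2 ≤ d ^ ((1 : ℝ) / 10) :=
    (tendsto_rpow_atTop (show (0 : ℝ) < 1 / 10 by norm_num)).eventually_ge_atTop _
  have h160 : ∀ᶠ d : ℝ in Filter.atTop, (320 : ℝ) ≤ d ^ ((79 : ℝ) / 100) :=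
    (tendsto_rpow_atTop (show (0 : ℝ) < 79 / 100 by norm_num)).eventually_ge_atTop _
  filter_upwards [h4, hlog, hl15, hlog2, h160, Filter.eventually_gt_atTop (0 : ℝ)]
    with d h4' hlog' hl15' hlog2' h160' hd0
  refine ⟨h4', hlog', ?_⟩
  have hsplit : d ^ ((99 : ℝ) / 100) = d ^ ((79 : ℝ) / 100) * d ^ ((1 : ℝ) / 5) := by
    rw [← Real.rpow_add hd0]; norm_num
  have hfifth : d ^ ((1 : ℝ) / 5) = d ^ ((1 : ℝ) / 10) * d ^ ((1 : ℝ) / 10) := by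
    rw [← Real.rpow_add hd0]; norm_num
  have hr10 : 0 ≤ d ^ ((1 : ℝ) / 10) := (Real.rpow_pos_of_pos hd0 _).le
  have hl0 : 0 ≤ (Real.log d) ^ 15 := pow_nonneg (Real.log_nonneg (by linarith)) 15
  calc 80 * (Real.log d) ^ 15 * (d ^ ((1 : ℝ) / 10) + Real.log 2)
      ≤ 80 * d ^ ((1 : ℝ) / 10) * (d ^ ((1 : ℝ) / 10) + d ^ ((1 : ℝ) / 10)) := by
        have hl2 : 0 ≤ d ^ ((1 : ℝ) / 10) + Real.log 2 := by
          have := Real.log_nonneg (by norm_num : (1 : ℝ) ≤ 2); linarith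
        nlinarith
    _ = 160 * (d ^ ((1 : ℝ) / 10) * d ^ ((1 : ℝ) / 10)) := by ring
    _ ≤ 9 * d ^ ((99 : ℝ) / 100) := by
        rw [hsplit, hfifth]
        nlinarith [mul_nonneg hr10 hr10]

end Aux

/-- Concentration of the number of kept colors `k(v) = |K(v)|` around `keep·ℓ(v)`, under the
assumptions (A1)–(A8) of the iteration lemma. -/
theorem stmt11 (γ : ℝ) (hγ : γ ∈ Set.Ioo (0 : ℝ) 1) :
    ∃ dtilde : ℝ, ∀ η d ℓ k : ℝ,
      dtilde ≤ d →
      1 ≤ k → k ≤ d ^ (2 * γ) →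
      4 * η * d < ℓ → ℓ < 100 * d →
      1 / (Real.log d) ^ 5 < η → η < 1 / Real.log (d / Real.sqrt k) →
      ∀ (V C : Type) [Fintype V] [Fintype C] (G : SimpleGraph V) (H : SimpleGraph C)
        (L : V → Finset C) (β : ℝ),
        IsCorrespondenceCover G H L →
        d ^ (-(γ * (1 - Real.sqrt γ)) / 200) ≤ β → β ≤ 1 / 10 →
        LocallySparse H k →
        (∀ c : C, (H.degree c : ℝ) ≤ 2 * d) →
        (∀ v : V, (1 - β) * ℓ / 2 ≤ ((L v).card : ℝ) ∧ ((L v).card : ℝ) ≤ (1 + β) * ℓ) →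
        (∀ v : V, (1 / ((L v).card : ℝ)) * ∑ c ∈ L v, (H.degree c : ℝ)
            ≤ (2 - (1 - β) * ℓ / ((L v).card : ℝ)) * d) →
        ∀ v : V,
          wcpPr H η ℓ d (fun ω =>
              η * β * ((1 - η / ℓ) ^ (2 * d)) * ((L v).card : ℝ) ≤
                |((L v ∩ Kset H ω).card : ℝ) - (1 - η / ℓ) ^ (2 * d) * ((L v).card : ℝ)|)
            ≤ Real.exp (-(d ^ ((1 : ℝ) / 10))) := by
  obtain ⟨D, hD⟩ := Filter.eventually_atTop.1 (eventual_facts γ hγ)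
  refine ⟨D, ?_⟩
  intro η d ℓ k hdD hk1 hk2 hl1 hl2 he1 he2 V C _ _ G H L β cover hβ1 hβ2 _ hdeg hcard _ v
  obtain ⟨h4d, hlogγ, hF5⟩ := hD d hdD
  have hγ0 := hγ.1
  have hγ1 := hγ.2
  have hd0 : (0 : ℝ) < d := by linarith
  have hd1 : (1 : ℝ) ≤ d := by linarith
  have hld : (0 : ℝ) < Real.log d := by nlinarith [hlogγ]
  have hη0 : 0 < η := lt_trans (one_div_pos.2 (pow_pos hld 5)) he1
  have hℓ0 : 0 < ℓ := lt_trans (by positivity) hl1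
  have hp0 : 0 ≤ η / ℓ := le_of_lt (div_pos hη0 hℓ0)
  have hplt : η / ℓ < 1 / (4 * d) := by
    rw [div_lt_div_iff₀ hℓ0 (by positivity)]
    nlinarith
  have hp2 : η / ℓ ≤ 1 / 2 := by
    have h24 : 1 / (4 * d) ≤ 1 / 2 := by
      rw [div_le_div_iff₀ (by positivity) (by norm_num)]
      linarith
    linarith
  have h1 : 0 < 1 - η / ℓ := by linarith
  set κ : ℝ := (1 - η / ℓ) ^ (2 * d) with hκdef
  have hκ0 : 0 ≤ κ := Real.rpow_nonneg h1.le _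
  have hκ4 : (1 / 4 : ℝ) ≤ κ := by
    rw [hκdef, Real.rpow_def_of_pos h1]
    have hinv : (1 - η / ℓ)⁻¹ ≤ 1 + 2 * (η / ℓ) := by
      rw [inv_eq_one_div, div_le_iff₀ h1]
      nlinarith [hp0, hp2]
    have hlo : -(2 * (η / ℓ)) ≤ Real.log (1 - η / ℓ) := by
      have := Real.one_sub_inv_le_log_of_pos h1
      linarith
    have h4dp : 4 * d * (η / ℓ) < 1 := by
      have e : 4 * d * (η / ℓ) = η * (4 * d) / ℓ := by ring
      have h' := (div_lt_div_iff₀ hℓ0 (by positivity : (0 : ℝ) < 4 * d)).1 hplt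
      rw [e, div_lt_one hℓ0]
      linarith
    have hge : -(1 : ℝ) ≤ Real.log (1 - η / ℓ) * (2 * d) := by
      have h2d : (0 : ℝ) ≤ 2 * d := by linarith
      have := mul_le_mul_of_nonneg_right hlo h2d
      nlinarith
    have hexp4 : Real.exp 1 ≤ 4 := by
      have := Real.exp_one_lt_d9; linarith
    calc (1 / 4 : ℝ) ≤ Real.exp (-1) := by
          rw [Real.exp_neg, inv_eq_one_div]
          exact one_div_le_one_div_of_le (Real.exp_pos 1) hexp4
      _ ≤ Real.exp (Real.log (1 - η / ℓ) * (2 * d)) := Real.exp_le_exp.2 hge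
  have hsk0 : 0 < Real.sqrt k := Real.sqrt_pos.2 (by linarith)
  have hsk : Real.sqrt k ≤ d ^ γ := by
    have h2 : Real.sqrt (d ^ (2 * γ)) = d ^ γ := by
      rw [Real.sqrt_eq_rpow, ← Real.rpow_mul hd0.le]
      have e : 2 * γ * (1 / 2 : ℝ) = γ := by ring
      rw [e]
    calc Real.sqrt k ≤ Real.sqrt (d ^ (2 * γ)) := Real.sqrt_le_sqrt hk2
      _ = d ^ γ := h2
  have hdksqrt : d ^ ((1 : ℝ) - γ) ≤ d / Real.sqrt k := by
    rw [Real.rpow_sub hd0, Real.rpow_one]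
    gcongr
  have h10log : 10 ≤ Real.log (d / Real.sqrt k) := by
    have e : Real.log (d ^ ((1 : ℝ) - γ)) = (1 - γ) * Real.log d := Real.log_rpow hd0 _
    have h := Real.log_le_log (Real.rpow_pos_of_pos hd0 _) hdksqrt
    linarith [hlogγ]
  have hη10 : η ≤ 1 / 10 :=
    le_trans he2.le (one_div_le_one_div_of_le (by norm_num) h10log)
  have hβ0 : 0 < β := lt_of_lt_of_le (Real.rpow_pos_of_pos hd0 _) hβ1
  set t : ℝ := η * β with ht
  have ht0 : 0 < t := mul_pos hη0 hβ0
  have ht1 : t ≤ 1 := by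
    have := mul_le_mul hη10 hβ2 hβ0.le (by norm_num : (0 : ℝ) ≤ 1 / 10)
    rw [ht]; linarith
  have hdisj : ∀ c₁ ∈ L v, ∀ c₂ ∈ L v, c₁ ≠ c₂ →
      Disjoint (H.neighborFinset c₁) (H.neighborFinset c₂) := by
    intro c₁ h₁ c₂ h₂ hne
    rw [Finset.disjoint_left]
    intro x hx1 hx2
    rw [SimpleGraph.mem_neighborFinset] at hx1 hx2
    obtain ⟨u, hu, -⟩ := cover.partition x
    exact hne (cover.matching u v x hu c₁ h₁ c₂ h₂ hx1.symm hx2.symm)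
  have hmain := chernoff_tails H η ℓ d h1 hp0 hd0.le hdeg (L v) hdisj t ht0 ht1
  refine le_trans hmain ?_
  set n : ℝ := ((L v).card : ℝ) with hn
  have hn1 : 9 / 5 * (η * d) ≤ n := by
    have hc := (hcard v).1
    nlinarith [mul_pos hη0 hd0, mul_nonneg (mul_pos hη0 hd0).le hβ0.le]
  have hβsq : d ^ (-(1 : ℝ) / 100) ≤ β ^ 2 := by
    have h200 : d ^ (-(1 : ℝ) / 200) ≤ β := by
      refine le_trans (Real.rpow_le_rpow_of_exponent_le hd1 ?_) hβ1
      have hs0 : 0 ≤ Real.sqrt γ := Real.sqrt_nonneg γ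
      have hs1 : Real.sqrt γ ≤ 1 := by
        rw [show (1 : ℝ) = Real.sqrt 1 from Real.sqrt_one.symm]
        exact Real.sqrt_le_sqrt hγ1.le
      nlinarith [mul_nonneg hγ0.le hs0]
    have hsq : (d ^ (-(1 : ℝ) / 200)) ^ 2 = d ^ (-(1 : ℝ) / 100) := by
      rw [← Real.rpow_natCast (d ^ (-(1 : ℝ) / 200)) 2, ← Real.rpow_mul hd0.le]
      norm_num
    calc d ^ (-(1 : ℝ) / 100) = (d ^ (-(1 : ℝ) / 200)) ^ 2 := hsq.symm
      _ ≤ β ^ 2 := by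
        have := Real.rpow_nonneg hd0.le (-(1 : ℝ) / 200)
        nlinarith
  have hβd : d ^ ((99 : ℝ) / 100) ≤ β ^ 2 * d := by
    have e : d ^ (-(1 : ℝ) / 100) * d ^ (1 : ℝ) = d ^ ((99 : ℝ) / 100) := by
      rw [← Real.rpow_add hd0]; norm_num
    calc d ^ ((99 : ℝ) / 100) = d ^ (-(1 : ℝ) / 100) * d ^ (1 : ℝ) := e.symm
      _ = d ^ (-(1 : ℝ) / 100) * d := by rw [Real.rpow_one]
      _ ≤ β ^ 2 * d := mul_le_mul_of_nonneg_right hβsq hd0.le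
  have hη3 : 1 / (Real.log d) ^ 15 ≤ η ^ 3 := by
    have h5 : (1 / (Real.log d) ^ 5) ^ 3 ≤ η ^ 3 :=
      pow_le_pow_left₀ (by positivity) he1.le 3
    calc 1 / (Real.log d) ^ 15 = (1 / (Real.log d) ^ 5) ^ 3 := by
          rw [div_pow, one_pow, ← pow_mul]
      _ ≤ η ^ 3 := h5
  have hbig : d ^ ((1 : ℝ) / 10) + Real.log 2 ≤ 1 / 4 * κ * n * t ^ 2 := by
    have hlp : 0 < (Real.log d) ^ 15 := pow_pos hld 15
    have step1 : d ^ ((1 : ℝ) / 10) + Real.log 2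
        ≤ 9 / 80 * (1 / (Real.log d) ^ 15) * d ^ ((99 : ℝ) / 100) := by
      rw [show (9 : ℝ) / 80 * (1 / (Real.log d) ^ 15) * d ^ ((99 : ℝ) / 100)
          = 9 * d ^ ((99 : ℝ) / 100) / (80 * (Real.log d) ^ 15) by ring,
        le_div_iff₀ (by positivity)]
      nlinarith [hF5]
    have step2 : 9 / 80 * (1 / (Real.log d) ^ 15) * d ^ ((99 : ℝ) / 100)
        ≤ 9 / 80 * η ^ 3 * (β ^ 2 * d) := by
      have hmm := mul_le_mul hη3 hβd (Real.rpow_nonneg hd0.le _)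
        (by positivity : (0 : ℝ) ≤ η ^ 3)
      nlinarith
    have step3 : 9 / 80 * η ^ 3 * (β ^ 2 * d) ≤ 1 / 4 * κ * n * t ^ 2 := by
      have s1 : 1 / 4 * (9 / 5 * (η * d)) ≤ κ * n :=
        mul_le_mul hκ4 hn1 (by positivity) hκ0
      have s3 := mul_le_mul_of_nonneg_left s1 (by positivity : (0 : ℝ) ≤ 1 / 4 * t ^ 2)
      calc 9 / 80 * η ^ 3 * (β ^ 2 * d) = 1 / 4 * t ^ 2 * (1 / 4 * (9 / 5 * (η * d))) := by
            rw [ht]; ring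
        _ ≤ 1 / 4 * t ^ 2 * (κ * n) := s3
        _ = 1 / 4 * κ * n * t ^ 2 := by ring
    linarith
  calc 2 * Real.exp (-(1 / 4) * κ * n * t ^ 2)
      = Real.exp (Real.log 2 + -(1 / 4) * κ * n * t ^ 2) := by
        rw [Real.exp_add, Real.exp_log (by norm_num : (0 : ℝ) < 2)]
    _ ≤ Real.exp (-(d ^ ((1 : ℝ) / 10))) := Real.exp_le_exp.2 (by linarith)
end
end

section
/- Under the assumptions (A1)–(A8) of the iteration lemma (with parameters γ ∈ (0,1), d sufficiently large, 1 ≤ k ≤ d^{2γ}, 4ηd < ℓ < 100d, 1/log⁵(d) < η < 1/log(d/√k), d^{−γ(1−√γ)/200} ≤ β ≤ 1/10, H k-locally-sparse, Δ(H) ≤ 2d, (1−β)ℓ/2 ≤ |L(v)| ≤ (1+β)ℓ, avg-deg_ℋ(v) ≤ (2 − (1−β)ℓ/|L(v)|)d), run the Wasteful Coloring Procedure randomness and let E_K(v) := {cc' ∈ E(H) : c ∈ L(v), c' ∈ N_H(c), and c, c' ∈ K}, ℓ(v) := |L(v)|, keep := (1 − η/ℓ)^{2d}. Then for each vertex v ∈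 V(G), E[|E_K(v)|] ≤ keep² · ℓ(v) · avg-deg_ℋ(v) · (1 + ηβ). -/
open Finset

attribute [local instance] Classical.propDecidable

noncomputable section

namespace WCPaux

variable {C : Type} [Fintype C]

/-- The one-coordinate weight. -/
def wt (H : SimpleGraph C) (η ℓ d : ℝ) (c : C) (y : Bool × Bool) : ℝ :=
  bern (η / ℓ) y.1 *
    bern ((1 - η / ℓ) ^ (2 * d) / (1 - η / ℓ) ^ ((H.degree c : ℝ))) y.2

/-- The "equalizing" keep probability of a color. -/
def q (H : SimpleGraph C) (η ℓ d : ℝ) (c : C) : ℝ :=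
  (1 - η / ℓ) ^ (2 * d) / (1 - η / ℓ) ^ ((H.degree c : ℝ))

lemma wcpWeight_eq (H : SimpleGraph C) (η ℓ d : ℝ) (ω : C → Bool × Bool) :
    wcpWeight H η ℓ d ω = ∏ c, wt H η ℓ d c (ω c) := rfl

lemma wcpPr_congr (H : SimpleGraph C) (η ℓ d : ℝ) {E E' : (C → Bool × Bool) → Prop}
    (h : ∀ ω, E ω ↔ E' ω) : wcpPr H η ℓ d E = wcpPr H η ℓ d E' := by
  unfold wcpPr
  congr 1
  exact Finset.filter_congr fun ω _ => h ω

lemma wcpPr_forall (H : SimpleGraph C) (η ℓ d : ℝ) (P : C → Bool × Bool → Prop) :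
    wcpPr H η ℓ d (fun ω => ∀ c, P c (ω c)) =
      ∏ c, ∑ y : Bool × Bool, if P c y then wt H η ℓ d c y else 0 := by
  rw [Fintype.prod_sum]
  unfold wcpPr
  rw [Finset.sum_filter]
  apply Finset.sum_congr rfl
  intro ω _
  rw [wcpWeight_eq]
  by_cases h : ∀ c, P c (ω c)
  · rw [if_pos h]
    exact (Finset.prod_congr rfl fun c _ => by rw [if_pos (h c)]).symm
  · rw [if_neg h]
    push_neg at h
    obtain ⟨c₀, hc₀⟩ := h
    exact (Finset.prod_eq_zero (Finset.mem_univ c₀) (by rw [if_neg hc₀])).symm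

lemma wcpPr_pair (H : SimpleGraph C) (η ℓ d : ℝ) {c₀ c₁ : C} (hadj : H.Adj c₀ c₁) :
    wcpPr H η ℓ d (fun ω => c₀ ∈ Kset H ω ∧ c₁ ∈ Kset H ω) =
      (1 - η / ℓ) ^ ((H.neighborFinset c₀ ∪ H.neighborFinset c₁).card) *
        (q H η ℓ d c₀ * q H η ℓ d c₁) := by
  classical
  set S : Finset C := H.neighborFinset c₀ ∪ H.neighborFinset c₁ with hS
  have hev : ∀ ω : C → Bool × Bool,
      (c₀ ∈ Kset H ω ∧ c₁ ∈ Kset H ω) ↔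
        ∀ w, ((w ∈ S → (ω w).1 = false) ∧ ((w = c₀ ∨ w = c₁) → (ω w).2 = true)) := by
    intro ω
    simp only [Kset, Finset.mem_filter, Finset.mem_univ, true_and, hS, Finset.mem_union]
    constructor
    · rintro ⟨⟨h0, h0'⟩, ⟨h1, h1'⟩⟩ w
      refine ⟨fun hw => ?_, fun hw => ?_⟩
      · rcases hw with hw | hw
        · exact h0' w hw
        · exact h1' w hw
      · rcases hw with rfl | rfl
        · exact h0
        · exact h1
    · intro h
      exact ⟨⟨(h c₀).2 (Or.inl rfl), fun w hw => (h w).1 (Or.inl hw)⟩,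
        ⟨(h c₁).2 (Or.inr rfl), fun w hw => (h w).1 (Or.inr hw)⟩⟩
  rw [wcpPr_congr H η ℓ d hev, wcpPr_forall H η ℓ d
    (fun w y => (w ∈ S → y.1 = false) ∧ ((w = c₀ ∨ w = c₁) → y.2 = true))]
  trans (∏ w : C, ((if w ∈ S then (1 - η / ℓ) else 1) *
      (if w = c₀ ∨ w = c₁ then q H η ℓ d w else 1)))
  · refine Finset.prod_congr rfl fun w _ => ?_
    rw [Fintype.sum_prod_type]
    by_cases h1 : w ∈ S <;> by_cases h2 : w = c₀ ∨ w = c₁ <;>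
      simp [wt, q, bern, h1, h2, Fintype.sum_bool] <;> ring
  · rw [Finset.prod_mul_distrib]
    congr 1
    · rw [Finset.prod_ite_mem Finset.univ S fun _ => (1 - η / ℓ), Finset.univ_inter,
        Finset.prod_const]
    · have hrw : ∀ w : C, (if w = c₀ ∨ w = c₁ then q H η ℓ d w else 1) =
          (if w ∈ ({c₀, c₁} : Finset C) then q H η ℓ d w else 1) := by
        intro w
        simp [Finset.mem_insert, Finset.mem_singleton]
      refine Eq.trans (Finset.prod_congr rfl fun w _ => hrw w) ?_
      rw [Finset.prod_ite_mem Finset.univ ({c₀, c₁} : Finset C) (q H η ℓ d), Finset.univ_inter,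
        Finset.prod_pair hadj.ne]

lemma sum_codeg (H : SimpleGraph C) (c₀ : C) :
    ∑ c₁ ∈ H.neighborFinset c₀, (H.neighborFinset c₀ ∩ H.neighborFinset c₁).card =
      pairsWithin H (H.neighborFinset c₀) := by
  classical
  unfold pairsWithin
  rw [Finset.card_filter, Finset.sum_product]
  apply Finset.sum_congr rfl
  intro a _
  have : H.neighborFinset c₀ ∩ H.neighborFinset a =
      (H.neighborFinset c₀).filter fun b => H.Adj a b := by
    ext b
    simp [SimpleGraph.mem_neighborFinset, and_comm]
  rw [this, Finset.card_filter]

end WCPaux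

set_option maxHeartbeats 1000000 in
/-- Bound on the expected number of kept edges `E[|E_K(v)|]`, under the assumptions
(A1)–(A8) of the iteration lemma. -/
theorem stmt12 (γ : ℝ) (hγ : γ ∈ Set.Ioo (0 : ℝ) 1) :
    ∃ dtilde : ℝ, ∀ η d ℓ k : ℝ,
      dtilde ≤ d →
      1 ≤ k → k ≤ d ^ (2 * γ) →
      4 * η * d < ℓ → ℓ < 100 * d →
      1 / (Real.log d) ^ 5 < η → η < 1 / Real.log (d / Real.sqrt k) →
      ∀ (V C : Type) [Fintype V] [Fintype C] (G : SimpleGraph V) (H : SimpleGraph C)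
        (L : V → Finset C) (β : ℝ),
        IsCorrespondenceCover G H L →
        d ^ (-(γ * (1 - Real.sqrt γ)) / 200) ≤ β → β ≤ 1 / 10 →
        LocallySparse H k →
        (∀ c : C, (H.degree c : ℝ) ≤ 2 * d) →
        (∀ v : V, (1 - β) * ℓ / 2 ≤ ((L v).card : ℝ) ∧ ((L v).card : ℝ) ≤ (1 + β) * ℓ) →
        (∀ v : V, (1 / ((L v).card : ℝ)) * ∑ c ∈ L v, (H.degree c : ℝ)
            ≤ (2 - (1 - β) * ℓ / ((L v).card : ℝ)) * d) →
        ∀ v : V,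
          wcpExp H η ℓ d (fun ω => ((EK H L v ω).card : ℝ)) ≤
            ((1 - η / ℓ) ^ (2 * d)) ^ (2 : ℕ) * ((L v).card : ℝ) *
              ((1 / ((L v).card : ℝ)) * ∑ c ∈ L v, (H.degree c : ℝ)) * (1 + η * β) := by
  obtain ⟨hγ0, hγ1⟩ := hγ
  have hlog : ∀ᶠ (y : ℝ) in Filter.atTop, Real.log y ≤ y ^ ((1 - γ) / 10) := by
    have h := (isLittleO_log_rpow_atTop (show 0 < (1 - γ) / 10 by linarith)).bound
      one_pos
    filter_upwards [h, Filter.eventually_ge_atTop (1 : ℝ)] with y hy hy1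
    have h0 : 0 ≤ Real.log y := Real.log_nonneg hy1
    have h1 : 0 ≤ y ^ ((1 - γ) / 10) := Real.rpow_nonneg (by linarith) _
    simpa [Real.norm_eq_abs, abs_of_nonneg h0, abs_of_nonneg h1] using hy
  obtain ⟨D0, hD0⟩ := Filter.eventually_atTop.1 (hlog.and (Filter.eventually_ge_atTop (3 : ℝ)))
  refine ⟨max D0 3, ?_⟩
  intro η d ℓ k hd hk1 hk2 hl1 hl2 hη1 hη2 V C _ _ G H L β hcover hβ1 hβ2 hsparse hdeg hcard
    havg v
  obtain ⟨hlogd, hd3⟩ := hD0 d (le_trans (le_max_left _ _) hd)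
  have hd0 : (0 : ℝ) < d := by linarith
  have hd1 : (1 : ℝ) ≤ d := by linarith
  have hlog1 : 1 ≤ Real.log d := by
    have he3 : Real.exp 1 ≤ 3 := by
      have := Real.exp_one_lt_d9; linarith
    calc (1 : ℝ) = Real.log (Real.exp 1) := (Real.log_exp 1).symm
      _ ≤ Real.log d := Real.log_le_log (Real.exp_pos 1) (le_trans he3 hd3)
  have hη0 : 0 < η := lt_trans (by positivity) hη1
  have hl0 : 0 < ℓ := lt_trans (by nlinarith) hl1
  have hx0 : 0 ≤ η / ℓ := by positivity
  have hxd : η / ℓ ≤ 1 / (4 * d) := by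
    rw [div_le_div_iff₀ hl0 (by positivity)]
    nlinarith
  have hb : 0 < 1 - η / ℓ := by
    have h12 : 1 / (4 * d) ≤ 1 / 12 :=
      one_div_le_one_div_of_le (by norm_num) (by linarith)
    linarith
  have hK0 : (0 : ℝ) ≤ (1 - η / ℓ) ^ (2 * d) := Real.rpow_nonneg hb.le _
  have hK2 : (0 : ℝ) ≤ ((1 - η / ℓ) ^ (2 * d)) ^ (2 : ℕ) := by positivity
  have hβ0 : 0 < β := lt_of_lt_of_le (Real.rpow_pos_of_pos hd0 _) hβ1
  -- the key numeric inequality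
  have hsγ1 : Real.sqrt γ ≤ 1 := by
    rw [show (1 : ℝ) = Real.sqrt 1 by simp]
    exact Real.sqrt_le_sqrt hγ1.le
  have hγsqrt : γ ≤ Real.sqrt γ := by
    nlinarith [Real.mul_self_sqrt hγ0.le, Real.sqrt_nonneg γ]
  have hsqk : Real.sqrt k ≤ d ^ γ := by
    have hdγ : d ^ (2 * γ) = (d ^ γ) ^ (2 : ℕ) := by
      rw [← Real.rpow_natCast (d ^ γ) 2, ← Real.rpow_mul hd0.le]
      norm_num [mul_comm]
    calc Real.sqrt k ≤ Real.sqrt ((d ^ γ) ^ (2 : ℕ)) := Real.sqrt_le_sqrt (by rw [← hdγ]; exact hk2)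
      _ = d ^ γ := by
          rw [show ((d ^ γ) ^ (2 : ℕ)) = (d ^ γ) * (d ^ γ) by ring]
          exact Real.sqrt_mul_self (Real.rpow_nonneg hd0.le _)
  have hs2k : Real.sqrt (2 * k) ≤ Real.sqrt 2 * d ^ γ := by
    rw [Real.sqrt_mul (by norm_num) k]
    exact mul_le_mul_of_nonneg_left hsqk (Real.sqrt_nonneg 2)
  have hexp1 : (Real.log d) ^ 5 ≤ d ^ ((1 - γ) / 2) := by
    calc (Real.log d) ^ 5 ≤ (d ^ ((1 - γ) / 10)) ^ (5 : ℕ) :=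
          pow_le_pow_left₀ (by linarith) hlogd 5
      _ = d ^ ((1 - γ) / 2) := by
          rw [← Real.rpow_natCast (d ^ ((1 - γ) / 10)) 5, ← Real.rpow_mul hd0.le]
          congr 1
          ring
  have hkey : 2 * (η / ℓ) * Real.sqrt (2 * k) ≤ η * β := by
    have hsqrt2 : Real.sqrt 2 ≤ 2 := by
      nlinarith [Real.sq_sqrt (by norm_num : (0 : ℝ) ≤ 2), Real.sqrt_nonneg 2]
    have step1 : 2 * (η / ℓ) * Real.sqrt (2 * k) ≤ (Real.sqrt 2 * d ^ γ) / (2 * d) := by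
      have h1 : 2 * (η / ℓ) ≤ 1 / (2 * d) := by
        calc 2 * (η / ℓ) ≤ 2 * (1 / (4 * d)) := by linarith
          _ = 1 / (2 * d) := by field_simp; ring
      calc 2 * (η / ℓ) * Real.sqrt (2 * k) ≤ (1 / (2 * d)) * (Real.sqrt 2 * d ^ γ) :=
            mul_le_mul h1 hs2k (Real.sqrt_nonneg _) (by positivity)
        _ = (Real.sqrt 2 * d ^ γ) / (2 * d) := by ring
    have step2 : (Real.sqrt 2 * d ^ γ) / (2 * d) ≤
        (1 / (Real.log d) ^ 5) * d ^ (-(γ * (1 - Real.sqrt γ)) / 200) := by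
      rw [show (1 / (Real.log d) ^ 5) * d ^ (-(γ * (1 - Real.sqrt γ)) / 200) =
          d ^ (-(γ * (1 - Real.sqrt γ)) / 200) / (Real.log d) ^ 5 by ring]
      rw [div_le_div_iff₀ (by positivity) (by positivity)]
      have hmid : Real.sqrt 2 * d ^ γ * (Real.log d) ^ 5 ≤ 2 * d ^ (γ + (1 - γ) / 2) := by
        calc Real.sqrt 2 * d ^ γ * (Real.log d) ^ 5
            ≤ Real.sqrt 2 * d ^ γ * d ^ ((1 - γ) / 2) := by
              refine mul_le_mul_of_nonneg_left hexp1 (by positivity)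
          _ = Real.sqrt 2 * d ^ (γ + (1 - γ) / 2) := by rw [mul_assoc, ← Real.rpow_add hd0]
          _ ≤ 2 * d ^ (γ + (1 - γ) / 2) :=
              mul_le_mul_of_nonneg_right hsqrt2 (Real.rpow_nonneg hd0.le _)
      have hright : d ^ (-(γ * (1 - Real.sqrt γ)) / 200) * (2 * d) =
          2 * d ^ (1 + -(γ * (1 - Real.sqrt γ)) / 200) := by
        rw [Real.rpow_add hd0, Real.rpow_one]; ring
      rw [hright]
      refine hmid.trans (mul_le_mul_of_nonneg_left ?_ (by norm_num))
      refine Real.rpow_le_rpow_of_exponent_le hd1 ?_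
      have hBnn : 0 ≤ 1 - Real.sqrt γ := by linarith
      have h1 : γ * (1 - Real.sqrt γ) ≤ 1 - γ :=
        calc γ * (1 - Real.sqrt γ) ≤ 1 * (1 - Real.sqrt γ) :=
              mul_le_mul_of_nonneg_right hγ1.le hBnn
          _ = 1 - Real.sqrt γ := one_mul _
          _ ≤ 1 - γ := by linarith
      linarith
    have step3 : (1 / (Real.log d) ^ 5) * d ^ (-(γ * (1 - Real.sqrt γ)) / 200) ≤ η * β :=
      mul_le_mul hη1.le hβ1 (Real.rpow_nonneg hd0.le _) hη0.le
    exact step1.trans (step2.trans step3)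
  -- the candidate pairs
  set cand : Finset (C × C) := ((L v) ×ˢ (univ : Finset C)).filter (fun p => H.Adj p.1 p.2)
    with hcand
  have hexpEq : wcpExp H η ℓ d (fun ω => ((EK H L v ω).card : ℝ)) =
      ∑ p ∈ cand, wcpPr H η ℓ d (fun ω => p.1 ∈ Kset H ω ∧ p.2 ∈ Kset H ω) := by
    unfold wcpExp
    have hEK : ∀ ω : C → Bool × Bool, EK H L v ω =
        cand.filter (fun p => p.1 ∈ Kset H ω ∧ p.2 ∈ Kset H ω) := by
      intro ω
      rw [hcand, Finset.filter_filter]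
      rfl
    calc ∑ ω : C → Bool × Bool, wcpWeight H η ℓ d ω * ((EK H L v ω).card : ℝ)
        = ∑ ω : C → Bool × Bool, ∑ p ∈ cand,
            (if p.1 ∈ Kset H ω ∧ p.2 ∈ Kset H ω then wcpWeight H η ℓ d ω else 0) := by
          refine Finset.sum_congr rfl fun ω _ => ?_
          rw [hEK ω, Finset.card_filter]
          push_cast
          rw [Finset.mul_sum]
          refine Finset.sum_congr rfl fun p _ => ?_
          by_cases h : p.1 ∈ Kset H ω ∧ p.2 ∈ Kset H ω <;> simp [h]
      _ = ∑ p ∈ cand, ∑ ω : C → Bool × Bool,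
            (if p.1 ∈ Kset H ω ∧ p.2 ∈ Kset H ω then wcpWeight H η ℓ d ω else 0) :=
          Finset.sum_comm
      _ = ∑ p ∈ cand, wcpPr H η ℓ d (fun ω => p.1 ∈ Kset H ω ∧ p.2 ∈ Kset H ω) :=
          Finset.sum_congr rfl fun p _ => by
            unfold wcpPr
            rw [Finset.sum_filter]
            exact Finset.sum_congr rfl fun ω _ => by congr
  -- per-pair bound
  have hpair : ∀ p : C × C, H.Adj p.1 p.2 →
      wcpPr H η ℓ d (fun ω => p.1 ∈ Kset H ω ∧ p.2 ∈ Kset H ω) ≤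
        ((1 - η / ℓ) ^ (2 * d)) ^ (2 : ℕ) * (1 + 2 * (η / ℓ) *
          ((H.neighborFinset p.1 ∩ H.neighborFinset p.2).card : ℝ)) := by
    rintro ⟨c₀, c₁⟩ hadj
    rw [WCPaux.wcpPr_pair H η ℓ d hadj]
    set t : ℕ := (H.neighborFinset c₀ ∩ H.neighborFinset c₁).card with ht
    set s : ℕ := (H.neighborFinset c₀ ∪ H.neighborFinset c₁).card with hs
    have htdeg : (t : ℝ) ≤ (H.degree c₀ : ℝ) := by
      exact_mod_cast Finset.card_le_card (Finset.inter_subset_left)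
    have ht2d : (t : ℝ) ≤ 2 * d := htdeg.trans (hdeg c₀)
    have htx : (t : ℝ) * (η / ℓ) ≤ 1 / 2 := by
      calc (t : ℝ) * (η / ℓ) ≤ (2 * d) * (1 / (4 * d)) :=
            mul_le_mul ht2d hxd hx0 (by positivity)
        _ = 1 / 2 := by field_simp; ring
    have hBer : 1 - (t : ℝ) * (η / ℓ) ≤ (1 - η / ℓ) ^ t := by
      have h := one_add_mul_le_pow (show (-2 : ℝ) ≤ -(η / ℓ) by linarith) t
      calc 1 - (t : ℝ) * (η / ℓ) = 1 + (t : ℝ) * (-(η / ℓ)) := by ring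
        _ ≤ (1 + -(η / ℓ)) ^ t := h
        _ = (1 - η / ℓ) ^ t := by rw [← sub_eq_add_neg]
    have hpowpos : (0 : ℝ) < (1 - η / ℓ) ^ t := pow_pos hb t
    have hst : (s : ℝ) + (t : ℝ) = (H.degree c₀ : ℝ) + (H.degree c₁ : ℝ) := by
      have := Finset.card_union_add_card_inter (H.neighborFinset c₀) (H.neighborFinset c₁)
      rw [SimpleGraph.card_neighborFinset_eq_degree, SimpleGraph.card_neighborFinset_eq_degree]
        at this
      exact_mod_cast this
    have heq : (1 - η / ℓ) ^ s * (WCPaux.q H η ℓ d c₀ * WCPaux.q H η ℓ d c₁) =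
        ((1 - η / ℓ) ^ (2 * d)) ^ (2 : ℕ) / (1 - η / ℓ) ^ t := by
      unfold WCPaux.q
      rw [div_mul_div_comm]
      rw [show (1 - η / ℓ) ^ ((H.degree c₀ : ℝ)) * (1 - η / ℓ) ^ ((H.degree c₁ : ℝ)) =
          (1 - η / ℓ) ^ ((s : ℝ) + (t : ℝ)) by rw [← Real.rpow_add hb, hst]]
      rw [Real.rpow_add hb, Real.rpow_natCast, Real.rpow_natCast]
      have h1 : ((1 - η / ℓ) ^ s : ℝ) ≠ 0 := (pow_pos hb s).ne'
      have h2 : ((1 - η / ℓ) ^ t : ℝ) ≠ 0 := hpowpos.ne'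
      have cancel : ∀ A B T : ℝ, B ≠ 0 → T ≠ 0 → B * (A * A / (B * T)) = A ^ (2 : ℕ) / T := by
        intro A B T hB hT
        field_simp
      exact cancel _ _ _ h1 h2
    rw [heq, div_le_iff₀ hpowpos]
    have h1 : 1 ≤ (1 + 2 * (η / ℓ) * (t : ℝ)) * ((1 - η / ℓ) ^ t) := by
      have htx0 : 0 ≤ (t : ℝ) * (η / ℓ) := mul_nonneg (Nat.cast_nonneg t) hx0
      nlinarith [hBer, htx, htx0]
    nlinarith [mul_le_mul_of_nonneg_left h1 hK2]
  -- summing up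
  have hdouble : ∀ g : C × C → ℝ, ∑ p ∈ cand, g p =
      ∑ c₀ ∈ L v, ∑ c₁ ∈ H.neighborFinset c₀, g (c₀, c₁) := by
    intro g
    rw [hcand, Finset.sum_filter, Finset.sum_product]
    refine Finset.sum_congr rfl fun c₀ _ => ?_
    rw [SimpleGraph.neighborFinset_eq_filter, Finset.sum_filter]
  have hmain : wcpExp H η ℓ d (fun ω => ((EK H L v ω).card : ℝ)) ≤
      ((1 - η / ℓ) ^ (2 * d)) ^ (2 : ℕ) * (∑ c ∈ L v, (H.degree c : ℝ)) * (1 + η * β) := by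
    rw [hexpEq, hdouble]
    have hinner : ∀ c₀ ∈ L v, ∑ c₁ ∈ H.neighborFinset c₀,
        wcpPr H η ℓ d (fun ω => c₀ ∈ Kset H ω ∧ c₁ ∈ Kset H ω) ≤
        ((1 - η / ℓ) ^ (2 * d)) ^ (2 : ℕ) * ((H.degree c₀ : ℝ) * (1 + η * β)) := by
      intro c₀ _
      set T : ℝ := ∑ c₁ ∈ H.neighborFinset c₀,
        ((H.neighborFinset c₀ ∩ H.neighborFinset c₁).card : ℝ) with hT
      have hT2k : T ≤ 2 * k := by
        have hc := WCPaux.sum_codeg H c₀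
        have : T = (pairsWithin H (H.neighborFinset c₀) : ℝ) := by
          rw [hT, ← hc]
          push_cast
          rfl
        rw [this]
        exact hsparse c₀
      have hTd : T ≤ (H.degree c₀ : ℝ) * (H.degree c₀ : ℝ) := by
        rw [hT]
        calc ∑ c₁ ∈ H.neighborFinset c₀,
              ((H.neighborFinset c₀ ∩ H.neighborFinset c₁).card : ℝ)
            ≤ ∑ _c₁ ∈ H.neighborFinset c₀, (H.degree c₀ : ℝ) := by
              refine Finset.sum_le_sum fun c₁ _ => ?_
              exact_mod_cast Finset.card_le_card (Finset.inter_subset_left)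
          _ = (H.degree c₀ : ℝ) * (H.degree c₀ : ℝ) := by
              rw [Finset.sum_const, SimpleGraph.card_neighborFinset_eq_degree,
                nsmul_eq_mul]
      have hTs : T ≤ Real.sqrt (2 * k) * (H.degree c₀ : ℝ) := by
        rcases le_or_gt ((H.degree c₀ : ℝ)) (Real.sqrt (2 * k)) with h | h
        · exact hTd.trans (mul_le_mul_of_nonneg_right h (Nat.cast_nonneg _))
        · calc T ≤ 2 * k := hT2k
            _ = Real.sqrt (2 * k) * Real.sqrt (2 * k) :=
                (Real.mul_self_sqrt (by linarith)).symm
            _ ≤ Real.sqrt (2 * k) * (H.degree c₀ : ℝ) :=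
                mul_le_mul_of_nonneg_left h.le (Real.sqrt_nonneg _)
      calc ∑ c₁ ∈ H.neighborFinset c₀,
            wcpPr H η ℓ d (fun ω => c₀ ∈ Kset H ω ∧ c₁ ∈ Kset H ω)
          ≤ ∑ c₁ ∈ H.neighborFinset c₀, ((1 - η / ℓ) ^ (2 * d)) ^ (2 : ℕ) * (1 + 2 * (η / ℓ) *
              ((H.neighborFinset c₀ ∩ H.neighborFinset c₁).card : ℝ)) :=
            Finset.sum_le_sum fun c₁ hc₁ =>
              hpair (c₀, c₁) (by simpa [SimpleGraph.mem_neighborFinset] using hc₁)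
        _ = ((1 - η / ℓ) ^ (2 * d)) ^ (2 : ℕ) * ((H.degree c₀ : ℝ) + 2 * (η / ℓ) * T) := by
            rw [← Finset.mul_sum]
            congr 1
            rw [Finset.sum_add_distrib, Finset.sum_const,
              SimpleGraph.card_neighborFinset_eq_degree, nsmul_eq_mul, mul_one, ← Finset.mul_sum]
        _ ≤ ((1 - η / ℓ) ^ (2 * d)) ^ (2 : ℕ) * ((H.degree c₀ : ℝ) +
              (η * β) * (H.degree c₀ : ℝ)) := by
            refine mul_le_mul_of_nonneg_left ?_ hK2
            have h2 : 2 * (η / ℓ) * T ≤ (η * β) * (H.degree c₀ : ℝ) := by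
              calc 2 * (η / ℓ) * T ≤ 2 * (η / ℓ) * (Real.sqrt (2 * k) * (H.degree c₀ : ℝ)) := by
                    refine mul_le_mul_of_nonneg_left hTs (by positivity)
                _ = (2 * (η / ℓ) * Real.sqrt (2 * k)) * (H.degree c₀ : ℝ) := by ring
                _ ≤ (η * β) * (H.degree c₀ : ℝ) :=
                    mul_le_mul_of_nonneg_right hkey (Nat.cast_nonneg _)
            linarith
        _ = ((1 - η / ℓ) ^ (2 * d)) ^ (2 : ℕ) * ((H.degree c₀ : ℝ) * (1 + η * β)) := by ring
    calc ∑ c₀ ∈ L v, ∑ c₁ ∈ H.neighborFinset c₀,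
          wcpPr H η ℓ d (fun ω => c₀ ∈ Kset H ω ∧ c₁ ∈ Kset H ω)
        ≤ ∑ c₀ ∈ L v, ((1 - η / ℓ) ^ (2 * d)) ^ (2 : ℕ) * ((H.degree c₀ : ℝ) * (1 + η * β)) :=
          Finset.sum_le_sum hinner
      _ = ((1 - η / ℓ) ^ (2 * d)) ^ (2 : ℕ) * (∑ c ∈ L v, (H.degree c : ℝ)) * (1 + η * β) := by
          rw [← Finset.mul_sum, ← Finset.sum_mul]
          ring
  have hL : ((L v).card : ℝ) * ((1 / ((L v).card : ℝ)) * ∑ c ∈ L v, (H.degree c : ℝ)) =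
      ∑ c ∈ L v, (H.degree c : ℝ) := by
    rcases Finset.eq_empty_or_nonempty (L v) with h | h
    · simp [h]
    · have h0 : ((L v).card : ℝ) ≠ 0 := by
        exact_mod_cast (Finset.card_pos.mpr h).ne'
      field_simp
  calc wcpExp H η ℓ d (fun ω => ((EK H L v ω).card : ℝ))
      ≤ ((1 - η / ℓ) ^ (2 * d)) ^ (2 : ℕ) * (∑ c ∈ L v, (H.degree c : ℝ)) * (1 + η * β) :=
        hmain
    _ = ((1 - η / ℓ) ^ (2 * d)) ^ (2 : ℕ) * ((L v).card : ℝ) *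
          ((1 / ((L v).card : ℝ)) * ∑ c ∈ L v, (H.degree c : ℝ)) * (1 + η * β) := by
        conv_rhs => rw [mul_assoc (((1 - η / ℓ) ^ (2 * d)) ^ (2 : ℕ)), hL]
end
end

section
/- Under the assumptions (A1)–(A8) of the iteration lemma (with parameters γ ∈ (0,1), d sufficiently large, 1 ≤ k ≤ d^{2γ}, 4ηd < ℓ < 100d, 1/log⁵(d) < η < 1/log(d/√k), d^{−γ(1−√γ)/200} ≤ β ≤ 1/10, H k-locally-sparse, Δ(H) ≤ 2d, (1−β)ℓ/2 ≤ |L(v)| ≤ (1+β)ℓ, avg-deg_ℋ(v) ≤ (2 − (1−β)ℓ/|L(v)|)d), run the Wasteful Coloring Procedure randomness, define keep := (1 − η/ℓ)^{2d} and uncolor := (1 − η/ℓ)^{keep·ℓ/2}, and let E_K(v) := {cc' ∈ E(H) : c ∈ L(v), c' ∈ N_H(c), c, c' ∈ K} and E_U(v) := {cc' ∈ E(H) : c ∈ L(v), c' ∈ N_H(c), c' ∈ U}. Then for each vertex v ∈ V(G), E[|E_K(v) ∩ E_U(v)|] ≤ uncolor · (1 + 4ηβ) · E[|E_K(v)|].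 -/
open Finset

attribute [local instance] Classical.propDecidable

noncomputable section

namespace Stmt13

variable {C : Type} [Fintype C] (H : SimpleGraph C) (η ℓ d : ℝ)

def rr (x : C) : ℝ := (1 - η / ℓ) ^ (2 * d) / (1 - η / ℓ) ^ ((H.degree x : ℝ))

def wloc (x : C) (b : Bool × Bool) : ℝ := bern (η / ℓ) b.1 * bern (rr H η ℓ d x) b.2

lemma wcpWeight_eq (ω : C → Bool × Bool) :
    wcpWeight H η ℓ d ω = ∏ x, wloc H η ℓ d x (ω x) := rfl

lemma wcpExp_prod (g : C → Bool × Bool → ℝ) :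
    wcpExp H η ℓ d (fun ω => ∏ x, g x (ω x)) =
      ∏ x, ∑ b : Bool × Bool, wloc H η ℓ d x b * g x b := by
  rw [Fintype.prod_sum (fun x b => wloc H η ℓ d x b * g x b)]
  refine Finset.sum_congr rfl fun ω _ => ?_
  rw [wcpWeight_eq, ← Finset.prod_mul_distrib]

lemma wcpExp_sum {ι : Type} (T : Finset ι) (f : ι → (C → Bool × Bool) → ℝ) :
    wcpExp H η ℓ d (fun ω => ∑ t ∈ T, f t ω) = ∑ t ∈ T, wcpExp H η ℓ d (f t) := by
  unfold wcpExp
  simp_rw [Finset.mul_sum]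
  exact Finset.sum_comm

lemma wcpExp_const_mul (r : ℝ) (f : (C → Bool × Bool) → ℝ) :
    wcpExp H η ℓ d (fun ω => r * f ω) = r * wcpExp H η ℓ d f := by
  unfold wcpExp
  rw [Finset.mul_sum]
  exact Finset.sum_congr rfl fun ω _ => by ring

lemma wcpExp_congr {f g : (C → Bool × Bool) → ℝ} (h : ∀ ω, f ω = g ω) :
    wcpExp H η ℓ d f = wcpExp H η ℓ d g := by
  unfold wcpExp; exact Finset.sum_congr rfl fun ω _ => by rw [h]

section sums

lemma sum_wloc (x : C) : ∑ b : Bool × Bool, wloc H η ℓ d x b = 1 := by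
  simp [wloc, bern, Fintype.sum_prod_type]; try ring

lemma sum_wloc_e2 (x : C) :
    ∑ b : Bool × Bool, wloc H η ℓ d x b * (if b.2 then 1 else 0) = rr H η ℓ d x := by
  simp [wloc, bern, Fintype.sum_prod_type]; try ring

lemma sum_wloc_na (x : C) :
    ∑ b : Bool × Bool, wloc H η ℓ d x b * (if b.1 then 0 else 1) = 1 - η / ℓ := by
  simp [wloc, bern, Fintype.sum_prod_type]; try ring

lemma sum_wloc_ae (x : C) :
    ∑ b : Bool × Bool, wloc H η ℓ d x b * (if b.1 ∧ b.2 then 1 else 0) =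
      (η / ℓ) * rr H η ℓ d x := by
  simp [wloc, bern, Fintype.sum_prod_type]; try ring

end sums

/-- indicator that `c` and `c'` are kept (eq-coins true, `F = N(c) ∪ N(c')` inactive). -/
def indE (c c' : C) (F : Finset C) (ω : C → Bool × Bool) : ℝ :=
  (if (ω c).2 then 1 else 0) * ((if (ω c').2 then 1 else 0) *
    ∏ y ∈ F, (if (ω y).1 then (0:ℝ) else 1))

/-- indicator that `a` is activated, eq-true, and `N(a) \ F` inactive. -/
def chi (F : Finset C) (a : C) (ω : C → Bool × Bool) : ℝ :=
  (if (ω a).1 ∧ (ω a).2 then (1:ℝ) else 0) *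
    ∏ y ∈ H.neighborFinset a \ F, (if (ω y).1 then (0:ℝ) else 1)

def mu (F : Finset C) (a : C) : ℝ :=
  ((η / ℓ) * rr H η ℓ d a) * (1 - η / ℓ) ^ ((H.neighborFinset a \ F).card)

def gfun (c c' : C) (F W NW : Finset C) (x : C) (b : Bool × Bool) : ℝ :=
  ((if x = c then (if b.2 then 1 else 0) else 1) *
   ((if x = c' then (if b.2 then 1 else 0) else 1) *
    (if x ∈ F then (if b.1 then (0:ℝ) else 1) else 1))) *
  ((if x ∈ W then (if b.1 ∧ b.2 then (1:ℝ) else 0) else 1) *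
   (if x ∈ NW then (if b.1 then (0:ℝ) else 1) else 1))

section core

variable (c c' : C) (F S : Finset C)
  (hcS : ∀ a ∈ S, a ≠ c) (hc'S : ∀ a ∈ S, a ≠ c')
  (haF : ∀ a ∈ S, a ∉ F)
  (hcNa : ∀ a ∈ S, c ∉ H.neighborFinset a) (hc'Na : ∀ a ∈ S, c' ∉ H.neighborFinset a)
  (hanb : ∀ a ∈ S, ∀ b ∈ S, a ∉ H.neighborFinset b)
  (hdisj : ∀ a ∈ S, ∀ b ∈ S, a ≠ b →
    Disjoint (H.neighborFinset a \ F) (H.neighborFinset b \ F))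

include hdisj in
lemma pointwise_prod {W : Finset C} (hWS : W ⊆ S) (ω : C → Bool × Bool) :
    indE c c' F ω * ∏ a ∈ W, chi H F a ω =
      ∏ x, gfun c c' F W (W.biUnion fun a => H.neighborFinset a \ F) x (ω x) := by
  unfold gfun
  rw [Finset.prod_mul_distrib, Finset.prod_mul_distrib, Finset.prod_mul_distrib,
    Finset.prod_mul_distrib]
  rw [Finset.prod_ite_eq' univ c (fun x => if (ω x).2 then (1:ℝ) else 0)]
  rw [Finset.prod_ite_eq' univ c' (fun x => if (ω x).2 then (1:ℝ) else 0)]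
  rw [Fintype.prod_ite_mem F (fun y => if (ω y).1 then (0:ℝ) else 1)]
  rw [Fintype.prod_ite_mem W (fun x => if (ω x).1 ∧ (ω x).2 then (1:ℝ) else 0)]
  rw [Fintype.prod_ite_mem (W.biUnion fun a => H.neighborFinset a \ F)
    (fun y => if (ω y).1 then (0:ℝ) else 1)]
  rw [Finset.prod_biUnion (fun a ha b hb hab => hdisj a (hWS ha) b (hWS hb) hab)]
  unfold indE chi
  rw [Finset.prod_mul_distrib]
  simp only [mem_univ, if_true]
  try ring

include hdisj in
lemma card_NW {W : Finset C} (hWS : W ⊆ S) :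
    (W.biUnion fun a => H.neighborFinset a \ F).card =
      ∑ a ∈ W, (H.neighborFinset a \ F).card :=
  Finset.card_biUnion (fun a ha b hb hab => hdisj a (hWS ha) b (hWS hb) hab)

include hcS hc'S haF hcNa hc'Na hanb in
lemma local_split {W : Finset C} (hWS : W ⊆ S) (x : C) :
    ∑ b : Bool × Bool, wloc H η ℓ d x b *
        gfun c c' F W (W.biUnion fun a => H.neighborFinset a \ F) x b =
      (∑ b : Bool × Bool, wloc H η ℓ d x b * gfun c c' F ∅ ∅ x b) *
        ((if x ∈ W then (η / ℓ) * rr H η ℓ d x else 1) *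
         (if x ∈ (W.biUnion fun a => H.neighborFinset a \ F) then 1 - η / ℓ else 1)) := by
  set NW := W.biUnion fun a => H.neighborFinset a \ F with hNW
  have hbase : ∀ (hxc : x ≠ c) (hxc' : x ≠ c') (hxF : x ∉ F),
      (∑ b : Bool × Bool, wloc H η ℓ d x b * gfun c c' F ∅ ∅ x b) = 1 := by
    intro hxc hxc' hxF
    have hg : ∀ b : Bool × Bool, gfun c c' F ∅ ∅ x b = 1 := by
      intro b; simp [gfun, hxc, hxc', hxF]
    simp only [hg, mul_one]
    exact sum_wloc H η ℓ d x
  by_cases hW : x ∈ W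
  · have hxS := hWS hW
    have hxc : x ≠ c := hcS x hxS
    have hxc' : x ≠ c' := hc'S x hxS
    have hxF : x ∉ F := haF x hxS
    have hxNW : x ∉ NW := by
      rw [hNW]
      simp only [Finset.mem_biUnion]
      rintro ⟨b, hb, hmem⟩
      exact hanb x hxS b (hWS hb) (Finset.mem_sdiff.1 hmem).1
    have hg : ∀ b : Bool × Bool, gfun c c' F W NW x b =
        (if b.1 ∧ b.2 then (1:ℝ) else 0) := by
      intro b; simp [gfun, hxc, hxc', hxF, hW, hxNW]
    simp only [hg, if_pos hW, if_neg hxNW]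
    rw [sum_wloc_ae, hbase hxc hxc' hxF]
    ring
  · by_cases hNWx : x ∈ NW
    · have hx' : ∃ a ∈ W, x ∈ H.neighborFinset a \ F := by
        rw [hNW] at hNWx; exact Finset.mem_biUnion.1 hNWx
      obtain ⟨a, haW, hxa⟩ := hx'
      have haS := hWS haW
      have hxNa := (Finset.mem_sdiff.1 hxa).1
      have hxF : x ∉ F := (Finset.mem_sdiff.1 hxa).2
      have hxc : x ≠ c := fun h => hcNa a haS (h ▸ hxNa)
      have hxc' : x ≠ c' := fun h => hc'Na a haS (h ▸ hxNa)
      have hg : ∀ b : Bool × Bool, gfun c c' F W NW x b =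
          (if b.1 then (0:ℝ) else 1) := by
        intro b; simp [gfun, hxc, hxc', hxF, hW, hNWx]
      simp only [hg, if_pos hNWx, if_neg hW]
      rw [sum_wloc_na, hbase hxc hxc' hxF]
      ring
    · have hg : ∀ b : Bool × Bool, gfun c c' F W NW x b = gfun c c' F ∅ ∅ x b := by
        intro b
        simp only [gfun, if_neg hW, if_neg hNWx, if_neg (Finset.notMem_empty x)]
      simp only [hg, if_neg hW, if_neg hNWx]
      ring

include hcS hc'S haF hcNa hc'Na hanb hdisj in
lemma stepA {W : Finset C} (hWS : W ⊆ S) :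
    wcpExp H η ℓ d (fun ω => indE c c' F ω * ∏ a ∈ W, chi H F a ω) =
      wcpExp H η ℓ d (indE c c' F) * ∏ a ∈ W, mu H η ℓ d F a := by
  set NW := W.biUnion fun a => H.neighborFinset a \ F with hNW
  have hPE : wcpExp H η ℓ d (indE c c' F) =
      ∏ x, ∑ b : Bool × Bool, wloc H η ℓ d x b * gfun c c' F ∅ ∅ x b := by
    rw [← wcpExp_prod]
    refine wcpExp_congr H η ℓ d fun ω => ?_
    have := pointwise_prod H c c' F S hdisj (Finset.empty_subset S) ω
    simpa using this
  rw [wcpExp_congr H η ℓ d (pointwise_prod H c c' F S hdisj hWS)]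
  rw [wcpExp_prod]
  have hsplit := local_split H η ℓ d c c' F S hcS hc'S haF hcNa hc'Na hanb hWS
  rw [Finset.prod_congr rfl (fun x _ => hsplit x)]
  rw [Finset.prod_mul_distrib, Finset.prod_mul_distrib]
  rw [Fintype.prod_ite_mem W (fun x => (η / ℓ) * rr H η ℓ d x)]
  rw [Fintype.prod_ite_mem NW (fun _ => 1 - η / ℓ)]
  rw [Finset.prod_const]
  rw [card_NW H F S hdisj hWS]
  rw [← Finset.prod_pow_eq_pow_sum]
  rw [hPE]
  congr 1
  rw [← Finset.prod_mul_distrib]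
  exact Finset.prod_congr rfl fun a _ => by simp [mu]

include hcS hc'S haF hcNa hc'Na hanb hdisj in
lemma stepB :
    wcpExp H η ℓ d (fun ω => indE c c' F ω * ∏ a ∈ S, (1 - chi H F a ω)) =
      wcpExp H η ℓ d (indE c c' F) * ∏ a ∈ S, (1 - mu H η ℓ d F a) := by
  have hexp : ∀ ω, indE c c' F ω * ∏ a ∈ S, (1 - chi H F a ω) =
      ∑ W ∈ S.powerset, indE c c' F ω * ((∏ a ∈ W, -chi H F a ω) * ∏ a ∈ S \ W, (1:ℝ)) := by
    intro ω
    rw [← Finset.mul_sum, ← Finset.prod_add]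
    congr 1
    exact Finset.prod_congr rfl fun a _ => by ring
  rw [wcpExp_congr H η ℓ d hexp, wcpExp_sum]
  have hterm : ∀ W ∈ S.powerset,
      wcpExp H η ℓ d (fun ω => indE c c' F ω * ((∏ a ∈ W, -chi H F a ω) * ∏ a ∈ S \ W, (1:ℝ))) =
        wcpExp H η ℓ d (indE c c' F) * ((∏ a ∈ W, -mu H η ℓ d F a) * ∏ a ∈ S \ W, (1:ℝ)) := by
    intro W hW
    have hWS := Finset.mem_powerset.1 hW
    have h1 : ∀ ω, indE c c' F ω * ((∏ a ∈ W, -chi H F a ω) * ∏ a ∈ S \ W, (1:ℝ)) =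
        ((-1:ℝ)^W.card) * (indE c c' F ω * ∏ a ∈ W, chi H F a ω) := by
      intro ω
      rw [Finset.prod_const_one]
      have : ∏ a ∈ W, -chi H F a ω = (-1:ℝ)^W.card * ∏ a ∈ W, chi H F a ω := by
        rw [← Finset.prod_const (-1:ℝ), ← Finset.prod_mul_distrib]
        exact Finset.prod_congr rfl fun a _ => by ring
      rw [this]; ring
    rw [wcpExp_congr H η ℓ d h1, wcpExp_const_mul]
    rw [stepA H η ℓ d c c' F S hcS hc'S haF hcNa hc'Na hanb hdisj hWS]
    have : ∏ a ∈ W, -mu H η ℓ d F a = (-1:ℝ)^W.card * ∏ a ∈ W, mu H η ℓ d F a := by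
      rw [← Finset.prod_const (-1:ℝ), ← Finset.prod_mul_distrib]
      exact Finset.prod_congr rfl fun a _ => by ring
    rw [this, Finset.prod_const_one]
    ring
  rw [Finset.sum_congr rfl hterm]
  rw [← Finset.mul_sum, ← Finset.prod_add]
  congr 1
  exact Finset.prod_congr rfl fun a _ => by ring

end core


lemma bern_nonneg {q : ℝ} (h0 : 0 ≤ q) (h1 : q ≤ 1) (b : Bool) : 0 ≤ bern q b := by
  cases b <;> simp [bern] <;> linarith

lemma wcpWeight_nonneg (hp0 : 0 ≤ η / ℓ) (hp1 : η / ℓ ≤ 1)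
    (hr0 : ∀ x : C, 0 ≤ rr H η ℓ d x) (hr1 : ∀ x : C, rr H η ℓ d x ≤ 1)
    (ω : C → Bool × Bool) : 0 ≤ wcpWeight H η ℓ d ω := by
  rw [wcpWeight_eq]
  exact Finset.prod_nonneg fun x _ =>
    mul_nonneg (bern_nonneg hp0 hp1 _) (bern_nonneg (hr0 x) (hr1 x) _)

lemma wcpExp_mono (hw : ∀ ω, 0 ≤ wcpWeight H η ℓ d ω) {f g : (C → Bool × Bool) → ℝ}
    (h : ∀ ω, f ω ≤ g ω) : wcpExp H η ℓ d f ≤ wcpExp H η ℓ d g :=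
  Finset.sum_le_sum fun ω _ => mul_le_mul_of_nonneg_left (h ω) (hw ω)

lemma wcpExp_nonneg (hw : ∀ ω, 0 ≤ wcpWeight H η ℓ d ω) {f : (C → Bool × Bool) → ℝ}
    (h : ∀ ω, 0 ≤ f ω) : 0 ≤ wcpExp H η ℓ d f :=
  Finset.sum_nonneg fun ω _ => mul_nonneg (hw ω) (h ω)


end Stmt13


namespace Stmt13A

lemma exp_le_one_add_two_mul {z : ℝ} (hz0 : 0 ≤ z) (hz1 : z ≤ 1/2) : Real.exp z ≤ 1 + 2*z := by
  have h2 : 0 < 1 - z := by linarith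
  have h1 : 1 - z ≤ (Real.exp z)⁻¹ := by
    rw [← Real.exp_neg]; have := Real.add_one_le_exp (-z); linarith
  have h3 : Real.exp z ≤ (1-z)⁻¹ := by
    calc Real.exp z = ((Real.exp z)⁻¹)⁻¹ := (inv_inv _).symm
      _ ≤ (1-z)⁻¹ := inv_anti₀ h2 h1
  have h4 : (1-z)⁻¹ ≤ 1+2*z := by
    rw [inv_eq_one_div, div_le_iff₀ h2]; nlinarith
  linarith

set_option maxHeartbeats 1000000 in
lemma analytic_bound (p k β ℓ η : ℝ) (m : ℕ)
    (hp0 : 0 < p) (hp4 : p ≤ 1/4) (hk0 : 0 < k) (hk1 : k ≤ 1)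
    (hβ0 : 0 < β) (hη0 : 0 < η) (hη1 : η ≤ 1) (hβη : η * β ≤ 1/2)
    (hpl : p * ℓ = η) (hl0 : 0 < ℓ)
    (hm : (1-β)*ℓ/2 - 1 ≤ (m:ℝ)) (hlβ : 4 ≤ ℓ*β) :
    (1 - p*k)^m ≤ (1-p)^(k*ℓ/2) * (1+4*η*β) := by
  have h1p : 0 < 1 - p := by linarith
  have hpk1 : p * k ≤ 1/4 := by nlinarith
  have hpk0 : 0 < p * k := mul_pos hp0 hk0
  have step1 : (1 - p*k)^m ≤ Real.exp (-(p*k) * m) := by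
    have h : 1 - p*k ≤ Real.exp (-(p*k)) := by
      have := Real.add_one_le_exp (-(p*k)); linarith
    calc (1 - p*k)^m ≤ (Real.exp (-(p*k)))^m := pow_le_pow_left₀ (by linarith) h m
      _ = Real.exp (-(p*k) * m) := by rw [← Real.exp_nat_mul, mul_comm]
  have hlog : -Real.log (1-p) ≤ p + (4/3)*p^2 := by
    set t := p / (1-p) with ht
    have ht0 : 0 ≤ t := div_nonneg hp0.le h1p.le
    have h1t : 1 + t = (1-p)⁻¹ := by field_simp [ht]; rw [ht, add_mul, div_mul_cancel₀ _ h1p.ne']; ring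
    have hexp : Real.exp (-t) ≤ 1 - p := by
      have h4 : 1 + t ≤ Real.exp t := by have := Real.add_one_le_exp t; linarith
      have h5 : Real.exp (-t) ≤ (1+t)⁻¹ := by
        rw [Real.exp_neg]
        exact inv_anti₀ (by linarith) h4
      calc Real.exp (-t) ≤ (1+t)⁻¹ := h5
        _ = 1 - p := by rw [h1t, inv_inv]
    have h6 : -t ≤ Real.log (1-p) := (Real.le_log_iff_exp_le h1p).2 hexp
    have h7 : t ≤ p + (4/3)*p^2 := by
      rw [ht, div_le_iff₀ h1p]; nlinarith
    linarith
  have hkey : -(p*k) * m ≤ k*ℓ/2 * Real.log (1-p) + η*β := by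
    obtain ⟨lg, hlg⟩ : ∃ x : ℝ, x = Real.log (1-p) := ⟨_, rfl⟩
    obtain ⟨B, hB⟩ : ∃ x : ℝ, x = (ℓ/2) * (p + (4/3)*p^2) - p * (m:ℝ) := ⟨_, rfl⟩
    obtain ⟨B', hB'⟩ : ∃ x : ℝ, x = p*(β*ℓ/2) + p + (2/3)*ℓ*p^2 := ⟨_, rfl⟩
    rw [← hlg]
    have hlog' : k*ℓ/2 * (-lg) ≤ k*ℓ/2 * (p + (4/3)*p^2) := by
      rw [hlg]; exact mul_le_mul_of_nonneg_left hlog (by positivity)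
    have hBB : -(p*k)*m - k*ℓ/2 * lg ≤ k * B := by
      have hkb : k * B = k*ℓ/2 * (p + (4/3)*p^2) - k * (p * m) := by rw [hB]; ring
      rw [hkb]; nlinarith [hlog']
    have hB'0 : 0 ≤ B' := by
      rw [hB']
      nlinarith [mul_pos (mul_pos hp0 hβ0) hl0, mul_pos hl0 (mul_pos hp0 hp0)]
    have hBle : B ≤ B' := by
      have hmm := mul_le_mul_of_nonneg_left hm hp0.le
      rw [hB, hB']; nlinarith [hmm, sq_nonneg p]
    have hkB : k * B ≤ B' := by
      rcases le_or_gt B 0 with h | h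
      · nlinarith [mul_nonneg hk0.le (neg_nonneg.2 h)]
      · nlinarith [mul_le_mul_of_nonneg_right hk1 h.le]
    have hpβ : p ≤ η*β/4 := by
      have h2 : p * 4 ≤ p * (ℓ*β) := mul_le_mul_of_nonneg_left hlβ hp0.le
      nlinarith [h2]
    have hB'le : B' ≤ η*β := by
      have h1 : p*(β*ℓ/2) = η*β/2 := by rw [← hpl]; ring
      have h2 : (2/3)*ℓ*p^2 = (2/3)*η*p := by rw [← hpl]; ring
      have h3 : (2/3)*η*p ≤ (2/3)*p := by nlinarith
      rw [hB', h1, h2]; linarith [mul_pos hη0 hβ0, hpβ, h3]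
    linarith [hBB, hkB, hB'le]
  have hexpz : Real.exp (η*β) ≤ 1 + 4*η*β := by
    have h := exp_le_one_add_two_mul (z := η*β) (le_of_lt (mul_pos hη0 hβ0)) hβη
    nlinarith [mul_pos hη0 hβ0]
  have hrw : (1-p)^(k*ℓ/2) = Real.exp (Real.log (1-p) * (k*ℓ/2)) :=
    Real.rpow_def_of_pos h1p _
  calc (1 - p*k)^m ≤ Real.exp (-(p*k) * m) := step1
    _ ≤ Real.exp (k*ℓ/2 * Real.log (1-p) + η*β) := Real.exp_le_exp.2 hkey
    _ = Real.exp (Real.log (1-p) * (k*ℓ/2)) * Real.exp (η*β) := by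
        rw [← Real.exp_add]; ring_nf
    _ ≤ (1-p)^(k*ℓ/2) * (1+4*η*β) := by
        rw [hrw]
        exact mul_le_mul_of_nonneg_left hexpz (Real.exp_nonneg _)

end Stmt13A


namespace Stmt13N

set_option maxHeartbeats 1000000 in
lemma numeric_facts (γ η d ℓ k : ℝ) (hγ0 : 0 < γ) (hγ1 : γ < 1)
    (hd : Real.exp (200/(1-γ)) ≤ d) (hk1 : 1 ≤ k) (hk2 : k ≤ d^(2*γ))
    (hl1 : 4*η*d < ℓ) (hl2 : ℓ < 100*d)
    (he1 : 1/(Real.log d)^5 < η) (he2 : η < 1/Real.log (d/Real.sqrt k)) :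
    0 < η ∧ η ≤ 1 ∧ 0 < ℓ ∧ 0 < η/ℓ ∧ η/ℓ ≤ 1/4 ∧ 0 < d ∧
      (∀ β : ℝ, d ^ (-(γ*(1-Real.sqrt γ))/200) ≤ β → 4 ≤ ℓ*β) := by
  have h1γ : 0 < 1 - γ := by linarith
  have hd0 : 0 < d := lt_of_lt_of_le (Real.exp_pos _) hd
  have hlogd : 200 / (1 - γ) ≤ Real.log d := by
    rw [← Real.log_exp (200 / (1-γ))]
    exact Real.log_le_log (Real.exp_pos _) hd
  have h200 : (200:ℝ) ≤ 200 / (1-γ) := by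
    rw [le_div_iff₀ h1γ]; nlinarith
  have hlog200 : 200 ≤ Real.log d := le_trans h200 hlogd
  have hlogpos : 0 < Real.log d := by linarith
  have hd1 : 1 < d := by
    by_contra h
    push_neg at h
    have := Real.log_nonpos (by linarith) h
    linarith
  have h5 : 0 < (Real.log d)^5 := pow_pos hlogpos 5
  have hη0 : 0 < η := lt_trans (div_pos one_pos h5) he1
  -- η small
  have hk0 : (0:ℝ) < k := lt_of_lt_of_le one_pos hk1
  have hsqk1 : 1 ≤ Real.sqrt k := by
    rw [show (1:ℝ) = Real.sqrt 1 by simp]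
    exact Real.sqrt_le_sqrt hk1
  have hsqk : Real.sqrt k ≤ d ^ γ := by
    have h1 : Real.sqrt k ≤ Real.sqrt (d ^ (2*γ)) := Real.sqrt_le_sqrt hk2
    have h2 : Real.sqrt (d ^ (2*γ)) = d ^ γ := by
      rw [Real.sqrt_eq_rpow, ← Real.rpow_mul hd0.le]
      congr 1; ring
    rwa [h2] at h1
  have hds : d ^ (1 - γ) ≤ d / Real.sqrt k := by
    have : d ^ (1-γ) = d / d ^ γ := by
      rw [Real.rpow_sub hd0, Real.rpow_one]
    rw [this]
    exact div_le_div_of_nonneg_left hd0.le (lt_of_lt_of_le one_pos hsqk1) hsqk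
  have hlogds : 200 ≤ Real.log (d / Real.sqrt k) := by
    have h1 : Real.log (d ^ (1-γ)) ≤ Real.log (d / Real.sqrt k) :=
      Real.log_le_log (Real.rpow_pos_of_pos hd0 _) hds
    rw [Real.log_rpow hd0] at h1
    have h2 : (1-γ) * (200/(1-γ)) ≤ (1-γ) * Real.log d :=
      mul_le_mul_of_nonneg_left hlogd h1γ.le
    have h3 : (1-γ) * (200/(1-γ)) = 200 := by field_simp
    linarith
  have hη200 : η < 1/200 := by
    have h1 : 1 / Real.log (d / Real.sqrt k) ≤ 1/200 :=
      one_div_le_one_div_of_le (by norm_num) hlogds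
    linarith
  have hη1 : η ≤ 1 := by linarith
  have hl0 : 0 < ℓ := by nlinarith [mul_pos hη0 hd0]
  have hp0 : 0 < η/ℓ := div_pos hη0 hl0
  have hp4 : η/ℓ ≤ 1/4 := by
    rw [div_le_iff₀ hl0]
    nlinarith [mul_pos hη0 hd0]
  refine ⟨hη0, hη1, hl0, hp0, hp4, hd0, ?_⟩
  -- the ℓβ ≥ 4 bound
  intro β hβ
  set e : ℝ := -(γ*(1-Real.sqrt γ))/200 with he
  have hsγ0 : 0 ≤ Real.sqrt γ := Real.sqrt_nonneg γ
  have hsγ1 : Real.sqrt γ ≤ 1 := by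
    rw [show (1:ℝ) = Real.sqrt 1 by simp]
    exact Real.sqrt_le_sqrt hγ1.le
  have he0 : -(1/200) ≤ e := by
    rw [he]; nlinarith
  have he1' : e ≤ 0 := by
    rw [he]
    have : 0 ≤ γ*(1-Real.sqrt γ) := by nlinarith
    linarith
  have hβ0 : 0 < β := lt_of_lt_of_le (Real.rpow_pos_of_pos hd0 _) hβ
  -- key : (log d)^5 ≤ d * d^e
  have hkey : (Real.log d)^5 ≤ d * d ^ e := by
    have s1 : Real.log d ≤ 10 * d ^ (1/10 : ℝ) := by
      have := Real.log_le_rpow_div hd0.le (by norm_num : (0:ℝ) < 1/10)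
      calc Real.log d ≤ d ^ (1/10:ℝ) / (1/10) := this
        _ = 10 * d ^ (1/10:ℝ) := by ring
    have s2 : (Real.log d)^5 ≤ 100000 * d ^ (1/2 : ℝ) := by
      have h1 : (Real.log d)^5 ≤ (10 * d ^ (1/10:ℝ))^5 :=
        pow_le_pow_left₀ hlogpos.le s1 5
      have h2 : (10 * d ^ (1/10:ℝ))^5 = 100000 * (d ^ (1/10:ℝ))^5 := by ring
      have h3 : (d ^ (1/10:ℝ))^(5:ℕ) = d ^ (1/2 : ℝ) := by
        rw [← Real.rpow_natCast (d ^ (1/10:ℝ)) 5, ← Real.rpow_mul hd0.le]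
        norm_num
      rw [h2, h3] at h1
      exact h1
    have s3 : (100000:ℝ) ≤ d ^ (2/5 : ℝ) := by
      have h1 : d ^ (2/5:ℝ) = Real.exp (Real.log d * (2/5)) := Real.rpow_def_of_pos hd0 _
      have h2 : (80:ℝ) ≤ Real.log d * (2/5) := by linarith
      have h3 : Real.exp 80 ≤ Real.exp (Real.log d * (2/5)) := Real.exp_le_exp.2 h2
      have h4 : (100000:ℝ) ≤ Real.exp 80 := by
        have h5 : (2:ℝ) ≤ Real.exp 1 := by
          have := Real.exp_one_gt_d9; linarith
        have h6 : (2:ℝ)^(80:ℕ) ≤ (Real.exp 1)^(80:ℕ) := pow_le_pow_left₀ (by norm_num) h5 80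
        have h7 : (Real.exp 1)^(80:ℕ) = Real.exp 80 := by
          rw [Real.exp_one_pow]; norm_num
        have h8 : (100000:ℝ) ≤ 2^(80:ℕ) := by norm_num
        rw [h7] at h6; linarith
      rw [h1]; linarith
    have s4 : 100000 * d ^ (1/2 : ℝ) ≤ d ^ (2/5:ℝ) * d ^ (1/2:ℝ) :=
      mul_le_mul_of_nonneg_right s3 (Real.rpow_nonneg hd0.le _)
    have s5 : d ^ (2/5:ℝ) * d ^ (1/2:ℝ) = d ^ (9/10 : ℝ) := by
      rw [← Real.rpow_add hd0]; norm_num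
    have s6 : d ^ (9/10:ℝ) ≤ d ^ (1 + e) :=
      Real.rpow_le_rpow_of_exponent_le hd1.le (by linarith)
    have s7 : d ^ (1 + e) = d * d ^ e := by
      rw [Real.rpow_add hd0, Real.rpow_one]
    calc (Real.log d)^5 ≤ 100000 * d ^ (1/2:ℝ) := s2
      _ ≤ d ^ (2/5:ℝ) * d ^ (1/2:ℝ) := s4
      _ = d ^ (9/10:ℝ) := s5
      _ ≤ d ^ (1+e) := s6
      _ = d * d ^ e := s7
  -- now conclude 4 ≤ ℓ * β
  have hde : 0 < d ^ e := Real.rpow_pos_of_pos hd0 _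
  have t1 : 4 * η * d * β ≤ ℓ * β := mul_le_mul_of_nonneg_right hl1.le hβ0.le
  have t2 : 1 / (Real.log d)^5 * (d * d ^ e) ≤ η * (d * β) := by
    have h1 : d * d ^ e ≤ d * β := mul_le_mul_of_nonneg_left hβ hd0.le
    have h2 : 0 ≤ d * d ^ e := le_of_lt (mul_pos hd0 hde)
    exact mul_le_mul he1.le h1 h2 hη0.le
  have t3 : (4:ℝ) ≤ 4 * (1 / (Real.log d)^5 * (d * d ^ e)) := by
    have h1 : 1 ≤ 1 / (Real.log d)^5 * (d * d ^ e) := by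
      rw [div_mul_eq_mul_div, one_mul, le_div_iff₀ h5]
      linarith
    linarith
  have t4 : 4 * (η * (d * β)) = 4 * η * d * β := by ring
  nlinarith [t1, t2, t3]

end Stmt13N



set_option maxHeartbeats 2000000 in
/-- In expectation, roughly an `uncolor` fraction of the kept edges are also uncolored:
`E[|E_K(v) ∩ E_U(v)|] ≤ uncolor·(1 + 4ηβ)·E[|E_K(v)|]`, under the assumptions (A1)–(A8) of
the iteration lemma. -/
theorem stmt13 (γ : ℝ) (hγ : γ ∈ Set.Ioo (0 : ℝ) 1) :
    ∃ dtilde : ℝ, ∀ η d ℓ k : ℝ,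
      dtilde ≤ d →
      1 ≤ k → k ≤ d ^ (2 * γ) →
      4 * η * d < ℓ → ℓ < 100 * d →
      1 / (Real.log d) ^ 5 < η → η < 1 / Real.log (d / Real.sqrt k) →
      ∀ (V C : Type) [Fintype V] [Fintype C] (G : SimpleGraph V) (H : SimpleGraph C)
        (L : V → Finset C) (β : ℝ),
        IsCorrespondenceCover G H L →
        d ^ (-(γ * (1 - Real.sqrt γ)) / 200) ≤ β → β ≤ 1 / 10 →
        LocallySparse H k →
        (∀ c : C, (H.degree c : ℝ) ≤ 2 * d) →
        (∀ v : V, (1 - β) * ℓ / 2 ≤ ((L v).card : ℝ) ∧ ((L v).card : ℝ) ≤ (1 + β) * ℓ) →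
        (∀ v : V, (1 / ((L v).card : ℝ)) * ∑ c ∈ L v, (H.degree c : ℝ)
            ≤ (2 - (1 - β) * ℓ / ((L v).card : ℝ)) * d) →
        ∀ v : V,
          (let keep : ℝ := (1 - η / ℓ) ^ (2 * d);
           let uncolor : ℝ := (1 - η / ℓ) ^ (keep * ℓ / 2);
           wcpExp H η ℓ d (fun ω => ((EK H L v ω ∩ EU H L v ω).card : ℝ)) ≤
             uncolor * (1 + 4 * η * β) *
               wcpExp H η ℓ d (fun ω => ((EK H L v ω).card : ℝ))) := by
  refine ⟨Real.exp (200/(1-γ)), ?_⟩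
  intro η d ℓ k hd hk1 hk2 hl1 hl2 he1 he2 V C _ _ G H L β cover hb1 hb2 hsparse hdeg hcard havg v
  obtain ⟨hη0, hη1, hl0, hp0, hp4, hd0, hlβfun⟩ :=
    Stmt13N.numeric_facts γ η d ℓ k hγ.1 hγ.2 hd hk1 hk2 hl1 hl2 he1 he2
  have h1p : 0 < 1 - η/ℓ := by linarith
  have h1ple : 1 - η/ℓ ≤ 1 := by linarith
  have hβ0 : 0 < β := lt_of_lt_of_le (Real.rpow_pos_of_pos hd0 _) hb1
  have hβη : η * β ≤ 1/2 := by nlinarith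
  have hlβ : 4 ≤ ℓ * β := hlβfun β hb1
  have hkeep0 : 0 < (1 - η/ℓ) ^ (2*d) := Real.rpow_pos_of_pos h1p _
  have hkeep1 : (1 - η/ℓ) ^ (2*d) ≤ 1 := Real.rpow_le_one h1p.le h1ple (by linarith)
  have hr0 : ∀ x : C, 0 ≤ Stmt13.rr H η ℓ d x :=
    fun x => le_of_lt (div_pos hkeep0 (Real.rpow_pos_of_pos h1p _))
  have hr1 : ∀ x : C, Stmt13.rr H η ℓ d x ≤ 1 := by
    intro x
    rw [Stmt13.rr, div_le_one (Real.rpow_pos_of_pos h1p _)]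
    exact Real.rpow_le_rpow_of_exponent_ge h1p h1ple (hdeg x)
  have hw : ∀ ω, 0 ≤ wcpWeight H η ℓ d ω :=
    Stmt13.wcpWeight_nonneg H η ℓ d hp0.le (by linarith) hr0 hr1
  show wcpExp H η ℓ d (fun ω => ((EK H L v ω ∩ EU H L v ω).card : ℝ)) ≤
    (1 - η/ℓ) ^ ((1 - η/ℓ) ^ (2*d) * ℓ / 2) * (1 + 4*η*β) *
      wcpExp H η ℓ d (fun ω => ((EK H L v ω).card : ℝ))
  have hEKU_set : ∀ ω, EK H L v ω ∩ EU H L v ω =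
      ((L v) ×ˢ (univ : Finset C)).filter (fun q =>
        (H.Adj q.1 q.2 ∧ q.1 ∈ Kset H ω ∧ q.2 ∈ Kset H ω) ∧
        (H.Adj q.1 q.2 ∧ q.2 ∈ Uset H L ω)) := by
    intro ω
    ext q
    simp only [EK, EU, Finset.mem_inter, Finset.mem_filter]
    tauto
  have hL' : wcpExp H η ℓ d (fun ω => ((EK H L v ω ∩ EU H L v ω).card : ℝ)) =
      ∑ q ∈ (L v) ×ˢ (univ : Finset C), wcpExp H η ℓ d (fun ω =>
        if (H.Adj q.1 q.2 ∧ q.1 ∈ Kset H ω ∧ q.2 ∈ Kset H ω) ∧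
           (H.Adj q.1 q.2 ∧ q.2 ∈ Uset H L ω) then (1:ℝ) else 0) := by
    rw [← Stmt13.wcpExp_sum]
    refine Stmt13.wcpExp_congr H η ℓ d fun ω => ?_
    rw [hEKU_set ω, Finset.card_filter]
    push_cast
    rfl
  have hR' : wcpExp H η ℓ d (fun ω => ((EK H L v ω).card : ℝ)) =
      ∑ q ∈ (L v) ×ˢ (univ : Finset C), wcpExp H η ℓ d (fun ω =>
        if H.Adj q.1 q.2 ∧ q.1 ∈ Kset H ω ∧ q.2 ∈ Kset H ω then (1:ℝ) else 0) := by
    rw [← Stmt13.wcpExp_sum]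
    refine Stmt13.wcpExp_congr H η ℓ d fun ω => ?_
    rw [EK, Finset.card_filter]
    push_cast
    rfl
  rw [hL', hR', Finset.mul_sum]
  refine Finset.sum_le_sum fun q hq => ?_
  obtain ⟨c, c'⟩ := q
  simp only at *
  have hcq : c ∈ L v := (Finset.mem_product.1 hq).1
  have hco0 : (0:ℝ) ≤ (1 - η/ℓ) ^ ((1 - η/ℓ) ^ (2*d) * ℓ / 2) * (1 + 4*η*β) :=
    mul_nonneg (Real.rpow_pos_of_pos h1p _).le (by nlinarith)
  by_cases hadj : H.Adj c c'
  swap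
  · have hz1 : ∀ ω : C → Bool × Bool,
        (if (H.Adj c c' ∧ c ∈ Kset H ω ∧ c' ∈ Kset H ω) ∧
            (H.Adj c c' ∧ c' ∈ Uset H L ω) then (1:ℝ) else 0) = 0 :=
      fun ω => if_neg (fun h => hadj h.1.1)
    have hz2 : ∀ ω : C → Bool × Bool,
        (if H.Adj c c' ∧ c ∈ Kset H ω ∧ c' ∈ Kset H ω then (1:ℝ) else 0) = 0 :=
      fun ω => if_neg (fun h => hadj h.1)
    rw [Stmt13.wcpExp_congr H η ℓ d hz1, Stmt13.wcpExp_congr H η ℓ d hz2]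
    simp [wcpExp]
  -- main case
  obtain ⟨u, hu, huniq⟩ := cover.partition c'
  have hc'Lv : c' ∉ L v := fun h => cover.indep v c hcq c' h hadj
  set F : Finset C := H.neighborFinset c ∪ H.neighborFinset c' with hF
  set S : Finset C := (L u).erase c' with hS
  have hmemS : ∀ a ∈ S, a ∈ L u ∧ a ≠ c' := fun a ha =>
    ⟨Finset.mem_of_mem_erase ha, Finset.ne_of_mem_erase ha⟩
  have hcS : ∀ a ∈ S, a ≠ c := by
    intro a ha hac
    have hcLu : c ∈ L u := hac ▸ (hmemS a ha).1
    obtain ⟨w, hwmem, hwu⟩ := cover.partition c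
    have h1 : u = w := hwu u hcLu
    have h2 : v = w := hwu v hcq
    exact hc'Lv (by rw [h1, ← h2] at hu; exact hu)
  have hc'S : ∀ a ∈ S, a ≠ c' := fun a ha => (hmemS a ha).2
  have haNc : ∀ a ∈ S, a ∉ H.neighborFinset c := by
    intro a ha hmem
    have hca : H.Adj c a := (SimpleGraph.mem_neighborFinset _ _ _).1 hmem
    exact (hmemS a ha).2 (cover.matching v u c hcq a (hmemS a ha).1 c' hu hca hadj)
  have haNc' : ∀ a ∈ S, a ∉ H.neighborFinset c' := by
    intro a ha hmem
    exact cover.indep u c' hu a (hmemS a ha).1 ((SimpleGraph.mem_neighborFinset _ _ _).1 hmem)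
  have haF : ∀ a ∈ S, a ∉ F := by
    intro a ha hmem
    rcases Finset.mem_union.1 hmem with h | h
    · exact haNc a ha h
    · exact haNc' a ha h
  have hcNa : ∀ a ∈ S, c ∉ H.neighborFinset a := by
    intro a ha hmem
    exact haNc a ha ((SimpleGraph.mem_neighborFinset _ _ _).2
      ((SimpleGraph.mem_neighborFinset _ _ _).1 hmem).symm)
  have hc'Na : ∀ a ∈ S, c' ∉ H.neighborFinset a := by
    intro a ha hmem
    exact haNc' a ha ((SimpleGraph.mem_neighborFinset _ _ _).2
      ((SimpleGraph.mem_neighborFinset _ _ _).1 hmem).symm)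
  have hanb : ∀ a ∈ S, ∀ b ∈ S, a ∉ H.neighborFinset b := by
    intro a ha b hb hmem
    exact cover.indep u b (hmemS b hb).1 a (hmemS a ha).1
      ((SimpleGraph.mem_neighborFinset _ _ _).1 hmem)
  have hdisj : ∀ a ∈ S, ∀ b ∈ S, a ≠ b →
      Disjoint (H.neighborFinset a \ F) (H.neighborFinset b \ F) := by
    intro a ha b hb hab
    rw [Finset.disjoint_left]
    intro x hxa hxb
    have hx1 : H.Adj a x := (SimpleGraph.mem_neighborFinset _ _ _).1 (Finset.mem_sdiff.1 hxa).1
    have hx2 : H.Adj b x := (SimpleGraph.mem_neighborFinset _ _ _).1 (Finset.mem_sdiff.1 hxb).1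
    obtain ⟨w, hwmem, _⟩ := cover.partition x
    exact hab (cover.matching w u x hwmem a (hmemS a ha).1 b (hmemS b hb).1 hx1.symm hx2.symm)
  -- indicator facts
  have hKmem : ∀ (ω : C → Bool × Bool) (x : C), x ∈ Kset H ω ↔
      ((ω x).2 = true ∧ ∀ y ∈ H.neighborFinset x, (ω y).1 = false) := by
    intro ω x; simp [Kset]
  have hindE1 : ∀ ω, c ∈ Kset H ω → c' ∈ Kset H ω → Stmt13.indE c c' F ω = 1 := by
    intro ω hc hc'
    obtain ⟨hc2, hcn⟩ := (hKmem ω c).1 hc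
    obtain ⟨hc'2, hc'n⟩ := (hKmem ω c').1 hc'
    have h3 : ∏ y ∈ F, (if (ω y).1 then (0:ℝ) else 1) = 1 := by
      refine Finset.prod_eq_one fun y hy => ?_
      rcases Finset.mem_union.1 hy with h | h
      · rw [if_neg]; simp [hcn y h]
      · rw [if_neg]; simp [hc'n y h]
    rw [Stmt13.indE, if_pos hc2, if_pos hc'2, h3]
    norm_num
  have hindE0 : ∀ ω, ¬(c ∈ Kset H ω ∧ c' ∈ Kset H ω) → Stmt13.indE c c' F ω = 0 := by
    intro ω h
    rw [Stmt13.indE]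
    by_cases h1 : (ω c).2 = true
    swap
    · rw [if_neg h1]; ring
    by_cases h2 : (ω c').2 = true
    swap
    · rw [if_neg h2]; ring
    have h3 : ∃ y ∈ F, (ω y).1 = true := by
      by_contra hno
      push_neg at hno
      refine h ⟨(hKmem ω c).2 ⟨h1, fun y hy => ?_⟩, (hKmem ω c').2 ⟨h2, fun y hy => ?_⟩⟩
      · have := hno y (Finset.mem_union_left _ hy); simpa using this
      · have := hno y (Finset.mem_union_right _ hy); simpa using this
    obtain ⟨y, hyF, hyact⟩ := h3
    have h4 : ∏ y ∈ F, (if (ω y).1 then (0:ℝ) else 1) = 0 :=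
      Finset.prod_eq_zero hyF (by rw [if_pos hyact])
    rw [h4]
    ring
  have hindEeq : ∀ ω, (if H.Adj c c' ∧ c ∈ Kset H ω ∧ c' ∈ Kset H ω then (1:ℝ) else 0) =
      Stmt13.indE c c' F ω := by
    intro ω
    by_cases h : c ∈ Kset H ω ∧ c' ∈ Kset H ω
    · rw [if_pos ⟨hadj, h.1, h.2⟩, hindE1 ω h.1 h.2]
    · rw [if_neg (fun hh => h ⟨hh.2.1, hh.2.2⟩), hindE0 ω h]
  have hindEnn : ∀ ω, 0 ≤ Stmt13.indE c c' F ω := by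
    intro ω
    rw [Stmt13.indE]
    refine mul_nonneg (by split <;> norm_num)
      (mul_nonneg (by split <;> norm_num) (Finset.prod_nonneg fun y _ => by split <;> norm_num))
  have hchi0 : ∀ (a : C) ω, 0 ≤ Stmt13.chi H F a ω := by
    intro a ω
    rw [Stmt13.chi]
    exact mul_nonneg (by split <;> norm_num) (Finset.prod_nonneg fun y _ => by split <;> norm_num)
  have hchi1 : ∀ (a : C) ω, Stmt13.chi H F a ω ≤ 1 := by
    intro a ω
    rw [Stmt13.chi]
    have h1 : (if (ω a).1 ∧ (ω a).2 then (1:ℝ) else 0) ≤ 1 := by split <;> norm_num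
    have h1' : (0:ℝ) ≤ (if (ω a).1 ∧ (ω a).2 then (1:ℝ) else 0) := by split <;> norm_num
    have h2 : ∏ y ∈ H.neighborFinset a \ F, (if (ω y).1 then (0:ℝ) else 1) ≤ 1 :=
      Finset.prod_le_one (fun y _ => by split <;> norm_num) (fun y _ => by split <;> norm_num)
    have h2' : (0:ℝ) ≤ ∏ y ∈ H.neighborFinset a \ F, (if (ω y).1 then (0:ℝ) else 1) :=
      Finset.prod_nonneg fun y _ => by split <;> norm_num
    nlinarith
  have hle : ∀ ω, (if (H.Adj c c' ∧ c ∈ Kset H ω ∧ c' ∈ Kset H ω) ∧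
      (H.Adj c c' ∧ c' ∈ Uset H L ω) then (1:ℝ) else 0) ≤
      Stmt13.indE c c' F ω * ∏ a ∈ S, (1 - Stmt13.chi H F a ω) := by
    intro ω
    by_cases h : (H.Adj c c' ∧ c ∈ Kset H ω ∧ c' ∈ Kset H ω) ∧
        (H.Adj c c' ∧ c' ∈ Uset H L ω)
    swap
    · rw [if_neg h]
      exact mul_nonneg (hindEnn ω) (Finset.prod_nonneg fun a _ => by linarith [hchi1 a ω])
    rw [if_pos h]
    obtain ⟨⟨_, hcK, hc'K⟩, ⟨_, hc'U⟩⟩ := h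
    obtain ⟨hcK2, hcKn⟩ := (hKmem ω c).1 hcK
    obtain ⟨hc'K2, hc'Kn⟩ := (hKmem ω c').1 hc'K
    have h2 : ∀ a ∈ S, Stmt13.chi H F a ω = 0 := by
      intro a ha
      by_contra hne
      rw [Stmt13.chi] at hne
      obtain ⟨hae, hprod⟩ := mul_ne_zero_iff.1 hne
      have hcond : (ω a).1 = true ∧ (ω a).2 = true := by
        by_contra hcc
        exact hae (if_neg (by simpa using hcc))
      have hinact : ∀ y ∈ H.neighborFinset a \ F, (ω y).1 = false := by
        intro y hy
        have hne' := Finset.prod_ne_zero_iff.1 hprod y hy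
        by_contra hyy
        exact hne' (if_pos (by simpa using hyy))
      have haK : a ∈ Kset H ω := by
        refine (hKmem ω a).2 ⟨hcond.2, fun y hy => ?_⟩
        by_cases hyF : y ∈ F
        · rcases Finset.mem_union.1 hyF with hh | hh
          · exact hcKn y hh
          · exact hc'Kn y hh
        · exact hinact y (Finset.mem_sdiff.2 ⟨hy, hyF⟩)
      have haA : a ∈ Aset ω := by simp [Aset, hcond.1]
      have hc'Um : L u ∩ Aset ω ∩ Kset H ω = ∅ := by
        have : ∀ v₀ : V, c' ∈ L v₀ → L v₀ ∩ Aset ω ∩ Kset H ω = ∅ := by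
          simpa [Uset] using hc'U
        exact this u hu
      have hmem : a ∈ L u ∩ Aset ω ∩ Kset H ω :=
        Finset.mem_inter.2 ⟨Finset.mem_inter.2 ⟨(hmemS a ha).1, haA⟩, haK⟩
      rw [hc'Um] at hmem
      exact absurd hmem (Finset.notMem_empty a)
    rw [hindE1 ω hcK hc'K, one_mul]
    rw [Finset.prod_congr rfl (fun a ha => by rw [h2 a ha]; norm_num : ∀ a ∈ S, 1 - Stmt13.chi H F a ω = 1)]
    simp
  -- mu bounds
  have hn_le : ∀ a : C, (((H.neighborFinset a \ F).card : ℕ) : ℝ) ≤ (H.degree a : ℝ) := by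
    intro a
    have h1 : (H.neighborFinset a \ F).card ≤ (H.neighborFinset a).card :=
      Finset.card_le_card Finset.sdiff_subset
    rw [SimpleGraph.card_neighborFinset_eq_degree] at h1
    exact_mod_cast h1
  have hmu_lb : ∀ a : C, (η/ℓ) * ((1-η/ℓ)^(2*d)) ≤ Stmt13.mu H η ℓ d F a := by
    intro a
    rw [Stmt13.mu, Stmt13.rr]
    rw [← Real.rpow_natCast (1-η/ℓ) ((H.neighborFinset a \ F).card)]
    have hX0 : (0:ℝ) < (1-η/ℓ) ^ ((H.degree a : ℝ)) := Real.rpow_pos_of_pos h1p _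
    have hpow : (1-η/ℓ)^((H.degree a:ℝ)) ≤
        (1-η/ℓ)^((((H.neighborFinset a \ F).card : ℕ)):ℝ) :=
      Real.rpow_le_rpow_of_exponent_ge h1p h1ple (hn_le a)
    have hmain : (1-η/ℓ)^(2*d) ≤
        (1-η/ℓ)^(2*d) / (1-η/ℓ)^((H.degree a:ℝ)) *
          (1-η/ℓ)^((((H.neighborFinset a \ F).card : ℕ)):ℝ) := by
      rw [div_mul_eq_mul_div, le_div_iff₀ hX0]
      exact mul_le_mul_of_nonneg_left hpow hkeep0.le
    calc (η/ℓ) * ((1-η/ℓ)^(2*d)) ≤ (η/ℓ) * ((1-η/ℓ)^(2*d) / (1-η/ℓ)^((H.degree a:ℝ)) *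
        (1-η/ℓ)^((((H.neighborFinset a \ F).card : ℕ)):ℝ)) :=
        mul_le_mul_of_nonneg_left hmain hp0.le
      _ = η / ℓ * ((1-η/ℓ)^(2*d) / (1-η/ℓ)^((H.degree a:ℝ))) *
        (1-η/ℓ)^((((H.neighborFinset a \ F).card : ℕ)):ℝ) := by ring
  have hmu_ub : ∀ a : C, Stmt13.mu H η ℓ d F a ≤ η/ℓ := by
    intro a
    rw [Stmt13.mu]
    have h1 : (1-η/ℓ)^((H.neighborFinset a \ F).card) ≤ 1 := pow_le_one₀ h1p.le h1ple
    have h1' : (0:ℝ) ≤ (1-η/ℓ)^((H.neighborFinset a \ F).card) := pow_nonneg h1p.le _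
    have h2 := hr1 a
    have h2' := hr0 a
    have s1 : η/ℓ * Stmt13.rr H η ℓ d a ≤ η/ℓ * 1 := mul_le_mul_of_nonneg_left h2 hp0.le
    have s0 : 0 ≤ η/ℓ * Stmt13.rr H η ℓ d a := mul_nonneg hp0.le h2'
    have s2 : η/ℓ * Stmt13.rr H η ℓ d a * (1-η/ℓ)^((H.neighborFinset a \ F).card) ≤
        η/ℓ * Stmt13.rr H η ℓ d a * 1 := mul_le_mul_of_nonneg_left h1 s0
    nlinarith
  have hprod_le : ∏ a ∈ S, (1 - Stmt13.mu H η ℓ d F a) ≤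
      (1 - (η/ℓ)*((1-η/ℓ)^(2*d)))^S.card := by
    have h := Finset.prod_le_prod (s := S) (f := fun a => 1 - Stmt13.mu H η ℓ d F a)
      (g := fun _ => 1 - (η/ℓ)*((1-η/ℓ)^(2*d)))
      (fun a _ => by linarith [hmu_ub a, hp4])
      (fun a _ => by linarith [hmu_lb a])
    rwa [Finset.prod_const] at h
  have hmS : (1-β)*ℓ/2 - 1 ≤ (S.card : ℝ) := by
    have h3 : ((S.card : ℕ) : ℝ) = ((L u).card : ℝ) - 1 := by
      rw [hS]; exact Finset.cast_card_erase_of_mem hu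
    rw [h3]
    linarith [(hcard u).1]
  have hana : (1 - (η/ℓ)*((1-η/ℓ)^(2*d)))^S.card ≤
      (1-η/ℓ)^((1-η/ℓ)^(2*d) * ℓ/2) * (1+4*η*β) :=
    Stmt13A.analytic_bound (η/ℓ) ((1-η/ℓ)^(2*d)) β ℓ η S.card hp0 hp4 hkeep0 hkeep1
      hβ0 hη0 hη1 hβη (by field_simp) hl0 hmS hlβ
  have hPE0 : 0 ≤ wcpExp H η ℓ d (Stmt13.indE c c' F) :=
    Stmt13.wcpExp_nonneg H η ℓ d hw hindEnn
  calc wcpExp H η ℓ d (fun ω =>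
        if (H.Adj c c' ∧ c ∈ Kset H ω ∧ c' ∈ Kset H ω) ∧
           (H.Adj c c' ∧ c' ∈ Uset H L ω) then (1:ℝ) else 0)
      ≤ wcpExp H η ℓ d (fun ω => Stmt13.indE c c' F ω * ∏ a ∈ S, (1 - Stmt13.chi H F a ω)) :=
        Stmt13.wcpExp_mono H η ℓ d hw hle
    _ = wcpExp H η ℓ d (Stmt13.indE c c' F) * ∏ a ∈ S, (1 - Stmt13.mu H η ℓ d F a) :=
        Stmt13.stepB H η ℓ d c c' F S hcS hc'S haF hcNa hc'Na hanb hdisj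
    _ ≤ wcpExp H η ℓ d (Stmt13.indE c c' F) *
        ((1-η/ℓ)^((1-η/ℓ)^(2*d) * ℓ/2) * (1+4*η*β)) :=
        mul_le_mul_of_nonneg_left (le_trans hprod_le hana) hPE0
    _ = (1-η/ℓ)^((1-η/ℓ)^(2*d) * ℓ/2) * (1+4*η*β) *
        wcpExp H η ℓ d (fun ω =>
          if H.Adj c c' ∧ c ∈ Kset H ω ∧ c' ∈ Kset H ω then (1:ℝ) else 0) := by
        rw [Stmt13.wcpExp_congr H η ℓ d hindEeq]
        ring
end
end

section
/- Under the assumptions (A1)–(A8) of the iteration lemma (with parameters γ ∈ (0,1), d sufficiently large, 1 ≤ k ≤ d^{2γ}, 4ηd < ℓ < 100d, 1/log⁵(d) < η < 1/log(d/√k), d^{−γ(1−√γ)/200} ≤ β ≤ 1/10, H k-locally-sparse, Δ(H) ≤ 2d, (1−β)ℓ/2 ≤ |L(v)| ≤ (1+β)ℓ, avg-deg_ℋ(v) ≤ (2 − (1−β)ℓ/|L(v)|)d), run the Wasteful Coloring Procedure randomness, define keep := (1 − η/ℓ)^{2d}, uncolor := (1 − η/ℓ)^{keep·ℓ/2}, ℓ(v)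 := |L(v)|, E_K(v) := {cc' ∈ E(H) : c ∈ L(v), c' ∈ N_H(c), c, c' ∈ K}, and E_U(v) := {cc' ∈ E(H) : c ∈ L(v), c' ∈ N_H(c), c' ∈ U}. Then for each vertex v ∈ V(G), E[|E_K(v) ∩ E_U(v)|] ≤ keep² · uncolor · ℓ(v) · avg-deg_ℋ(v) · (1 + 6ηβ). -/
open Finset

attribute [local instance] Classical.propDecidable

noncomputable section

namespace WCP14

open Real Finset

variable {C : Type} [Fintype C]

/-- Equalizing-coin success probability of color `b`. -/
def pp (H : SimpleGraph C) (η ℓ d : ℝ) (b : C) : ℝ :=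
  (1 - η / ℓ) ^ (2 * d) / (1 - η / ℓ) ^ ((H.degree b : ℝ))

/-- Per-coordinate weight. -/
def wt (H : SimpleGraph C) (η ℓ d : ℝ) (b : C) (x : Bool × Bool) : ℝ :=
  bern (η / ℓ) x.1 * bern (pp H η ℓ d b) x.2

lemma wcpWeight_eq (H : SimpleGraph C) (η ℓ d : ℝ) (ω : C → Bool × Bool) :
    wcpWeight H η ℓ d ω = ∏ b, wt H η ℓ d b (ω b) := rfl

lemma sum_wt (H : SimpleGraph C) (η ℓ d : ℝ) (b : C) :
    ∑ x : Bool × Bool, wt H η ℓ d b x = 1 := by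
  simp [wt, bern, Fintype.sum_prod_type, Fintype.sum_bool]
  ring

lemma ev_triv (H : SimpleGraph C) (η ℓ d : ℝ) (b : C) :
    ∑ x : Bool × Bool, wt H η ℓ d b x * (if True then (1:ℝ) else 0) = 1 := by
  simpa using sum_wt H η ℓ d b

lemma ev1 (H : SimpleGraph C) (η ℓ d : ℝ) (b : C) :
    ∑ x : Bool × Bool, wt H η ℓ d b x * (if x.1 = false then (1:ℝ) else 0) = 1 - η / ℓ := by
  simp [wt, bern, Fintype.sum_prod_type, Fintype.sum_bool]
  ring

lemma ev2 (H : SimpleGraph C) (η ℓ d : ℝ) (b : C) :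
    ∑ x : Bool × Bool, wt H η ℓ d b x * (if x.1 = false ∧ x.2 = true then (1:ℝ) else 0)
      = (1 - η / ℓ) * pp H η ℓ d b := by
  simp [wt, bern, Fintype.sum_prod_type, Fintype.sum_bool]

lemma ev3 (H : SimpleGraph C) (η ℓ d : ℝ) (b : C) :
    ∑ x : Bool × Bool, wt H η ℓ d b x * (if x.1 = true ∧ x.2 = true then (1:ℝ) else 0)
      = (η / ℓ) * pp H η ℓ d b := by
  simp [wt, bern, Fintype.sum_prod_type, Fintype.sum_bool]

lemma sum_weight_mul_prod (H : SimpleGraph C) (η ℓ d : ℝ) (χ : C → Bool × Bool → ℝ) :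
    ∑ ω : C → Bool × Bool, wcpWeight H η ℓ d ω * ∏ b, χ b (ω b)
      = ∏ b, ∑ x : Bool × Bool, wt H η ℓ d b x * χ b x := by
  rw [Fintype.prod_sum (fun b (x : Bool × Bool) => wt H η ℓ d b x * χ b x)]
  refine Finset.sum_congr rfl fun ω _ => ?_
  rw [wcpWeight_eq, ← Finset.prod_mul_distrib]

lemma wcpPr_eq_sum (H : SimpleGraph C) (η ℓ d : ℝ) (E : (C → Bool × Bool) → Prop) :
    wcpPr H η ℓ d E = ∑ ω : C → Bool × Bool, wcpWeight H η ℓ d ω * (if E ω then 1 else 0) := by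
  rw [wcpPr, Finset.sum_filter]
  exact Finset.sum_congr rfl fun ω _ => by by_cases h : E ω <;> simp [h]

end WCP14

namespace WCP14

variable {V C : Type} [Fintype V] [Fintype C]

/-- The conditioning set: all neighbours of `c` and `c'` (contains `c` and `c'`). -/
def Dst (H : SimpleGraph C) (c c' : C) : Finset C :=
  H.neighborFinset c ∪ H.neighborFinset c'

/-- Leftover neighbourhoods of the colors in `S`. -/
def NSt (H : SimpleGraph C) (c c' : C) (S : Finset C) : Finset C :=
  S.biUnion fun a => H.neighborFinset a \ Dst H c c'

/-- `c, c'` kept (given eq-coins): eq coins true and all of `Dst` inactive. -/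
def EvD (H : SimpleGraph C) (c c' : C) (ω : C → Bool × Bool) : Prop :=
  (∀ b ∈ Dst H c c', (ω b).1 = false) ∧ (ω c).2 = true ∧ (ω c').2 = true

/-- Color `a` is activated and kept, given that `Dst` is inactive. -/
def EvB (H : SimpleGraph C) (c c' : C) (a : C) (ω : C → Bool × Bool) : Prop :=
  (ω a).1 = true ∧ (ω a).2 = true ∧
    ∀ b ∈ H.neighborFinset a \ Dst H c c', (ω b).1 = false

/-- The per-coordinate condition describing `EvD ∧ ∀ a ∈ S, EvB a`. -/
def Pcond (H : SimpleGraph C) (c c' : C) (S : Finset C) (b : C) (x : Bool × Bool) : Prop :=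
  (b ∈ Dst H c c' → x.1 = false) ∧ ((b = c ∨ b = c') → x.2 = true) ∧
    (b ∈ S → x.1 = true ∧ x.2 = true) ∧ (b ∈ NSt H c c' S → x.1 = false)

lemma pcond_iff (H : SimpleGraph C) (c c' : C) (S : Finset C) (ω : C → Bool × Bool)
    (hc : c ∈ Dst H c c') (hc' : c' ∈ Dst H c c') :
    (∀ b, Pcond H c c' S b (ω b)) ↔ (EvD H c c' ω ∧ ∀ a ∈ S, EvB H c c' a ω) := by
  constructor
  · intro h
    refine ⟨⟨fun b hb => (h b).1 hb, (h c).2.1 (Or.inl rfl), (h c').2.1 (Or.inr rfl)⟩, ?_⟩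
    intro a ha
    exact ⟨((h a).2.2.1 ha).1, ((h a).2.2.1 ha).2,
      fun b hb => (h b).2.2.2 (Finset.mem_biUnion.2 ⟨a, ha, hb⟩)⟩
  · rintro ⟨hD, hB⟩ b
    refine ⟨fun hb => hD.1 b hb, ?_, fun hbS => ⟨(hB b hbS).1, (hB b hbS).2.1⟩, ?_⟩
    · rintro (rfl | rfl)
      · exact hD.2.1
      · exact hD.2.2
    · intro hbNS
      obtain ⟨a, haS, hbin⟩ := Finset.mem_biUnion.1 hbNS
      exact (hB a haS).2.2 b hbin

lemma mem_Kset (H : SimpleGraph C) (ω : C → Bool × Bool) (a : C) :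
    a ∈ Kset H ω ↔ (ω a).2 = true ∧ ∀ b ∈ H.neighborFinset a, (ω b).1 = false := by
  simp [Kset]

lemma mem_Aset (ω : C → Bool × Bool) (a : C) : a ∈ Aset ω ↔ (ω a).1 = true := by
  simp [Aset]

lemma mem_Uset (H : SimpleGraph C) (L : V → Finset C) (ω : C → Bool × Bool) (a : C) :
    a ∈ Uset H L ω ↔ ∀ w : V, a ∈ L w → L w ∩ Aset ω ∩ Kset H ω = ∅ := by
  simp [Uset]

/-- The event `(c,c') ∈ E_K(v) ∩ E_U(v)` in block-local form. -/
lemma event_iff (G : SimpleGraph V) (H : SimpleGraph C) (L : V → Finset C)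
    (hcov : IsCorrespondenceCover G H L) (v u : V) (c c' : C)
    (hc : c ∈ L v) (hc' : c' ∈ L u) (hadj : H.Adj c c') (ω : C → Bool × Bool) :
    ((c, c') ∈ EK H L v ω ∩ EU H L v ω) ↔
      (EvD H c c' ω ∧ ∀ a ∈ (L u).erase c', ¬ EvB H c c' a ω) := by
  have hcD : c ∈ Dst H c c' := Finset.mem_union_right _ ((H.mem_neighborFinset c' c).2 hadj.symm)
  have hc'D : c' ∈ Dst H c c' := Finset.mem_union_left _ ((H.mem_neighborFinset c c').2 hadj)
  have hmem : ((c, c') ∈ EK H L v ω ∩ EU H L v ω) ↔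
      (c ∈ Kset H ω ∧ c' ∈ Kset H ω ∧ c' ∈ Uset H L ω) := by
    simp only [Finset.mem_inter, EK, EU, Finset.mem_filter, Finset.mem_product,
      Finset.mem_univ, and_true]
    tauto
  rw [hmem]
  constructor
  · rintro ⟨hK, hK', hU⟩
    rw [mem_Kset] at hK hK'
    refine ⟨⟨?_, hK.1, hK'.1⟩, ?_⟩
    · intro b hb
      rcases Finset.mem_union.1 hb with h | h
      · exact hK.2 b h
      · exact hK'.2 b h
    · intro a ha hB
      have haLu : a ∈ L u := Finset.mem_of_mem_erase ha
      have haK : a ∈ Kset H ω := by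
        rw [mem_Kset]
        refine ⟨hB.2.1, fun b hb => ?_⟩
        by_cases hbD : b ∈ Dst H c c'
        · rcases Finset.mem_union.1 hbD with h | h
          · exact hK.2 b h
          · exact hK'.2 b h
        · exact hB.2.2 b (Finset.mem_sdiff.2 ⟨hb, hbD⟩)
      have : a ∈ L u ∩ Aset ω ∩ Kset H ω := by
        rw [Finset.mem_inter, Finset.mem_inter, mem_Aset]
        exact ⟨⟨haLu, hB.1⟩, haK⟩
      rw [(mem_Uset H L ω c').1 hU u hc'] at this
      exact absurd this (Finset.notMem_empty a)
  · rintro ⟨hD, hB⟩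
    have hKc : c ∈ Kset H ω := by
      rw [mem_Kset]
      exact ⟨hD.2.1, fun b hb => hD.1 b (Finset.mem_union_left _ hb)⟩
    have hKc' : c' ∈ Kset H ω := by
      rw [mem_Kset]
      exact ⟨hD.2.2, fun b hb => hD.1 b (Finset.mem_union_right _ hb)⟩
    refine ⟨hKc, hKc', ?_⟩
    rw [mem_Uset]
    intro w hw
    have hwu : w = u := by
      obtain ⟨z, _, hz⟩ := hcov.partition c'
      rw [hz w hw, hz u hc']
    subst hwu
    rw [Finset.eq_empty_iff_forall_notMem]
    intro a ha
    rw [Finset.mem_inter, Finset.mem_inter, mem_Aset] at ha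
    obtain ⟨⟨haL, haA⟩, haK⟩ := ha
    rw [mem_Kset] at haK
    by_cases hac' : a = c'
    · subst hac'
      have : (ω a).1 = false := hD.1 a hc'D
      rw [this] at haA; exact Bool.false_ne_true haA
    · exact hB a (Finset.mem_erase.2 ⟨hac', haL⟩)
        ⟨haA, haK.1, fun b hb => haK.2 b (Finset.mem_sdiff.1 hb).1⟩

end WCP14

set_option linter.unusedSectionVars false

namespace WCP14

open Finset

variable {V C : Type} [Fintype V] [Fintype C]

lemma Q_eval (G : SimpleGraph V) (H : SimpleGraph C) (L : V → Finset C) (η ℓ d : ℝ)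
    (v u : V) (c c' : C)
    (hcov : IsCorrespondenceCover G H L) (hc : c ∈ L v) (hc' : c' ∈ L u)
    (hadj : H.Adj c c') (S : Finset C) (hS : S ⊆ (L u).erase c') :
    (∏ b : C, ∑ x : Bool × Bool, wt H η ℓ d b x * (if Pcond H c c' S b x then (1:ℝ) else 0))
      = (1 - η / ℓ) ^ (Dst H c c').card * pp H η ℓ d c * pp H η ℓ d c' *
        ∏ a ∈ S, ((η / ℓ) * pp H η ℓ d a *
          (1 - η / ℓ) ^ (H.neighborFinset a \ Dst H c c').card) := by
  classical
  set e : C → ℝ :=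
    fun b => ∑ x : Bool × Bool, wt H η ℓ d b x * (if Pcond H c c' S b x then (1:ℝ) else 0)
    with he
  have hne : c ≠ c' := H.ne_of_adj hadj
  have hcD : c ∈ Dst H c c' := Finset.mem_union_right _ ((H.mem_neighborFinset c' c).2 hadj.symm)
  have hc'D : c' ∈ Dst H c c' := Finset.mem_union_left _ ((H.mem_neighborFinset c c').2 hadj)
  have hcLu : c ∉ L u := fun h => hcov.indep u c h c' hc' hadj
  have hW_not_D : ∀ a ∈ (L u).erase c', a ∉ Dst H c c' := by
    intro a ha hD
    have ha' := Finset.mem_of_mem_erase ha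
    rcases Finset.mem_union.1 hD with h | h
    · exact (Finset.ne_of_mem_erase ha)
        (hcov.matching v u c hc a ha' c' hc' ((H.mem_neighborFinset c a).1 h) hadj)
    · exact hcov.indep u c' hc' a ha' ((H.mem_neighborFinset c' a).1 h)
  have hSD : ∀ a ∈ S, a ∉ Dst H c c' := fun a ha => hW_not_D a (hS ha)
  have hcS : c ∉ S := fun h => hcLu (Finset.mem_of_mem_erase (hS h))
  have hc'S : c' ∉ S := fun h => (Finset.notMem_erase c' (L u)) (hS h)
  have hNSD : ∀ b ∈ NSt H c c' S, b ∉ Dst H c c' := by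
    intro b hb
    obtain ⟨a, _, h⟩ := Finset.mem_biUnion.1 hb
    exact (Finset.mem_sdiff.1 h).2
  have hSNS : ∀ a ∈ S, a ∉ NSt H c c' S := by
    intro a ha hmem
    obtain ⟨b, hbS, hb⟩ := Finset.mem_biUnion.1 hmem
    exact hcov.indep u b (Finset.mem_of_mem_erase (hS hbS)) a
      (Finset.mem_of_mem_erase (hS ha)) ((H.mem_neighborFinset b a).1 (Finset.mem_sdiff.1 hb).1)
  have hcNS : c ∉ NSt H c c' S := fun h => hNSD c h hcD
  have hc'NS : c' ∉ NSt H c c' S := fun h => hNSD c' h hc'D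
  have hnbr_disj : ∀ a ∈ S, ∀ b ∈ S, a ≠ b →
      Disjoint (H.neighborFinset a \ Dst H c c') (H.neighborFinset b \ Dst H c c') := by
    intro a ha b hb hab
    refine Finset.disjoint_left.2 fun x hxa hxb => hab ?_
    obtain ⟨w, hw, _⟩ := hcov.partition x
    exact hcov.matching w u x hw a (Finset.mem_of_mem_erase (hS ha))
      b (Finset.mem_of_mem_erase (hS hb))
      ((H.mem_neighborFinset a x).1 (Finset.mem_sdiff.1 hxa).1).symm
      ((H.mem_neighborFinset b x).1 (Finset.mem_sdiff.1 hxb).1).symm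
  -- values of individual factors
  have ec : e c = (1 - η / ℓ) * pp H η ℓ d c := by
    have hiff : ∀ x : Bool × Bool, Pcond H c c' S c x ↔ (x.1 = false ∧ x.2 = true) := by
      intro x; simp [Pcond, hcD, hcS, hcNS]
    rw [he]; simp only [hiff]; exact ev2 H η ℓ d c
  have ec' : e c' = (1 - η / ℓ) * pp H η ℓ d c' := by
    have hiff : ∀ x : Bool × Bool, Pcond H c c' S c' x ↔ (x.1 = false ∧ x.2 = true) := by
      intro x; simp [Pcond, hc'D, hc'S, hc'NS]
    rw [he]; simp only [hiff]; exact ev2 H η ℓ d c'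
  have eD : ∀ b ∈ ((Dst H c c').erase c).erase c', e b = 1 - η / ℓ := by
    intro b hb
    have hbD : b ∈ Dst H c c' := Finset.mem_of_mem_erase (Finset.mem_of_mem_erase hb)
    have hbc' : b ≠ c' := Finset.ne_of_mem_erase hb
    have hbc : b ≠ c := Finset.ne_of_mem_erase (Finset.mem_of_mem_erase hb)
    have hbS : b ∉ S := fun h => hSD b h hbD
    have hbNS : b ∉ NSt H c c' S := fun h => hNSD b h hbD
    have hiff : ∀ x : Bool × Bool, Pcond H c c' S b x ↔ (x.1 = false) := by
      intro x; simp [Pcond, hbD, hbc, hbc', hbS, hbNS]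
    rw [he]; simp only [hiff]; exact ev1 H η ℓ d b
  have eS : ∀ a ∈ S, e a = (η / ℓ) * pp H η ℓ d a := by
    intro a ha
    have haD : a ∉ Dst H c c' := hSD a ha
    have hac : a ≠ c := fun h => hcS (h ▸ ha)
    have hac' : a ≠ c' := fun h => hc'S (h ▸ ha)
    have haNS : a ∉ NSt H c c' S := hSNS a ha
    have hiff : ∀ x : Bool × Bool, Pcond H c c' S a x ↔ (x.1 = true ∧ x.2 = true) := by
      intro x; simp [Pcond, haD, hac, hac', ha, haNS]
    rw [he]; simp only [hiff]; exact ev3 H η ℓ d a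
  have eNS : ∀ b ∈ NSt H c c' S, e b = 1 - η / ℓ := by
    intro b hb
    have hbD : b ∉ Dst H c c' := hNSD b hb
    have hbc : b ≠ c := fun h => hbD (h ▸ hcD)
    have hbc' : b ≠ c' := fun h => hbD (h ▸ hc'D)
    have hbS : b ∉ S := fun h => hSNS b h hb
    have hiff : ∀ x : Bool × Bool, Pcond H c c' S b x ↔ (x.1 = false) := by
      intro x; simp [Pcond, hbD, hbc, hbc', hbS, hb]
    rw [he]; simp only [hiff]; exact ev1 H η ℓ d b
  have eout : ∀ b, b ∉ Dst H c c' ∪ S ∪ NSt H c c' S → e b = 1 := by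
    intro b hb
    simp only [Finset.mem_union, not_or] at hb
    obtain ⟨⟨hbD, hbS⟩, hbNS⟩ := hb
    have hbc : b ≠ c := fun h => hbD (h ▸ hcD)
    have hbc' : b ≠ c' := fun h => hbD (h ▸ hc'D)
    have hiff : ∀ x : Bool × Bool, Pcond H c c' S b x ↔ True := by
      intro x; simp [Pcond, hbD, hbc, hbc', hbS, hbNS]
    rw [he]; simp only [hiff, if_true, mul_one]; exact sum_wt H η ℓ d b
  -- disjointness of the three groups
  have hDS : Disjoint (Dst H c c') S := Finset.disjoint_right.2 hSD
  have hDNS : Disjoint (Dst H c c') (NSt H c c' S) := Finset.disjoint_right.2 hNSD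
  have hSNS' : Disjoint S (NSt H c c' S) := Finset.disjoint_left.2 hSNS
  -- restrict the product
  have step1 : (∏ b : C, e b) = ∏ b ∈ Dst H c c' ∪ S ∪ NSt H c c' S, e b :=
    (Finset.prod_subset (Finset.subset_univ _) fun b _ hb => eout b hb).symm
  rw [step1, Finset.prod_union (Finset.disjoint_union_left.2 ⟨hDNS, hSNS'⟩),
    Finset.prod_union hDS]
  -- the Dst part
  have hc'in : c' ∈ (Dst H c c').erase c := Finset.mem_erase.2 ⟨hne.symm, hc'D⟩
  have hDcard : 2 ≤ (Dst H c c').card := Finset.one_lt_card.2 ⟨c, hcD, c', hc'D, hne⟩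
  have stepD : (∏ b ∈ Dst H c c', e b)
      = (1 - η / ℓ) ^ (Dst H c c').card * pp H η ℓ d c * pp H η ℓ d c' := by
    rw [← Finset.mul_prod_erase _ e hcD, ← Finset.mul_prod_erase _ e hc'in, ec, ec',
      Finset.prod_congr rfl eD, Finset.prod_const,
      Finset.card_erase_of_mem hc'in, Finset.card_erase_of_mem hcD]
    have : (1 - η / ℓ) ^ (Dst H c c').card
        = (1 - η / ℓ) * ((1 - η / ℓ) * (1 - η / ℓ) ^ ((Dst H c c').card - 1 - 1)) := by
      rw [← pow_succ', ← pow_succ']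
      congr 1
      omega
    rw [this]; ring
  -- the S part
  have stepS : (∏ a ∈ S, e a) = ∏ a ∈ S, (η / ℓ) * pp H η ℓ d a :=
    Finset.prod_congr rfl eS
  -- the NS part
  have stepNS : (∏ b ∈ NSt H c c' S, e b)
      = ∏ a ∈ S, (1 - η / ℓ) ^ (H.neighborFinset a \ Dst H c c').card := by
    rw [Finset.prod_congr rfl eNS, Finset.prod_const, NSt,
      Finset.card_biUnion hnbr_disj, ← Finset.prod_pow_eq_pow_sum]
  rw [stepD, stepS, stepNS, mul_assoc, ← Finset.prod_mul_distrib]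

end WCP14

set_option maxHeartbeats 1000000
namespace WCP14

open Finset

variable {V C : Type} [Fintype V] [Fintype C]

lemma perPair_eq (G : SimpleGraph V) (H : SimpleGraph C) (L : V → Finset C) (η ℓ d : ℝ)
    (v u : V) (c c' : C) (hcov : IsCorrespondenceCover G H L)
    (hc : c ∈ L v) (hc' : c' ∈ L u) (hadj : H.Adj c c') :
    wcpPr H η ℓ d (fun ω => (c, c') ∈ EK H L v ω ∩ EU H L v ω)
      = (1 - η / ℓ) ^ (Dst H c c').card * pp H η ℓ d c * pp H η ℓ d c' *
        ∏ a ∈ (L u).erase c',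
          (1 - (η / ℓ) * pp H η ℓ d a *
            (1 - η / ℓ) ^ (H.neighborFinset a \ Dst H c c').card) := by
  classical
  have hcD : c ∈ Dst H c c' := Finset.mem_union_right _ ((H.mem_neighborFinset c' c).2 hadj.symm)
  have hc'D : c' ∈ Dst H c c' := Finset.mem_union_left _ ((H.mem_neighborFinset c c').2 hadj)
  set W := (L u).erase c' with hWdef
  have hneg : ∀ (S : Finset C) (f : C → ℝ),
      (∏ a ∈ S, (-(f a))) = (-1) ^ S.card * ∏ a ∈ S, f a := by
    intro S f
    calc (∏ a ∈ S, (-(f a))) = ∏ a ∈ S, ((-1) * f a) := by simp only [neg_one_mul]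
    _ = (∏ _a ∈ S, (-1:ℝ)) * ∏ a ∈ S, f a := Finset.prod_mul_distrib
    _ = (-1) ^ S.card * ∏ a ∈ S, f a := by rw [Finset.prod_const]
  -- step 1 : indicators
  have hev : ∀ ω : C → Bool × Bool,
      (if (c, c') ∈ EK H L v ω ∩ EU H L v ω then (1:ℝ) else 0)
        = (if EvD H c c' ω then (1:ℝ) else 0) *
          ∏ a ∈ W, ((1:ℝ) - (if EvB H c c' a ω then 1 else 0)) := by
    intro ω
    have h1 : ∀ a ∈ W, ((1:ℝ) - (if EvB H c c' a ω then 1 else 0))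
        = (if ¬ EvB H c c' a ω then (1:ℝ) else 0) := by
      intro a _; by_cases h : EvB H c c' a ω <;> simp [h]
    rw [Finset.prod_congr rfl h1, Finset.prod_boole]
    have hL := event_iff G H L hcov v u c c' hc hc' hadj ω
    by_cases hD : EvD H c c' ω
    · by_cases hB : ∀ a ∈ W, ¬ EvB H c c' a ω
      · rw [if_pos (hL.2 ⟨hD, hB⟩), if_pos hD, if_pos hB]; norm_num
      · rw [if_neg (fun h => hB (hL.1 h).2), if_pos hD, if_neg hB]; norm_num
    · rw [if_neg (fun h => hD (hL.1 h).1), if_neg hD]; norm_num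
  -- step 2 : per-S event probability
  have key : ∀ S ∈ W.powerset, ∀ ω : C → Bool × Bool,
      (if EvD H c c' ω then (1:ℝ) else 0) * ∏ a ∈ S, (if EvB H c c' a ω then (1:ℝ) else 0)
        = ∏ b : C, (if Pcond H c c' S b (ω b) then (1:ℝ) else 0) := by
    intro S _ ω
    rw [Finset.prod_boole, Finset.prod_boole]
    have h2 : (∀ b, Pcond H c c' S b (ω b)) ↔
        (EvD H c c' ω ∧ ∀ a ∈ S, EvB H c c' a ω) := pcond_iff H c c' S ω hcD hc'D
    by_cases hD : EvD H c c' ω <;> by_cases hB : ∀ a ∈ S, EvB H c c' a ω <;>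
      simp [hD, hB, h2]
  have QS : ∀ S ∈ W.powerset,
      (∑ ω : C → Bool × Bool, wcpWeight H η ℓ d ω *
        ((if EvD H c c' ω then (1:ℝ) else 0) *
          ∏ a ∈ S, (if EvB H c c' a ω then (1:ℝ) else 0)))
      = (1 - η / ℓ) ^ (Dst H c c').card * pp H η ℓ d c * pp H η ℓ d c' *
        ∏ a ∈ S, ((η / ℓ) * pp H η ℓ d a *
          (1 - η / ℓ) ^ (H.neighborFinset a \ Dst H c c').card) := by
    intro S hSm
    calc (∑ ω : C → Bool × Bool, wcpWeight H η ℓ d ω *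
        ((if EvD H c c' ω then (1:ℝ) else 0) *
          ∏ a ∈ S, (if EvB H c c' a ω then (1:ℝ) else 0)))
        = ∑ ω : C → Bool × Bool, wcpWeight H η ℓ d ω *
            ∏ b : C, (if Pcond H c c' S b (ω b) then (1:ℝ) else 0) :=
          Finset.sum_congr rfl fun ω _ => by rw [key S hSm ω]
      _ = ∏ b : C, ∑ x : Bool × Bool, wt H η ℓ d b x *
            (if Pcond H c c' S b x then (1:ℝ) else 0) :=
          sum_weight_mul_prod H η ℓ d
            (fun b x => if Pcond H c c' S b x then (1:ℝ) else 0)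
      _ = _ := Q_eval G H L η ℓ d v u c c' hcov hc hc' hadj S (Finset.mem_powerset.1 hSm)
  -- step 3 : assemble
  have hstep : wcpPr H η ℓ d (fun ω => (c, c') ∈ EK H L v ω ∩ EU H L v ω)
      = ∑ ω : C → Bool × Bool, wcpWeight H η ℓ d ω *
          ((if EvD H c c' ω then (1:ℝ) else 0) *
            ∏ a ∈ W, ((1:ℝ) - (if EvB H c c' a ω then 1 else 0))) := by
    rw [wcpPr_eq_sum]
    refine Finset.sum_congr rfl fun ω _ => ?_
    rw [← hev ω]
    by_cases h : (c, c') ∈ EK H L v ω ∩ EU H L v ω <;> simp [h]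
  rw [hstep]
  have hprod : ∀ ω : C → Bool × Bool,
      (∏ a ∈ W, ((1:ℝ) - (if EvB H c c' a ω then 1 else 0)))
        = ∑ S ∈ W.powerset, (-1) ^ S.card *
            ∏ a ∈ S, (if EvB H c c' a ω then (1:ℝ) else 0) := by
    intro ω
    have h1 : ∀ a ∈ W, ((1:ℝ) - (if EvB H c c' a ω then 1 else 0))
        = (-(if EvB H c c' a ω then (1:ℝ) else 0)) + 1 := by intro a _; ring
    rw [Finset.prod_congr rfl h1, Finset.prod_add]
    exact Finset.sum_congr rfl fun S _ => by
      rw [Finset.prod_const_one, mul_one, hneg]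
  simp only [hprod, Finset.mul_sum]
  rw [Finset.sum_comm]
  have hfin : ∀ S ∈ W.powerset,
      (∑ ω : C → Bool × Bool, wcpWeight H η ℓ d ω *
        ((if EvD H c c' ω then (1:ℝ) else 0) *
          ((-1) ^ S.card * ∏ a ∈ S, (if EvB H c c' a ω then (1:ℝ) else 0))))
      = (-1) ^ S.card *
        ((1 - η / ℓ) ^ (Dst H c c').card * pp H η ℓ d c * pp H η ℓ d c' *
          ∏ a ∈ S, ((η / ℓ) * pp H η ℓ d a *
            (1 - η / ℓ) ^ (H.neighborFinset a \ Dst H c c').card)) := by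
    intro S hSm
    rw [← QS S hSm, Finset.mul_sum]
    exact Finset.sum_congr rfl fun ω _ => by ring
  rw [Finset.sum_congr rfl hfin]
  have hback : (∏ a ∈ W,
      (1 - (η / ℓ) * pp H η ℓ d a *
        (1 - η / ℓ) ^ (H.neighborFinset a \ Dst H c c').card))
      = ∑ S ∈ W.powerset, (-1) ^ S.card *
          ∏ a ∈ S, ((η / ℓ) * pp H η ℓ d a *
            (1 - η / ℓ) ^ (H.neighborFinset a \ Dst H c c').card) := by
    have h1 : ∀ a ∈ W, (1 - (η / ℓ) * pp H η ℓ d a *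
        (1 - η / ℓ) ^ (H.neighborFinset a \ Dst H c c').card)
        = (-(((η / ℓ) * pp H η ℓ d a *
            (1 - η / ℓ) ^ (H.neighborFinset a \ Dst H c c').card))) + 1 := by
      intro a _; ring
    rw [Finset.prod_congr rfl h1, Finset.prod_add]
    exact Finset.sum_congr rfl fun S _ => by
      rw [Finset.prod_const_one, mul_one, hneg]
  rw [hback, Finset.mul_sum]
  exact Finset.sum_congr rfl fun S _ => by ring

end WCP14

namespace WCP14

open Finset

variable {V C : Type} [Fintype V] [Fintype C]

lemma perPair_le (G : SimpleGraph V) (H : SimpleGraph C) (L : V → Finset C) (η ℓ d : ℝ)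
    (v u : V) (c c' : C) (hcov : IsCorrespondenceCover G H L)
    (hc : c ∈ L v) (hc' : c' ∈ L u) (hadj : H.Adj c c')
    (hq0 : 0 < η / ℓ) (hq1 : η / ℓ < 1) (hd1 : 1 ≤ 2 * d)
    (hdeg : ∀ b : C, (H.degree b : ℝ) ≤ 2 * d) :
    wcpPr H η ℓ d (fun ω => (c, c') ∈ EK H L v ω ∩ EU H L v ω)
      ≤ ((1 - η / ℓ) ^ (2 * d)) ^ (2 : ℕ) *
          ((1 - η / ℓ) ^ (H.neighborFinset c ∩ H.neighborFinset c').card)⁻¹ *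
          (1 - (η / ℓ) * (1 - η / ℓ) ^ (2 * d)) ^ ((L u).card - 1) := by
  have hs0 : (0:ℝ) < 1 - η / ℓ := by linarith
  have hs1 : (1:ℝ) - η / ℓ ≤ 1 := by linarith
  have hkeep_pos : 0 < (1 - η / ℓ) ^ (2 * d) := Real.rpow_pos_of_pos hs0 _
  have hkeep_le1 : (1 - η / ℓ) ^ (2 * d) ≤ 1 :=
    Real.rpow_le_one hs0.le hs1 (by linarith)
  have hpp_pos : ∀ b : C, 0 < pp H η ℓ d b :=
    fun b => div_pos hkeep_pos (Real.rpow_pos_of_pos hs0 _)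
  have hpp_le1 : ∀ b : C, pp H η ℓ d b ≤ 1 := by
    intro b
    rw [pp, div_le_one (Real.rpow_pos_of_pos hs0 _)]
    exact Real.rpow_le_rpow_of_exponent_ge hs0 hs1 (hdeg b)
  rw [perPair_eq G H L η ℓ d v u c c' hcov hc hc' hadj]
  -- the Dst part is exactly keep² / s^t
  have hDcard : (Dst H c c').card + (H.neighborFinset c ∩ H.neighborFinset c').card
      = H.degree c + H.degree c' := by
    rw [Dst, Finset.card_union_add_card_inter,
      SimpleGraph.card_neighborFinset_eq_degree, SimpleGraph.card_neighborFinset_eq_degree]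
  have hsne : ∀ n : ℕ, (1 - η / ℓ) ^ n ≠ 0 := fun n => pow_ne_zero n hs0.ne'
  have hpow : (1 - η / ℓ) ^ (Dst H c c').card *
      (1 - η / ℓ) ^ (H.neighborFinset c ∩ H.neighborFinset c').card
      = (1 - η / ℓ) ^ H.degree c * (1 - η / ℓ) ^ H.degree c' := by
    rw [← pow_add, ← pow_add, hDcard]
  have ha : (1 - η / ℓ) ^ (Dst H c c').card * pp H η ℓ d c * pp H η ℓ d c'
      = ((1 - η / ℓ) ^ (2 * d)) ^ (2 : ℕ) *
        ((1 - η / ℓ) ^ (H.neighborFinset c ∩ H.neighborFinset c').card)⁻¹ := by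
    rw [pp, pp, Real.rpow_natCast (1 - η / ℓ) (H.degree c),
      Real.rpow_natCast (1 - η / ℓ) (H.degree c')]
    field_simp
    linear_combination hpow
  rw [ha]
  have hC0 : 0 ≤ ((1 - η / ℓ) ^ (2 * d)) ^ (2 : ℕ) *
      ((1 - η / ℓ) ^ (H.neighborFinset c ∩ H.neighborFinset c').card)⁻¹ :=
    mul_nonneg (pow_nonneg hkeep_pos.le _) (inv_nonneg.2 (pow_nonneg hs0.le _))
  refine mul_le_mul_of_nonneg_left ?_ hC0
  -- the product part
  have hfac : ∀ a ∈ (L u).erase c',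
      (1 - (η / ℓ) * pp H η ℓ d a *
        (1 - η / ℓ) ^ (H.neighborFinset a \ Dst H c c').card)
      ≤ 1 - (η / ℓ) * (1 - η / ℓ) ^ (2 * d) := by
    intro a _
    have h1 : (1 - η / ℓ) ^ (2 * d)
        ≤ pp H η ℓ d a * (1 - η / ℓ) ^ (H.neighborFinset a \ Dst H c c').card := by
      rw [pp, div_mul_eq_mul_div, le_div_iff₀ (Real.rpow_pos_of_pos hs0 _)]
      refine mul_le_mul_of_nonneg_left ?_ hkeep_pos.le
      rw [← Real.rpow_natCast (1 - η / ℓ) (H.neighborFinset a \ Dst H c c').card,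
        Real.rpow_natCast, Real.rpow_natCast]
      exact pow_le_pow_of_le_one hs0.le hs1
        (Finset.card_le_card (Finset.sdiff_subset))
    nlinarith [hq0.le]
  have hfac0 : ∀ a ∈ (L u).erase c',
      (0:ℝ) ≤ 1 - (η / ℓ) * pp H η ℓ d a *
        (1 - η / ℓ) ^ (H.neighborFinset a \ Dst H c c').card := by
    intro a _
    have h2 : (η / ℓ) * pp H η ℓ d a *
        (1 - η / ℓ) ^ (H.neighborFinset a \ Dst H c c').card ≤ 1 := by
      have := hpp_le1 a
      have hp := hpp_pos a
      have hpow1 : (1 - η / ℓ) ^ (H.neighborFinset a \ Dst H c c').card ≤ 1 :=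
        pow_le_one₀ hs0.le hs1
      have hpow0 : (0:ℝ) ≤ (1 - η / ℓ) ^ (H.neighborFinset a \ Dst H c c').card :=
        pow_nonneg hs0.le _
      have hqp : η / ℓ * pp H η ℓ d a ≤ 1 := by nlinarith
      have hqp0 : 0 ≤ η / ℓ * pp H η ℓ d a := mul_nonneg hq0.le hp.le
      nlinarith
    linarith
  calc (∏ a ∈ (L u).erase c',
      (1 - (η / ℓ) * pp H η ℓ d a *
        (1 - η / ℓ) ^ (H.neighborFinset a \ Dst H c c').card))
      ≤ ∏ _a ∈ (L u).erase c', (1 - (η / ℓ) * (1 - η / ℓ) ^ (2 * d)) :=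
        Finset.prod_le_prod hfac0 hfac
    _ = (1 - (η / ℓ) * (1 - η / ℓ) ^ (2 * d)) ^ ((L u).card - 1) := by
        rw [Finset.prod_const, Finset.card_erase_of_mem hc']

end WCP14

namespace WCP14

open Finset

variable {V C : Type} [Fintype V] [Fintype C]

lemma exp_eq_sum_pairs (H : SimpleGraph C) (L : V → Finset C) (η ℓ d : ℝ) (v : V) :
    wcpExp H η ℓ d (fun ω => ((EK H L v ω ∩ EU H L v ω).card : ℝ))
      = ∑ c ∈ L v, ∑ c' ∈ H.neighborFinset c,
          wcpPr H η ℓ d (fun ω => (c, c') ∈ EK H L v ω ∩ EU H L v ω) := by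
  classical
  set P : Finset (C × C) := ((L v) ×ˢ (univ : Finset C)).filter (fun p => H.Adj p.1 p.2)
    with hP
  have hsub : ∀ ω : C → Bool × Bool, EK H L v ω ∩ EU H L v ω ⊆ P := by
    intro ω p hp
    rw [Finset.mem_inter, EK, Finset.mem_filter] at hp
    rw [hP, Finset.mem_filter]
    exact ⟨hp.1.1, hp.1.2.1⟩
  have hcard : ∀ ω : C → Bool × Bool, ((EK H L v ω ∩ EU H L v ω).card : ℝ)
      = ∑ p ∈ P, (if p ∈ EK H L v ω ∩ EU H L v ω then (1:ℝ) else 0) := by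
    intro ω
    rw [Finset.sum_ite_mem, Finset.inter_eq_right.2 (hsub ω), Finset.sum_const,
      nsmul_eq_mul, mul_one]
  rw [wcpExp]
  calc (∑ ω : C → Bool × Bool, wcpWeight H η ℓ d ω * ((EK H L v ω ∩ EU H L v ω).card : ℝ))
      = ∑ ω : C → Bool × Bool, ∑ p ∈ P, wcpWeight H η ℓ d ω *
          (if p ∈ EK H L v ω ∩ EU H L v ω then (1:ℝ) else 0) := by
        refine Finset.sum_congr rfl fun ω _ => ?_
        rw [hcard ω, Finset.mul_sum]
    _ = ∑ p ∈ P, ∑ ω : C → Bool × Bool, wcpWeight H η ℓ d ω *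
          (if p ∈ EK H L v ω ∩ EU H L v ω then (1:ℝ) else 0) := Finset.sum_comm
    _ = ∑ p ∈ P, wcpPr H η ℓ d (fun ω => p ∈ EK H L v ω ∩ EU H L v ω) := by
        refine Finset.sum_congr rfl fun p _ => ?_
        rw [wcpPr_eq_sum]
        refine Finset.sum_congr rfl fun ω _ => ?_
        by_cases h : p ∈ EK H L v ω ∩ EU H L v ω <;> simp [h]
    _ = ∑ c ∈ L v, ∑ c' ∈ H.neighborFinset c,
          wcpPr H η ℓ d (fun ω => (c, c') ∈ EK H L v ω ∩ EU H L v ω) := by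
        rw [hP, Finset.sum_filter, Finset.sum_product]
        refine Finset.sum_congr rfl fun c _ => ?_
        rw [← Finset.sum_filter]
        refine Finset.sum_congr ?_ fun c' _ => rfl
        ext c'
        simp [SimpleGraph.mem_neighborFinset]

/-- double counting: the local pair count is the sum of codegrees. -/
lemma pairsWithin_eq (H : SimpleGraph C) (c : C) :
    pairsWithin H (H.neighborFinset c)
      = ∑ c' ∈ H.neighborFinset c, (H.neighborFinset c ∩ H.neighborFinset c').card := by
  classical
  rw [pairsWithin, Finset.card_filter, Finset.sum_product]
  refine Finset.sum_congr rfl fun x _ => ?_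
  rw [← Finset.card_filter]
  congr 1
  ext y
  simp only [Finset.mem_filter, Finset.mem_inter, SimpleGraph.mem_neighborFinset]

end WCP14

namespace WCP14

open Finset

lemma exp_neg_le {x : ℝ} (h0 : 0 ≤ x) (h2 : x ≤ 1/2) :
    Real.exp (-(x + 2*x^2)) ≤ 1 - x := by
  have hx := Real.add_one_le_exp (x + 2*x^2)
  have hpos : (0:ℝ) < Real.exp (x + 2*x^2) := Real.exp_pos _
  have key : 1 ≤ (1 - x) * Real.exp (x + 2*x^2) := by nlinarith
  rw [Real.exp_neg, inv_eq_one_div, div_le_iff₀ hpos]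
  linarith [key]

lemma exp_le_one_add {x : ℝ} (h0 : 0 ≤ x) (h2 : x ≤ 1/2) :
    Real.exp x ≤ 1 + 2*x := by
  have h1 : 1 - x ≤ Real.exp (-x) := by
    have := Real.add_one_le_exp (-x); linarith
  have hp : (0:ℝ) < Real.exp x := Real.exp_pos x
  have hmul : (1 - x) * Real.exp x ≤ 1 := by
    calc (1 - x) * Real.exp x ≤ Real.exp (-x) * Real.exp x :=
          mul_le_mul_of_nonneg_right h1 hp.le
      _ = 1 := by rw [← Real.exp_add]; simp
  nlinarith

lemma inv_pow_le {q : ℝ} (t : ℕ) (hq0 : 0 ≤ q) (hq1 : q < 1)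
    (hkeep : (1/2:ℝ) ≤ (1-q)^t) :
    ((1-q)^t)⁻¹ ≤ 1 + 2*q*t := by
  have hs0 : (0:ℝ) < 1 - q := by linarith
  have hp : (0:ℝ) < (1-q)^t := pow_pos hs0 t
  have hber : 1 - (t:ℝ)*q ≤ (1-q)^t := by
    have := one_add_mul_le_pow (a := -q) (by linarith) t
    have h' : 1 + (t:ℝ) * (-q) = 1 - (t:ℝ)*q := by ring
    rw [h'] at this
    rwa [← sub_eq_add_neg] at this
  have htq : (0:ℝ) ≤ (t:ℝ) * q := mul_nonneg (Nat.cast_nonneg t) hq0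
  have key : 1 ≤ (1 + 2*q*t) * (1-q)^t := by
    rcases le_or_gt ((t:ℝ)*q) (1/2) with h | h
    · nlinarith
    · nlinarith
  rw [inv_eq_one_div, div_le_iff₀ hp]
  linarith

lemma uncolor_bound {η ℓ β keep : ℝ} (m : ℕ)
    (hη0 : 0 < η) (hη1 : η ≤ 1) (hℓ0 : 0 < ℓ) (hβ0 : 0 < β) (hβℓ : 4 ≤ β * ℓ)
    (hηβ : η * β ≤ 1/2) (hkeep0 : 0 ≤ keep) (hkeep1 : keep ≤ 1)
    (hq2 : η / ℓ ≤ 1/2)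
    (hm : (1 - β) * ℓ / 2 - 1 ≤ (m:ℝ)) :
    (1 - (η/ℓ)*keep)^m ≤ (1 - η/ℓ) ^ (keep * ℓ / 2) * (1 + 2*η*β) := by
  set q : ℝ := η / ℓ with hqdef
  have hq0 : 0 ≤ q := div_nonneg hη0.le hℓ0.le
  have hqβ : q ≤ η * β / 4 := by
    rw [hqdef, div_le_iff₀ hℓ0]
    nlinarith
  have hqk1 : q * keep ≤ 1 := by nlinarith
  have hqk0 : 0 ≤ q * keep := mul_nonneg hq0 hkeep0
  have h1 : (1 - q*keep)^m ≤ Real.exp (-(q*keep)) ^ m := by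
    refine pow_le_pow_left₀ (by linarith) ?_ m
    have := Real.add_one_le_exp (-(q*keep)); linarith
  have h2 : Real.exp (-(q*keep)) ^ m = Real.exp (-(q*keep) * m) := by
    rw [← Real.exp_nat_mul]; ring_nf
  have h3 : Real.exp (-(q*keep) * m) ≤ Real.exp (-(q*keep) * ((1-β)*ℓ/2 - 1)) := by
    apply Real.exp_le_exp.2
    nlinarith
  -- compare with uncolor
  have h4 : Real.exp (-(q + 2*q^2)) ≤ 1 - q := exp_neg_le hq0 hq2
  have hK2 : (0:ℝ) ≤ keep * ℓ / 2 := by positivity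
  have h5 : Real.exp (-(q + 2*q^2) * (keep * ℓ / 2)) ≤ (1 - q) ^ (keep*ℓ/2) := by
    rw [Real.exp_mul]
    exact Real.rpow_le_rpow (Real.exp_nonneg _) h4 hK2
  have hT0 : 0 ≤ q*keep*(β*ℓ/2 + 1) + q^2*keep*ℓ := by positivity
  have hqℓ : q * ℓ = η := by
    rw [hqdef]; field_simp
  have hTle : q*keep*(β*ℓ/2 + 1) + q^2*keep*ℓ ≤ η*β := by
    have hX : (0:ℝ) ≤ β*ℓ/2 + 1 := by nlinarith
    have e1 : q*keep*(β*ℓ/2 + 1) ≤ q*(β*ℓ/2 + 1) := by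
      nlinarith [mul_nonneg (mul_nonneg hq0 hX) (sub_nonneg.2 hkeep1)]
    have e2 : q*(β*ℓ/2 + 1) = η*β/2 + q := by
      have : q * (β*ℓ/2) = η*β/2 := by
        rw [show q * (β*ℓ/2) = (q*ℓ)*β/2 by ring, hqℓ]
      linarith [this]
    have e3 : q^2*keep*ℓ ≤ q*η := by nlinarith
    have e4 : q*η ≤ η*β/4 := by nlinarith
    nlinarith
  have hsplit : Real.exp (-(q*keep) * ((1-β)*ℓ/2 - 1))
      = Real.exp (q*keep*(β*ℓ/2 + 1) + q^2*keep*ℓ) *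
        Real.exp (-(q + 2*q^2) * (keep * ℓ / 2)) := by
    rw [← Real.exp_add]; congr 1; ring
  have hexp : Real.exp (q*keep*(β*ℓ/2 + 1) + q^2*keep*ℓ) ≤ 1 + 2*η*β := by
    calc Real.exp (q*keep*(β*ℓ/2 + 1) + q^2*keep*ℓ) ≤ Real.exp (η*β) :=
          Real.exp_le_exp.2 hTle
      _ ≤ 1 + 2*(η*β) := exp_le_one_add (by positivity) hηβ
      _ = 1 + 2*η*β := by ring
  calc (1 - q*keep)^m ≤ Real.exp (-(q*keep) * ((1-β)*ℓ/2 - 1)) := by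
        rw [← h2] at h3; exact h1.trans h3
    _ = Real.exp (q*keep*(β*ℓ/2 + 1) + q^2*keep*ℓ) *
        Real.exp (-(q + 2*q^2) * (keep * ℓ / 2)) := hsplit
    _ ≤ (1 + 2*η*β) * ((1 - q) ^ (keep*ℓ/2)) := by
        apply mul_le_mul hexp h5 (Real.exp_nonneg _) (by positivity)
    _ = (1 - η/ℓ) ^ (keep * ℓ / 2) * (1 + 2*η*β) := by rw [mul_comm, hqdef]

end WCP14

namespace WCP14

open Finset

variable {C : Type} [Fintype C]

lemma codeg_inv_sum_le (H : SimpleGraph C) (c : C) {q β ℓ η d k : ℝ}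
    (hq0 : 0 < q) (hq1 : q < 1) (hqℓ : q * ℓ = η) (hβ0 : 0 < β) (hℓ0 : 0 < ℓ)
    (hkeephalf : (1/2:ℝ) ≤ (1-q) ^ (2*d))
    (hdeg2d : (H.degree c : ℝ) ≤ 2*d)
    (hk : (pairsWithin H (H.neighborFinset c) : ℝ) ≤ 2*k)
    (h2k : 2*k ≤ (β*ℓ)*(β*ℓ)) :
    (∑ c' ∈ H.neighborFinset c,
      (((1-q) ^ ((H.neighborFinset c ∩ H.neighborFinset c').card) : ℝ))⁻¹)
      ≤ (1 + 2*η*β) * (H.degree c : ℝ) := by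
  classical
  have hs0 : (0:ℝ) < 1 - q := by linarith
  have hs1 : (1:ℝ) - q ≤ 1 := by linarith
  have hηβ0 : 0 ≤ η * β := by
    rw [← hqℓ]; positivity
  rcases Nat.eq_zero_or_pos (H.degree c) with hD0 | hD1
  · have hempty : H.neighborFinset c = ∅ := by
      rw [← Finset.card_eq_zero, SimpleGraph.card_neighborFinset_eq_degree]; exact hD0
    rw [hempty, hD0]
    simp
  -- nonempty case
  have hterm : ∀ c' ∈ H.neighborFinset c,
      (((1-q) ^ ((H.neighborFinset c ∩ H.neighborFinset c').card) : ℝ))⁻¹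
        ≤ 1 + 2*q*((H.neighborFinset c ∩ H.neighborFinset c').card : ℝ) := by
    intro c' _
    refine inv_pow_le _ hq0.le hq1 ?_
    refine le_trans hkeephalf ?_
    rw [← Real.rpow_natCast (1-q) ((H.neighborFinset c ∩ H.neighborFinset c').card)]
    refine Real.rpow_le_rpow_of_exponent_ge hs0 hs1 ?_
    have h1 : (H.neighborFinset c ∩ H.neighborFinset c').card ≤ H.degree c := by
      rw [← SimpleGraph.card_neighborFinset_eq_degree]
      exact Finset.card_le_card Finset.inter_subset_left
    calc ((H.neighborFinset c ∩ H.neighborFinset c').card : ℝ) ≤ (H.degree c : ℝ) :=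
          Nat.cast_le.2 h1
      _ ≤ 2*d := hdeg2d
  have hsum1 : (∑ c' ∈ H.neighborFinset c,
      (((1-q) ^ ((H.neighborFinset c ∩ H.neighborFinset c').card) : ℝ))⁻¹)
      ≤ (H.degree c : ℝ) + 2*q*(∑ c' ∈ H.neighborFinset c,
          ((H.neighborFinset c ∩ H.neighborFinset c').card : ℝ)) := by
    calc (∑ c' ∈ H.neighborFinset c,
        (((1-q) ^ ((H.neighborFinset c ∩ H.neighborFinset c').card) : ℝ))⁻¹)
        ≤ ∑ c' ∈ H.neighborFinset c,
            (1 + 2*q*((H.neighborFinset c ∩ H.neighborFinset c').card : ℝ)) :=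
          Finset.sum_le_sum hterm
      _ = (H.degree c : ℝ) + 2*q*(∑ c' ∈ H.neighborFinset c,
            ((H.neighborFinset c ∩ H.neighborFinset c').card : ℝ)) := by
          rw [Finset.sum_add_distrib, Finset.sum_const, ← Finset.mul_sum,
            SimpleGraph.card_neighborFinset_eq_degree]
          simp
  set T : ℝ := ∑ c' ∈ H.neighborFinset c,
    ((H.neighborFinset c ∩ H.neighborFinset c').card : ℝ) with hTdef
  have hT0 : 0 ≤ T := Finset.sum_nonneg fun _ _ => Nat.cast_nonneg _
  have hT2k : T ≤ 2*k := by
    refine le_trans ?_ hk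
    rw [pairsWithin_eq, hTdef, Nat.cast_sum]
  have hTD : T ≤ (H.degree c : ℝ) * ((H.degree c : ℝ) - 1) := by
    have hnat : (∑ c' ∈ H.neighborFinset c,
        (H.neighborFinset c ∩ H.neighborFinset c').card)
        ≤ H.degree c * (H.degree c - 1) := by
      calc (∑ c' ∈ H.neighborFinset c, (H.neighborFinset c ∩ H.neighborFinset c').card)
          ≤ ∑ _c' ∈ H.neighborFinset c, (H.degree c - 1) := by
            refine Finset.sum_le_sum fun c' hc' => ?_
            have hsub : H.neighborFinset c ∩ H.neighborFinset c'
                ⊆ (H.neighborFinset c).erase c' := by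
              intro x hx
              rw [Finset.mem_inter] at hx
              refine Finset.mem_erase.2 ⟨?_, hx.1⟩
              exact fun h => H.irrefl ((h ▸ (H.mem_neighborFinset c' x).1 hx.2))
            calc (H.neighborFinset c ∩ H.neighborFinset c').card
                ≤ ((H.neighborFinset c).erase c').card := Finset.card_le_card hsub
              _ = H.degree c - 1 := by
                  rw [Finset.card_erase_of_mem hc',
                    SimpleGraph.card_neighborFinset_eq_degree]
          _ = H.degree c * (H.degree c - 1) := by
            rw [Finset.sum_const, SimpleGraph.card_neighborFinset_eq_degree, smul_eq_mul]
    calc T = ((∑ c' ∈ H.neighborFinset c,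
        (H.neighborFinset c ∩ H.neighborFinset c').card : ℕ) : ℝ) := by
          rw [hTdef, Nat.cast_sum]
      _ ≤ ((H.degree c * (H.degree c - 1) : ℕ) : ℝ) := Nat.cast_le.2 hnat
      _ = (H.degree c : ℝ) * ((H.degree c : ℝ) - 1) := by
          push_cast [Nat.cast_sub hD1]
          ring
  have hD1' : (1:ℝ) ≤ (H.degree c : ℝ) := by exact_mod_cast hD1
  have hqT : q * T ≤ η * β * (H.degree c : ℝ) := by
    rcases le_or_gt ((H.degree c : ℝ) - 1) (β*ℓ) with hcase | hcase
    · have h1 : T ≤ (β*ℓ) * (H.degree c : ℝ) := by nlinarith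
      calc q * T ≤ q * ((β*ℓ) * (H.degree c : ℝ)) := by nlinarith
        _ = η * β * (H.degree c : ℝ) := by rw [← hqℓ]; ring
    · have h1 : T ≤ (β*ℓ) * (H.degree c : ℝ) := by nlinarith [mul_pos hβ0 hℓ0]
      calc q * T ≤ q * ((β*ℓ) * (H.degree c : ℝ)) := by nlinarith
        _ = η * β * (H.degree c : ℝ) := by rw [← hqℓ]; ring
  calc (∑ c' ∈ H.neighborFinset c,
      (((1-q) ^ ((H.neighborFinset c ∩ H.neighborFinset c').card) : ℝ))⁻¹)
      ≤ (H.degree c : ℝ) + 2*q*T := hsum1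
    _ ≤ (H.degree c : ℝ) + 2*(η*β*(H.degree c : ℝ)) := by linarith
    _ = (1 + 2*η*β) * (H.degree c : ℝ) := by ring

lemma log_pow_eventually_le (a : ℝ) (ha : 0 < a) (n : ℕ) :
    ∀ᶠ d in Filter.atTop, (Real.log d)^n ≤ d ^ a := by
  have h := (isLittleO_log_rpow_atTop (show (0:ℝ) < a / (n+1) by positivity)).def
    one_pos
  filter_upwards [h, Filter.eventually_ge_atTop (1:ℝ)] with d hd hd1
  have hlog0 : 0 ≤ Real.log d := Real.log_nonneg hd1
  have hd0 : (0:ℝ) ≤ d := by linarith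
  rw [Real.norm_eq_abs, Real.norm_eq_abs, abs_of_nonneg hlog0,
    abs_of_nonneg (Real.rpow_nonneg hd0 _), one_mul] at hd
  have hpow1 : d ^ (a / (n+1)) ≤ d ^ a ∨ True := Or.inr trivial
  calc (Real.log d)^n ≤ (d ^ (a/(n+1)))^n := pow_le_pow_left₀ hlog0 hd n
    _ ≤ (d ^ (a/(n+1)))^(n+1) := by
        refine pow_le_pow_right₀ ?_ (Nat.le_succ n)
        rw [← Real.rpow_zero d]
        exact Real.rpow_le_rpow_of_exponent_le hd1 (by positivity)
    _ = d ^ a := by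
        rw [← Real.rpow_natCast (d ^ (a/(n+1))) (n+1), ← Real.rpow_mul hd0]
        congr 1
        push_cast
        field_simp

end WCP14

set_option maxHeartbeats 2000000

/-- Bound on the expected number of kept-and-uncolored edges:
`E[|E_K(v) ∩ E_U(v)|] ≤ keep²·uncolor·ℓ(v)·avg-deg_ℋ(v)·(1 + 6ηβ)`, under the assumptions
(A1)–(A8) of the iteration lemma. -/
theorem stmt14 (γ : ℝ) (hγ : γ ∈ Set.Ioo (0 : ℝ) 1) :
    ∃ dtilde : ℝ, ∀ η d ℓ k : ℝ,
      dtilde ≤ d →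
      1 ≤ k → k ≤ d ^ (2 * γ) →
      4 * η * d < ℓ → ℓ < 100 * d →
      1 / (Real.log d) ^ 5 < η → η < 1 / Real.log (d / Real.sqrt k) →
      ∀ (V C : Type) [Fintype V] [Fintype C] (G : SimpleGraph V) (H : SimpleGraph C)
        (L : V → Finset C) (β : ℝ),
        IsCorrespondenceCover G H L →
        d ^ (-(γ * (1 - Real.sqrt γ)) / 200) ≤ β → β ≤ 1 / 10 →
        LocallySparse H k →
        (∀ c : C, (H.degree c : ℝ) ≤ 2 * d) →
        (∀ v : V, (1 - β) * ℓ / 2 ≤ ((L v).card : ℝ) ∧ ((L v).card : ℝ) ≤ (1 + β) * ℓ) →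
        (∀ v : V, (1 / ((L v).card : ℝ)) * ∑ c ∈ L v, (H.degree c : ℝ)
            ≤ (2 - (1 - β) * ℓ / ((L v).card : ℝ)) * d) →
        ∀ v : V,
          (let keep : ℝ := (1 - η / ℓ) ^ (2 * d);
           let uncolor : ℝ := (1 - η / ℓ) ^ (keep * ℓ / 2);
           wcpExp H η ℓ d (fun ω => ((EK H L v ω ∩ EU H L v ω).card : ℝ)) ≤
             keep ^ (2 : ℕ) * uncolor * ((L v).card : ℝ) *
               ((1 / ((L v).card : ℝ)) * ∑ c ∈ L v, (H.degree c : ℝ)) * (1 + 6 * η * β)) := by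
  classical
  obtain ⟨hγ0, hγ1⟩ := hγ
  have hsγ0 : (0:ℝ) ≤ Real.sqrt γ := Real.sqrt_nonneg γ
  have hsγ1 : Real.sqrt γ < 1 := by
    have h := Real.sqrt_lt_sqrt hγ0.le hγ1
    simpa using h
  have hγsq : Real.sqrt γ * Real.sqrt γ = γ := Real.mul_self_sqrt hγ0.le
  set δ : ℝ := γ * (1 - Real.sqrt γ) / 200 with hδdef
  have hδ0 : 0 ≤ δ := div_nonneg (mul_nonneg hγ0.le (by linarith)) (by norm_num)
  have hδγ : γ + δ < 1 := by
    have h3 : δ < 1 - γ := by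
      rw [hδdef, div_lt_iff₀ (by norm_num : (0:ℝ) < 200)]
      nlinarith
    linarith
  have hε0 : (0:ℝ) < 2 - 2*δ - 2*γ := by linarith
  have hev := ((WCP14.log_pow_eventually_le (1-δ) (by linarith) 5).and
    ((WCP14.log_pow_eventually_le (2-2*δ-2*γ) hε0 10).and
      (Real.tendsto_log_atTop.eventually_ge_atTop (100/(1-γ)))))
  obtain ⟨dt, hdt⟩ := Filter.eventually_atTop.1 hev
  refine ⟨max dt 3, ?_⟩
  intro η d ℓ k hd hk1 hk2 hℓ1 hℓ2 hη1 hη2 V C _ _ G H L β hcov hβ1 hβ2 hsparse hdeg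
    hLcard _ v
  obtain ⟨hP2, hP3, hP4⟩ := hdt d (le_trans (le_max_left _ _) hd)
  have hd3 : (3:ℝ) ≤ d := le_trans (le_max_right _ _) hd
  have hd0 : (0:ℝ) < d := by linarith
  have hlogd : 0 < Real.log d := Real.log_pos (by linarith)
  have hη0 : 0 < η := by
    have h : (0:ℝ) < 1 / (Real.log d)^5 := by positivity
    linarith
  have hℓ0 : 0 < ℓ := lt_trans (by positivity) hℓ1
  have hq0 : 0 < η / ℓ := div_pos hη0 hℓ0
  have hqd : (η/ℓ) * d < 1/4 := by
    rw [div_mul_eq_mul_div, div_lt_iff₀ hℓ0]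
    linarith
  have hq112 : η/ℓ ≤ 1/12 := by
    have h := mul_le_mul_of_nonneg_left hd3 hq0.le
    linarith [hqd]
  have hs0 : (0:ℝ) < 1 - η/ℓ := by linarith
  have hs1 : (1:ℝ) - η/ℓ ≤ 1 := by linarith
  have h2d1 : (1:ℝ) ≤ 2*d := by linarith
  -- keep bounds
  have hkeep1 : (1 - η/ℓ) ^ (2*d) ≤ 1 := Real.rpow_le_one hs0.le hs1 (by linarith)
  have hkeep0 : (0:ℝ) < (1 - η/ℓ)^(2*d) := Real.rpow_pos_of_pos hs0 _
  have hkeephalf : (1/2:ℝ) ≤ (1 - η/ℓ)^(2*d) := by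
    have hber : 1 + (2*d) * (-(η/ℓ)) ≤ (1 + (-(η/ℓ))) ^ (2*d) :=
      one_add_mul_self_le_rpow_one_add (by linarith) h2d1
    have heq : (1 + (-(η/ℓ)) : ℝ) = 1 - η/ℓ := by ring
    rw [heq] at hber
    linarith [hber, hqd]
  -- η is small
  have hk0 : (0:ℝ) < k := by linarith
  have hsqk0 : 0 < Real.sqrt k := Real.sqrt_pos.2 hk0
  have hsqk : Real.sqrt k ≤ d ^ γ := by
    have h1 : (d ^ γ)^(2:ℕ) = d ^ (2*γ) := by
      rw [← Real.rpow_natCast (d ^ γ) 2, ← Real.rpow_mul hd0.le]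
      congr 1
      push_cast
      ring
    calc Real.sqrt k ≤ Real.sqrt ((d^γ)^(2:ℕ)) := Real.sqrt_le_sqrt (by rw [h1]; exact hk2)
      _ = d ^ γ := by
          rw [show ((d^γ)^(2:ℕ)) = (d^γ)*(d^γ) by ring]
          exact Real.sqrt_mul_self (Real.rpow_nonneg hd0.le γ)
  have hlb : (1-γ) * Real.log d ≤ Real.log (d / Real.sqrt k) := by
    have h2 : d ^ (1-γ) ≤ d / Real.sqrt k := by
      rw [Real.rpow_sub hd0, Real.rpow_one, div_le_div_iff₀ (Real.rpow_pos_of_pos hd0 _) hsqk0]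
      exact mul_le_mul_of_nonneg_left hsqk hd0.le
    calc (1-γ) * Real.log d = Real.log (d ^ (1-γ)) := (Real.log_rpow hd0 _).symm
      _ ≤ Real.log (d / Real.sqrt k) := Real.log_le_log (Real.rpow_pos_of_pos hd0 _) h2
  have hlog100 : (100:ℝ) ≤ (1-γ) * Real.log d := by
    have h1γ : (0:ℝ) < 1-γ := by linarith
    have := (div_le_iff₀ h1γ).1 hP4
    linarith
  have hηsmall : η ≤ 1/100 := by
    have hlogpos : (0:ℝ) < Real.log (d / Real.sqrt k) := by linarith
    have h1 : 1 / Real.log (d / Real.sqrt k) ≤ 1/100 := by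
      apply one_div_le_one_div_of_le
      · norm_num
      · linarith
    linarith
  have hη1' : η ≤ 1 := by linarith
  -- β bounds
  have hβ0 : 0 < β := lt_of_lt_of_le (Real.rpow_pos_of_pos hd0 _) hβ1
  have hβδ : d ^ (-δ) ≤ β := by
    have h : -(γ * (1 - Real.sqrt γ)) / 200 = -δ := by rw [hδdef]; ring
    rw [← h]; exact hβ1
  have hηβ : η * β ≤ 1/2 := by
    have h := mul_le_mul hηsmall hβ2 hβ0.le (by norm_num : (0:ℝ) ≤ 1/100)
    linarith
  have hℓlb : 4 * d / (Real.log d)^5 ≤ ℓ := by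
    have h1 : 1 < η * (Real.log d)^5 := by
      have := (div_lt_iff₀ (pow_pos hlogd 5)).1 hη1
      linarith
    rw [div_le_iff₀ (pow_pos hlogd 5)]
    have h2 := mul_lt_mul_of_pos_left h1 (by positivity : (0:ℝ) < 4*d)
    have h3 := mul_lt_mul_of_pos_right hℓ1 (pow_pos hlogd 5)
    nlinarith only [h2, h3]
  have hdd : d ^ (-δ) * d = d ^ (1-δ) := by
    calc d ^ (-δ) * d = d ^ (-δ) * d ^ (1:ℝ) := by rw [Real.rpow_one]
      _ = d ^ (-δ + 1) := (Real.rpow_add hd0 _ _).symm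
      _ = d ^ (1-δ) := by congr 1; ring
  have hA : d ^ (-δ) * (4 * d / (Real.log d)^5) ≤ β * ℓ :=
    mul_le_mul hβδ hℓlb (by positivity) hβ0.le
  have hAeq : d ^ (-δ) * (4 * d / (Real.log d)^5) = 4 * d^(1-δ) / (Real.log d)^5 := by
    rw [show d ^ (-δ) * (4 * d / (Real.log d)^5)
      = 4 * (d ^ (-δ) * d) / (Real.log d)^5 by ring, hdd]
  have hβℓ4 : 4 ≤ β * ℓ := by
    have h3 : 4 ≤ 4 * d^(1-δ) / (Real.log d)^5 := by
      rw [le_div_iff₀ (pow_pos hlogd 5)]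
      linarith [hP2]
    linarith [hAeq ▸ hA]
  have h2k : 2*k ≤ (β*ℓ)*(β*ℓ) := by
    have hB := hAeq ▸ hA
    have hB0 : (0:ℝ) ≤ 4 * d^(1-δ) / (Real.log d)^5 := by positivity
    have hBsq : (4 * d^(1-δ) / (Real.log d)^5) * (4 * d^(1-δ) / (Real.log d)^5)
        ≤ (β*ℓ)*(β*ℓ) := mul_le_mul hB hB hB0 (by positivity)
    have e1 : d^(1-δ) * d^(1-δ) = d^(2*γ) * d^(2-2*δ-2*γ) := by
      rw [← Real.rpow_add hd0, ← Real.rpow_add hd0]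
      congr 1
      ring
    have h3 : 2 * d^(2*γ) ≤ (4 * d^(1-δ) / (Real.log d)^5) * (4 * d^(1-δ) / (Real.log d)^5) := by
      rw [div_mul_div_comm, le_div_iff₀ (by positivity : (0:ℝ) < (Real.log d)^5 * (Real.log d)^5),
        show (4 * d^(1-δ)) * (4 * d^(1-δ)) = 16 * (d^(1-δ) * d^(1-δ)) by ring, e1,
        show (Real.log d)^5 * (Real.log d)^5 = (Real.log d)^10 by ring]
      have hmul := mul_le_mul_of_nonneg_left hP3
        (by positivity : (0:ℝ) ≤ 2*d^(2*γ))
      have hnn : (0:ℝ) ≤ d^(2*γ) * d^(2-2*δ-2*γ) :=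
        mul_nonneg (Real.rpow_nonneg hd0.le _) (Real.rpow_nonneg hd0.le _)
      linarith [hmul, hnn]
    linarith [hk2, h3, hBsq]
  -- list sizes
  have hLpos : ∀ w : V, 0 < ((L w).card : ℝ) := by
    intro w
    have h := (hLcard w).1
    have h2 : (0:ℝ) < (1-β)*ℓ := mul_pos (by linarith) hℓ0
    linarith
  have hLn : ∀ w : V, 1 ≤ (L w).card := by
    intro w
    have h0 := hLpos w
    by_contra hcon
    push_neg at hcon
    interval_cases h : (L w).card
    · simp at h0
  -- unfold lets and decompose expectation
  show wcpExp H η ℓ d (fun ω => ((EK H L v ω ∩ EU H L v ω).card : ℝ)) ≤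
    ((1 - η / ℓ) ^ (2 * d)) ^ (2 : ℕ) *
      ((1 - η / ℓ) ^ ((1 - η / ℓ) ^ (2 * d) * ℓ / 2)) * ((L v).card : ℝ) *
      ((1 / ((L v).card : ℝ)) * ∑ c ∈ L v, (H.degree c : ℝ)) * (1 + 6 * η * β)
  rw [WCP14.exp_eq_sum_pairs H L η ℓ d v]
  have hunc0 : 0 < (1 - η/ℓ) ^ ((1 - η/ℓ)^(2*d) * ℓ / 2) := Real.rpow_pos_of_pos hs0 _
  -- per-pair bound
  have hpair : ∀ c ∈ L v, ∀ c' ∈ H.neighborFinset c,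
      wcpPr H η ℓ d (fun ω => (c, c') ∈ EK H L v ω ∩ EU H L v ω)
        ≤ ((1 - η/ℓ)^(2*d)) ^ (2:ℕ) *
            (((1 - η/ℓ) ^ ((H.neighborFinset c ∩ H.neighborFinset c').card))⁻¹) *
            ((1 - η/ℓ) ^ ((1 - η/ℓ)^(2*d) * ℓ / 2) * (1 + 2*η*β)) := by
    intro c hc c' hc'
    obtain ⟨u, hu, _⟩ := hcov.partition c'
    have hadj : H.Adj c c' := (H.mem_neighborFinset c c').1 hc'
    have h1 := WCP14.perPair_le G H L η ℓ d v u c c' hcov hc hu hadj hq0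
      (by linarith) h2d1 hdeg
    refine h1.trans ?_
    have hm : (1 - β) * ℓ / 2 - 1 ≤ (((L u).card - 1 : ℕ) : ℝ) := by
      have hc1 := hLn u
      have hcast : (((L u).card - 1 : ℕ) : ℝ) = ((L u).card : ℝ) - 1 := by
        rw [Nat.cast_sub hc1]; norm_num
      rw [hcast]
      linarith [(hLcard u).1]
    have h2 := WCP14.uncolor_bound (η := η) (ℓ := ℓ) (β := β)
      (keep := (1 - η/ℓ)^(2*d)) ((L u).card - 1)
      hη0 hη1' hℓ0 hβ0 hβℓ4 hηβ hkeep0.le hkeep1 (by linarith) hm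
    have hC0 : (0:ℝ) ≤ ((1 - η/ℓ)^(2*d)) ^ (2:ℕ) *
        (((1 - η/ℓ) ^ ((H.neighborFinset c ∩ H.neighborFinset c').card))⁻¹) :=
      mul_nonneg (pow_nonneg hkeep0.le _) (inv_nonneg.2 (pow_nonneg hs0.le _))
    exact mul_le_mul_of_nonneg_left h2 hC0
  -- sparsity bound
  have hqℓ : (η/ℓ)*ℓ = η := by field_simp
  have hKU : ∀ c ∈ L v,
      (∑ c' ∈ H.neighborFinset c,
        (((1 - η/ℓ) ^ ((H.neighborFinset c ∩ H.neighborFinset c').card) : ℝ))⁻¹)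
        ≤ (1 + 2*η*β) * (H.degree c : ℝ) := by
    intro c _
    exact WCP14.codeg_inv_sum_le H c hq0 (by linarith) hqℓ hβ0 hℓ0 hkeephalf
      (hdeg c) (hsparse c) h2k
  -- assemble
  have hηβ0 : (0:ℝ) ≤ η*β := mul_nonneg hη0.le hβ0.le
  have hXpos : (0:ℝ) ≤ ((1 - η/ℓ)^(2*d)) ^ (2:ℕ) *
      ((1 - η/ℓ) ^ ((1 - η/ℓ)^(2*d) * ℓ / 2) * (1 + 2*η*β)) :=
    mul_nonneg (pow_nonneg hkeep0.le _) (mul_nonneg hunc0.le (by linarith))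
  have hstep : ∀ c ∈ L v,
      (∑ c' ∈ H.neighborFinset c,
        wcpPr H η ℓ d (fun ω => (c, c') ∈ EK H L v ω ∩ EU H L v ω))
      ≤ ((1 - η/ℓ)^(2*d)) ^ (2:ℕ) *
          ((1 - η/ℓ) ^ ((1 - η/ℓ)^(2*d) * ℓ / 2) * (1 + 2*η*β)) *
          ((1 + 2*η*β) * (H.degree c : ℝ)) := by
    intro c hc
    calc (∑ c' ∈ H.neighborFinset c,
        wcpPr H η ℓ d (fun ω => (c, c') ∈ EK H L v ω ∩ EU H L v ω))
        ≤ ∑ c' ∈ H.neighborFinset c,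
            ((1 - η/ℓ)^(2*d)) ^ (2:ℕ) *
            (((1 - η/ℓ) ^ ((H.neighborFinset c ∩ H.neighborFinset c').card))⁻¹) *
            ((1 - η/ℓ) ^ ((1 - η/ℓ)^(2*d) * ℓ / 2) * (1 + 2*η*β)) :=
          Finset.sum_le_sum (hpair c hc)
      _ = ((1 - η/ℓ)^(2*d)) ^ (2:ℕ) *
            ((1 - η/ℓ) ^ ((1 - η/ℓ)^(2*d) * ℓ / 2) * (1 + 2*η*β)) *
            (∑ c' ∈ H.neighborFinset c,
              (((1 - η/ℓ) ^ ((H.neighborFinset c ∩ H.neighborFinset c').card))⁻¹)) := by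
          rw [Finset.mul_sum]
          exact Finset.sum_congr rfl fun c' _ => by ring
      _ ≤ ((1 - η/ℓ)^(2*d)) ^ (2:ℕ) *
            ((1 - η/ℓ) ^ ((1 - η/ℓ)^(2*d) * ℓ / 2) * (1 + 2*η*β)) *
            ((1 + 2*η*β) * (H.degree c : ℝ)) :=
          mul_le_mul_of_nonneg_left (hKU c hc) hXpos
  have hdeg0 : (0:ℝ) ≤ ∑ c ∈ L v, (H.degree c : ℝ) :=
    Finset.sum_nonneg fun _ _ => Nat.cast_nonneg _
  have hsq : (1 + 2*η*β) * (1 + 2*η*β) ≤ 1 + 6*η*β := by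
    have h := mul_le_mul_of_nonneg_left hηβ (by positivity : (0:ℝ) ≤ 4*(η*β))
    nlinarith only [h, hηβ0]
  calc (∑ c ∈ L v, ∑ c' ∈ H.neighborFinset c,
      wcpPr H η ℓ d (fun ω => (c, c') ∈ EK H L v ω ∩ EU H L v ω))
      ≤ ∑ c ∈ L v, ((1 - η/ℓ)^(2*d)) ^ (2:ℕ) *
          ((1 - η/ℓ) ^ ((1 - η/ℓ)^(2*d) * ℓ / 2) * (1 + 2*η*β)) *
          ((1 + 2*η*β) * (H.degree c : ℝ)) := Finset.sum_le_sum hstep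
    _ = ((1 - η/ℓ)^(2*d)) ^ (2:ℕ) * ((1 - η/ℓ) ^ ((1 - η/ℓ)^(2*d) * ℓ / 2)) *
          ((1 + 2*η*β) * (1 + 2*η*β)) * (∑ c ∈ L v, (H.degree c : ℝ)) := by
        rw [Finset.mul_sum]
        exact Finset.sum_congr rfl fun c _ => by ring
    _ ≤ ((1 - η/ℓ)^(2*d)) ^ (2:ℕ) * ((1 - η/ℓ) ^ ((1 - η/ℓ)^(2*d) * ℓ / 2)) *
          (1 + 6*η*β) * (∑ c ∈ L v, (H.degree c : ℝ)) := by
        refine mul_le_mul_of_nonneg_right ?_ hdeg0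
        refine mul_le_mul_of_nonneg_left hsq ?_
        exact mul_nonneg (pow_nonneg hkeep0.le _) hunc0.le
    _ = ((1 - η / ℓ) ^ (2 * d)) ^ (2 : ℕ) *
          ((1 - η / ℓ) ^ ((1 - η / ℓ) ^ (2 * d) * ℓ / 2)) * ((L v).card : ℝ) *
          ((1 / ((L v).card : ℝ)) * ∑ c ∈ L v, (H.degree c : ℝ)) * (1 + 6 * η * β) := by
        have hne : ((L v).card : ℝ) ≠ 0 := (hLpos v).ne'
        field_simp
end
end
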